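/- arXiv:quant-ph/0509192 — 7 statements merged into one kernel-verified Lean document; each statement's English description precedes it below -/
import Mathlib

section
/- For n ≥ 2 and any three distinct vectors u, s, t in {0,1,2}^n, the 3-cycle permutation (u s t) of {0,1,2}^n lies in the subgroup of Sym({0,1,2}^n) generated by the ternary Not gates N_j, the Swap gates E_{i,j}, and the ternary Toffoli gate T. -/
open Equiv

abbrev V (n : ℕ) := Fin n → ZMod 3

/-- Swap gate `E_{i,j}`: exchanges coordinates `i` and `j`. -/
def swapFun {n : ℕ} (i j : Fin n) (x : V n) : V n :=
  fun r => if r = i then x j else if r = j then x i else x r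

/-- Not gate `N_j`: adds 1 (mod 3) to coordinate `j`. -/
def notFun {n : ℕ} (j : Fin n) (x : V n) : V n :=
  Function.update x j (x j + 1)

/-- Toffoli gate `T`: adds 1 (mod 3) to coordinate 0 when all other coordinates are 1. -/
def toffoliFun {n : ℕ} (x : V n) : V n :=
  if ∀ r : Fin n, 0 < r.val → x r = 1 then
    (fun r => if r.val = 0 then x r + 1 else x r) else x

/-- Controlled-Not gate `C_{j,i}`: adds 1 (mod 3) to coordinate `j` when coordinate `i` is 1. -/
def cnotFun {n : ℕ} (j i : Fin n) (x : V n) : V n :=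
  if x i = 1 then Function.update x j (x j + 1) else x

/-- Multiply-Two gate `MT_i`: multiplies coordinate `i` by 2 (mod 3). -/
def mtFun {n : ℕ} (i : Fin n) (x : V n) : V n :=
  Function.update x i (2 * x i)

/-- The 3-cycle `(a b c)`: maps `a ↦ b`, `b ↦ c`, `c ↦ a`, fixes everything else. -/
def cycle3 {α : Type*} [DecidableEq α] (a b c : α) : Equiv.Perm α :=
  Equiv.swap a c * Equiv.swap a b

/-- The heterogeneous columns of a triple of vectors. -/
def hetCols {n : ℕ} (u s t : V n) : Finset (Fin n) :=
  Finset.univ.filter (fun r => ¬ (u r = s r ∧ s r = t r))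

/-- The set of Swap, Not and Toffoli gates on `n` ternary digits, as permutations. -/
def SNT (n : ℕ) : Set (Equiv.Perm (V n)) :=
  {g | (∃ i j : Fin n, i ≠ j ∧ ∀ x, g x = swapFun i j x) ∨
       (∃ j : Fin n, ∀ x, g x = notFun j x) ∨
       (∀ x, g x = toffoliFun x)}

namespace SNTProof

lemma z3cases (v : ZMod 3) : v = 0 ∨ v = 1 ∨ v = 2 := by revert v; decide

variable {n : ℕ}

def HH (n : ℕ) : Subgroup (Perm (V n)) := Subgroup.closure (SNT n)

/-- translation -/
def trP (v : V n) : Perm (V n) := Equiv.addRight v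

@[simp] lemma trP_apply (v x : V n) : trP v x = x + v := rfl

lemma trP_mul (v w : V n) : trP v * trP w = trP (w + v) := by
  ext x; simp [trP, Perm.mul_apply, add_assoc]

/-- coordinate swap -/
def swP (i j : Fin n) : Perm (V n) where
  toFun x := x ∘ (Equiv.swap i j)
  invFun x := x ∘ (Equiv.swap i j)
  left_inv x := by funext r; simp [Function.comp]
  right_inv x := by funext r; simp [Function.comp]

@[simp] lemma swP_apply (i j : Fin n) (x : V n) (r : Fin n) :
    swP i j x r = x (Equiv.swap i j r) := rfl

lemma swP_mem {i j : Fin n} (h : i ≠ j) : swP i j ∈ HH n := by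
  apply Subgroup.subset_closure
  left
  refine ⟨i, j, h, fun x => ?_⟩
  funext r
  rcases eq_or_ne r i with rfl | hri
  · simp [swapFun, swap_apply_left]
  rcases eq_or_ne r j with rfl | hrj
  · simp [swapFun, swap_apply_right, hri]
  · simp [swapFun, hri, hrj, swap_apply_of_ne_of_ne hri hrj]

lemma trP_single_one_mem (j : Fin n) : trP (Pi.single j 1) ∈ HH n := by
  apply Subgroup.subset_closure
  right; left
  refine ⟨j, fun x => ?_⟩
  funext r
  rcases eq_or_ne r j with rfl | hrj
  · simp [notFun]
  · simp [notFun, Pi.single_eq_of_ne hrj, Function.update, hrj]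

lemma trP_mem (v : V n) : trP v ∈ HH n := by
  have key : ∀ (s : Finset (Fin n)) (v : V n), trP (∑ j ∈ s, Pi.single j (v j)) ∈ HH n := by
    intro s
    induction s using Finset.induction_on with
    | empty => intro v; simp only [Finset.sum_empty]
               have : trP (0 : V n) = 1 := by ext x; simp
               rw [this]; exact one_mem _
    | @insert a s' hk ih =>
        intro v
        rw [Finset.sum_insert hk, ← trP_mul]
        refine mul_mem (ih v) ?_
        rcases z3cases (v a) with h | h | h
        · rw [h]
          have : trP (Pi.single a (0 : ZMod 3)) = 1 := by ext x; simp
          rw [this]; exact one_mem _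
        · rw [h]; exact trP_single_one_mem a
        · rw [h]
          have : (Pi.single a (2 : ZMod 3) : V n) = Pi.single a 1 + Pi.single a 1 := by
            rw [← Pi.single_add]; norm_num
          rw [this, ← trP_mul]
          exact mul_mem (trP_single_one_mem a) (trP_single_one_mem a)
  have := key Finset.univ v
  rwa [Finset.univ_sum_single] at this

section gateC

variable [NeZero n]

lemma pos_val_iff (r : Fin n) : 0 < r.val ↔ r ≠ 0 := by
  constructor
  · intro h heq; subst heq; simp at h
  · intro h
    rcases Nat.eq_zero_or_pos r.val with h0 | h0
    · exact absurd (Fin.ext (by simp [h0])) h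
    · exact h0

/-- the unit vector in coordinate 0 -/
def eV (n : ℕ) [NeZero n] : V n := Pi.single 0 1

lemma add_eV (x : V n) (r : Fin n) (hr : r ≠ 0) : (x + eV n) r = x r := by
  rw [Pi.add_apply, eV, Pi.single_eq_of_ne hr, add_zero]

lemma sub_eV (x : V n) (r : Fin n) (hr : r ≠ 0) : (x - eV n) r = x r := by
  rw [Pi.sub_apply, eV, Pi.single_eq_of_ne hr, sub_zero]

/-- gate adding 1 to coordinate 0 when all nonzero coordinates in `s` match `c` -/
def gateC (s : Finset (Fin n)) (c : V n) : Perm (V n) where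
  toFun x := if ∀ r ∈ s, r ≠ 0 → x r = c r then x + eV n else x
  invFun x := if ∀ r ∈ s, r ≠ 0 → x r = c r then x - eV n else x
  left_inv x := by
    by_cases h : ∀ r ∈ s, r ≠ 0 → x r = c r
    · have h' : ∀ r ∈ s, r ≠ 0 → (x + eV n) r = c r := by
        intro r hr hr0; rw [add_eV x r hr0]; exact h r hr hr0
      dsimp only
      rw [if_pos h, if_pos h']
      simp
    · simp [h]
  right_inv x := by
    by_cases h : ∀ r ∈ s, r ≠ 0 → x r = c r
    · have h' : ∀ r ∈ s, r ≠ 0 → (x - eV n) r = c r := by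
        intro r hr hr0; rw [sub_eV x r hr0]; exact h r hr hr0
      dsimp only
      rw [if_pos h, if_pos h']
      simp
    · simp [h]

lemma gateC_apply (s : Finset (Fin n)) (c x : V n) :
    gateC s c x = if ∀ r ∈ s, r ≠ 0 → x r = c r then x + eV n else x := rfl

/-- toffoli is the full-control gate -/
lemma gateC_univ_one_mem : gateC Finset.univ (fun _ => 1) ∈ HH n := by
  apply Subgroup.subset_closure
  right; right
  intro x
  rw [gateC_apply, toffoliFun]
  have hiff : (∀ r ∈ Finset.univ, r ≠ (0 : Fin n) → x r = 1) ↔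
      (∀ r : Fin n, 0 < r.val → x r = 1) := by
    constructor
    · intro h r hr
      exact h r (Finset.mem_univ r) ((pos_val_iff r).mp hr)
    · intro h r _ hr0
      exact h r ((pos_val_iff r).mpr hr0)
  by_cases h : ∀ r : Fin n, 0 < r.val → x r = 1
  · rw [if_pos (hiff.mpr h), if_pos h]
    funext r
    rcases eq_or_ne r 0 with rfl | hr
    · simp [eV]
    · rw [add_eV x r hr, if_neg (fun hv => hr (Fin.ext (by simp [hv])))]
  · rw [if_neg (fun hh => h (hiff.mp hh)), if_neg h]

/-- change control values by conjugating with a translation -/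
lemma gateC_mem_of_mem (s : Finset (Fin n)) (c c' : V n) (h : gateC s c ∈ HH n) :
    gateC s c' ∈ HH n := by
  have key : gateC s c' = trP (c' - c) * gateC s c * trP (c - c') := by
    refine Equiv.ext fun x => ?_
    simp only [Perm.mul_apply, trP_apply, gateC_apply]
    have hiff : (∀ r ∈ s, r ≠ 0 → (x + (c - c')) r = c r) ↔
        (∀ r ∈ s, r ≠ 0 → x r = c' r) := by
      constructor
      · intro h r hr hr0
        have := h r hr hr0
        rw [Pi.add_apply, Pi.sub_apply] at this
        linear_combination this
      · intro h r hr hr0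
        rw [Pi.add_apply, Pi.sub_apply, h r hr hr0]; ring
    by_cases hx : ∀ r ∈ s, r ≠ 0 → x r = c' r
    · rw [if_pos hx, if_pos (hiff.mpr hx)]
      funext r
      simp only [Pi.add_apply, Pi.sub_apply]; ring
    · rw [if_neg hx, if_neg (fun hh => hx (hiff.mp hh))]
      funext r
      simp only [Pi.add_apply, Pi.sub_apply]; ring
  rw [key]
  exact mul_mem (mul_mem (trP_mem _) h) (trP_mem _)

/-- ignore a control at 0 -/
lemma gateC_insert_zero (s : Finset (Fin n)) (c : V n) :
    gateC (insert 0 s) c = gateC s c := by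
  refine Equiv.ext fun x => ?_
  simp only [gateC_apply]
  refine if_congr ?_ rfl rfl
  constructor
  · intro h r hr hr0; exact h r (Finset.mem_insert_of_mem hr) hr0
  · intro h r hr hr0
    rcases Finset.mem_insert.mp hr with rfl | hr'
    · exact absurd rfl hr0
    · exact h r hr' hr0

/-- strip a control -/
lemma gateC_strip (s : Finset (Fin n)) (c : V n) (k : Fin n) (hk0 : k ≠ 0) (hks : k ∉ s) :
    gateC s c = gateC (insert k s) (Function.update c k 0) *
      gateC (insert k s) (Function.update c k 1) * gateC (insert k s) (Function.update c k 2) := by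
  have cond : ∀ (m : ZMod 3) (y : V n),
      (∀ r ∈ insert k s, r ≠ 0 → y r = Function.update c k m r) ↔
      (y k = m ∧ ∀ r ∈ s, r ≠ 0 → y r = c r) := by
    intro m y
    constructor
    · intro h
      refine ⟨by simpa using h k (Finset.mem_insert_self k s) hk0, fun r hr hr0 => ?_⟩
      have hrk : r ≠ k := fun hh => hks (hh ▸ hr)
      have := h r (Finset.mem_insert_of_mem hr) hr0
      rwa [Function.update_of_ne hrk] at this
    · rintro ⟨h1, h2⟩ r hr hr0
      rcases Finset.mem_insert.mp hr with rfl | hr'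
      · simpa using h1
      · have hrk : r ≠ k := fun hh => hks (hh ▸ hr')
        rw [Function.update_of_ne hrk]
        exact h2 r hr' hr0
  have fire : ∀ (m : ZMod 3) (y : V n), y k = m → (∀ r ∈ s, r ≠ 0 → y r = c r) →
      gateC (insert k s) (Function.update c k m) y = y + eV n := by
    intro m y h1 h2
    rw [gateC_apply, if_pos ((cond m y).mpr ⟨h1, h2⟩)]
  have skip : ∀ (m : ZMod 3) (y : V n), y k ≠ m →
      gateC (insert k s) (Function.update c k m) y = y := by
    intro m y h1
    rw [gateC_apply, if_neg (fun hh => h1 ((cond m y).mp hh).1)]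
  refine Equiv.ext fun x => ?_
  simp only [Perm.mul_apply]
  have hkeep : (x + eV n) k = x k := add_eV x k hk0
  by_cases hP : ∀ r ∈ s, r ≠ 0 → x r = c r
  · rw [gateC_apply, if_pos hP]
    rcases z3cases (x k) with h0 | h0 | h0
    · rw [skip 2 x (by rw [h0]; decide), skip 1 x (by rw [h0]; decide), fire 0 x h0 hP]
    · rw [skip 2 x (by rw [h0]; decide), fire 1 x h0 hP,
        skip 0 _ (by rw [hkeep, h0]; decide)]
    · rw [fire 2 x h0 hP, skip 1 _ (by rw [hkeep, h0]; decide),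
        skip 0 _ (by rw [hkeep, h0]; decide)]
  · have hno : ∀ m : ZMod 3, gateC (insert k s) (Function.update c k m) x = x := by
      intro m
      rw [gateC_apply, if_neg (fun hh => hP ((cond m x).mp hh).2)]
    rw [hno 2, hno 1, hno 0, gateC_apply, if_neg hP]

/-- all control gates are in the closure -/
lemma gateC_mem (s : Finset (Fin n)) (c : V n) : gateC s c ∈ HH n := by
  have main : ∀ (m : ℕ) (s : Finset (Fin n)) (c : V n), n - s.card ≤ m → gateC s c ∈ HH n := by
    intro m
    induction m with
    | zero =>
        intro s c hs
        have : s = Finset.univ := by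
          apply Finset.eq_univ_of_card
          have := Finset.card_le_univ s
          simp only [Finset.card_univ, Fintype.card_fin] at this ⊢
          omega
        subst this
        exact gateC_mem_of_mem _ (fun _ => 1) _ gateC_univ_one_mem
    | succ m ih =>
        intro s c hs
        by_cases hbig : Finset.univ.erase (0 : Fin n) ⊆ s
        · have key : gateC s c = gateC Finset.univ c := by
            refine Equiv.ext fun x => ?_
            simp only [gateC_apply]
            refine if_congr ?_ rfl rfl
            constructor
            · intro h r _ hr0
              exact h r (hbig (Finset.mem_erase.mpr ⟨hr0, Finset.mem_univ r⟩)) hr0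
            · intro h r hr hr0
              exact h r (Finset.mem_univ r) hr0
          rw [key]
          exact gateC_mem_of_mem _ (fun _ => 1) _ gateC_univ_one_mem
        · obtain ⟨k, hk1, hk2⟩ := Finset.not_subset.mp hbig
          have hk0 : k ≠ 0 := (Finset.mem_erase.mp hk1).1
          rw [gateC_strip s c k hk0 hk2]
          have hcard : n - (insert k s).card ≤ m := by
            rw [Finset.card_insert_of_notMem hk2]
            omega
          exact mul_mem (mul_mem (ih _ _ hcard) (ih _ _ hcard)) (ih _ _ hcard)
  exact main n s c (by omega)

end gateC

section cgate

variable [NeZero n]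

/-- gate adding `m` to coordinate 0 when coordinate `i` equals `v` -/
def vgate (i : Fin n) (hi : i ≠ 0) (v m : ZMod 3) : Perm (V n) where
  toFun x := if x i = v then x + (Pi.single 0 m : V n) else x
  invFun x := if x i = v then x - (Pi.single 0 m : V n) else x
  left_inv x := by
    by_cases h : x i = v
    · have h2 : ((x + (Pi.single (0 : Fin n) m : V n)) : V n) i = x i := by
        rw [Pi.add_apply, Pi.single_eq_of_ne hi, add_zero]
      dsimp only
      rw [if_pos h, h2, if_pos h]
      simp
    · simp [h]
  right_inv x := by
    by_cases h : x i = v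
    · have h2 : ((x - (Pi.single (0 : Fin n) m : V n)) : V n) i = x i := by
        rw [Pi.sub_apply, Pi.single_eq_of_ne hi, sub_zero]
      dsimp only
      rw [if_pos h, h2, if_pos h]
      simp
    · simp [h]

lemma vgate_apply (i : Fin n) (hi : i ≠ 0) (v m : ZMod 3) (x : V n) :
    vgate i hi v m x = if x i = v then x + (Pi.single 0 m : V n) else x := rfl

lemma vgate_mem (i : Fin n) (hi : i ≠ 0) (v m : ZMod 3) : vgate i hi v m ∈ HH n := by
  have step : ∀ m : ZMod 3, vgate i hi v (m + 1) = gateC {i} (fun _ => v) * vgate i hi v m := by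
    intro m
    refine Equiv.ext fun x => ?_
    simp only [Perm.mul_apply, vgate_apply, gateC_apply]
    have hcond : ∀ y : V n, (∀ r ∈ ({i} : Finset (Fin n)), r ≠ 0 → y r = v) ↔ y i = v := by
      intro y
      simp only [Finset.mem_singleton]
      constructor
      · intro h; exact h i rfl hi
      · intro h r hr _; subst hr; exact h
    by_cases h : x i = v
    · have h2 : ((x + (Pi.single (0 : Fin n) m : V n)) : V n) i = x i := by
        rw [Pi.add_apply, Pi.single_eq_of_ne hi, add_zero]
      rw [if_pos h, if_pos h, if_pos ((hcond _).mpr (by rw [h2]; exact h))]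
      rw [eV, add_assoc, ← Pi.single_add]
    · rw [if_neg h, if_neg h]
      rw [if_neg (fun hh => h ((hcond x).mp hh))]
  have h0 : vgate i hi v 0 = 1 := by
    refine Equiv.ext fun x => ?_
    simp [vgate_apply]
  have g1 : gateC {i} (fun _ => v) ∈ HH n := gateC_mem _ _
  have m1 : vgate i hi v 1 ∈ HH n := by
    have : vgate i hi v 1 = gateC {i} (fun _ => v) * vgate i hi v 0 := by
      have := step 0; norm_num at this; convert this using 2
    rw [this, h0, mul_one]; exact g1
  rcases z3cases m with rfl | rfl | rfl
  · rw [h0]; exact one_mem _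
  · exact m1
  · have : (2 : ZMod 3) = 1 + 1 := by decide
    rw [this, step 1]
    exact mul_mem g1 m1

/-- gate adding `f (x i)` to coordinate `j`, `i ≠ j` -/
def cgate (j i : Fin n) (hij : i ≠ j) (f : ZMod 3 → ZMod 3) : Perm (V n) where
  toFun x := x + Pi.single j (f (x i))
  invFun y := y - Pi.single j (f (y i))
  left_inv x := by
    have h2 : ((x + (Pi.single j (f (x i)) : V n)) : V n) i = x i := by
      rw [Pi.add_apply, Pi.single_eq_of_ne hij, add_zero]
    dsimp only
    rw [h2]; simp
  right_inv y := by
    have h2 : ((y - (Pi.single j (f (y i)) : V n)) : V n) i = y i := by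
      rw [Pi.sub_apply, Pi.single_eq_of_ne hij, sub_zero]
    dsimp only
    rw [h2]; simp

lemma cgate_apply (j i : Fin n) (hij : i ≠ j) (f : ZMod 3 → ZMod 3) (x : V n) :
    cgate j i hij f x = x + Pi.single j (f (x i)) := rfl

lemma cgate_zero_mem (i : Fin n) (hi : i ≠ 0) (f : ZMod 3 → ZMod 3) :
    cgate 0 i hi f ∈ HH n := by
  have key : cgate 0 i hi f = vgate i hi 0 (f 0) * vgate i hi 1 (f 1) * vgate i hi 2 (f 2) := by
    refine Equiv.ext fun x => ?_
    simp only [Perm.mul_apply, vgate_apply, cgate_apply]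
    have keep : ∀ (m : ZMod 3), ((x + (Pi.single (0 : Fin n) m : V n)) : V n) i = x i := by
      intro m; rw [Pi.add_apply, Pi.single_eq_of_ne hi, add_zero]
    rcases z3cases (x i) with h | h | h
    · rw [if_neg (show ¬ x i = 2 by rw [h]; decide),
        if_neg (show ¬ x i = 1 by rw [h]; decide), if_pos h, h]
    · rw [if_neg (show ¬ x i = 2 by rw [h]; decide), if_pos h, keep (f 1),
        if_neg (show ¬ x i = 0 by rw [h]; decide), h]
    · rw [if_pos h, keep (f 2), if_neg (show ¬ x i = 1 by rw [h]; decide),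
        keep (f 2), if_neg (show ¬ x i = 0 by rw [h]; decide), h]
  rw [key]
  exact mul_mem (mul_mem (vgate_mem _ _ _ _) (vgate_mem _ _ _ _)) (vgate_mem _ _ _ _)

lemma swP_sq (i j : Fin n) : swP i j * swP i j = 1 := by
  refine Equiv.ext fun x => ?_
  funext r
  simp [Perm.mul_apply]

lemma cgate_mem (j i : Fin n) (hij : i ≠ j) (f : ZMod 3 → ZMod 3) :
    cgate j i hij f ∈ HH n := by
  rcases eq_or_ne j 0 with rfl | hj0
  · exact cgate_zero_mem i hij f
  · have hσi : Equiv.swap (0 : Fin n) j i ≠ 0 := by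
      intro hh
      rw [Equiv.swap_apply_eq_iff] at hh
      simp only [Equiv.swap_apply_left] at hh
      exact hij hh
    have key : cgate j i hij f = swP 0 j * cgate 0 (Equiv.swap 0 j i) hσi f * swP 0 j := by
      refine Equiv.ext fun x => ?_
      simp only [Perm.mul_apply, cgate_apply]
      funext r
      have hswsw : ∀ r : Fin n, Equiv.swap (0 : Fin n) j (Equiv.swap (0 : Fin n) j r) = r :=
        fun r => Equiv.swap_apply_self _ _ _
      simp only [swP_apply, Pi.add_apply, hswsw]
      congr 1
      rcases eq_or_ne r j with rfl | hrj
      · rw [Equiv.swap_apply_right, Pi.single_eq_same, Pi.single_eq_same]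
      · have : Equiv.swap (0 : Fin n) j r ≠ 0 := by
          intro hh
          rw [Equiv.swap_apply_eq_iff] at hh
          simp at hh
          exact hrj hh
        rw [Pi.single_eq_of_ne this, Pi.single_eq_of_ne hrj]
    rw [key]
    exact mul_mem (mul_mem (swP_mem hj0.symm) (cgate_zero_mem _ _ f)) (swP_mem hj0.symm)

end cgate

section shear

/-- shear controlled by coordinate `i`: adds `F (x i)` where `F a` has zero `i` coordinate -/
def shear (i : Fin n) (F : ZMod 3 → V n) (hF : ∀ a, F a i = 0) : Perm (V n) where
  toFun x := x + F (x i)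
  invFun y := y - F (y i)
  left_inv x := by
    have h2 : (x + F (x i)) i = x i := by rw [Pi.add_apply, hF, add_zero]
    dsimp only
    rw [h2]; simp
  right_inv y := by
    have h2 : (y - F (y i)) i = y i := by rw [Pi.sub_apply, hF, sub_zero]
    dsimp only
    rw [h2]; simp

lemma shear_apply (i : Fin n) (F : ZMod 3 → V n) (hF : ∀ a, F a i = 0) (x : V n) :
    shear i F hF x = x + F (x i) := rfl

lemma shear_mem [NeZero n] (i : Fin n) (F : ZMod 3 → V n) (hF : ∀ a, F a i = 0) :
    shear i F hF ∈ HH n := by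
  suffices key : ∀ (s : Finset (Fin n)) (F : ZMod 3 → V n) (hF : ∀ a, F a i = 0),
      (∀ a, ∀ j ∉ s, F a j = 0) → shear i F hF ∈ HH n by
    exact key Finset.univ F hF (fun a j hj => absurd (Finset.mem_univ j) hj)
  intro s
  induction s using Finset.induction_on with
  | empty =>
      intro F hF hsupp
      have : shear i F hF = 1 := by
        refine Equiv.ext fun x => ?_
        have : F (x i) = 0 := by funext j; exact hsupp (x i) j (by simp)
        simp [shear_apply, this]
      rw [this]; exact one_mem _
  | @insert k s' hk ih =>
      intro F hF hsupp
      rcases eq_or_ne k i with rfl | hki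
      · refine ih F hF (fun a j hj => ?_)
        rcases eq_or_ne j k with rfl | hjk
        · exact hF a
        · exact hsupp a j (by simp [hjk, hj])
      · set F2 : ZMod 3 → V n := fun a => Function.update (F a) k 0 with hF2def
        have hF2 : ∀ a, F2 a i = 0 := by
          intro a; rw [hF2def]; simp only
          rw [Function.update_of_ne (Ne.symm hki)]
          exact hF a
        have hik : i ≠ k := Ne.symm hki
        have key : shear i F hF = cgate k i hik (fun a => F a k) * shear i F2 hF2 := by
          refine Equiv.ext fun x => ?_
          simp only [Perm.mul_apply, shear_apply, cgate_apply]
          have h2 : (x + F2 (x i)) i = x i := by rw [Pi.add_apply, hF2, add_zero]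
          rw [h2]
          funext r
          simp only [Pi.add_apply]
          rcases eq_or_ne r k with rfl | hrk
          · rw [Pi.single_eq_same, hF2def]
            simp [Function.update_self]
          · rw [Pi.single_eq_of_ne hrk, hF2def]
            simp only
            rw [Function.update_of_ne hrk]
            ring
        rw [key]
        refine mul_mem (cgate_mem _ _ _ _) (ih F2 hF2 (fun a j hj => ?_))
        rcases eq_or_ne j k with rfl | hjk
        · rw [hF2def]; simp
        · rw [hF2def]; simp only
          rw [Function.update_of_ne hjk]
          exact hsupp a j (by simp [hjk, hj])

end shear

section cycle3lemmas

lemma c3_apply {α : Type*} [DecidableEq α] {a b c : α} (hab : a ≠ b) (hac : a ≠ c)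
    (hbc : b ≠ c) (x : α) :
    cycle3 a b c x = if x = a then b else if x = b then c else if x = c then a else x := by
  unfold cycle3
  rw [Equiv.Perm.mul_apply]
  rcases eq_or_ne x a with rfl | h1
  · rw [if_pos rfl, Equiv.swap_apply_left, Equiv.swap_apply_of_ne_of_ne (Ne.symm hab) hbc]
  · rcases eq_or_ne x b with rfl | h2
    · rw [if_neg h1, if_pos rfl, Equiv.swap_apply_right, Equiv.swap_apply_left]
    · rw [if_neg h1, if_neg h2, Equiv.swap_apply_of_ne_of_ne h1 h2]
      rcases eq_or_ne x c with rfl | h3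
      · rw [if_pos rfl, Equiv.swap_apply_right]
      · rw [if_neg h3, Equiv.swap_apply_of_ne_of_ne h1 h3]

lemma c3_rot {α : Type*} [DecidableEq α] {a b c : α} (hab : a ≠ b) (hac : a ≠ c)
    (hbc : b ≠ c) : cycle3 a b c = cycle3 b c a := by
  refine Equiv.ext fun x => ?_
  rw [c3_apply hab hac hbc, c3_apply hbc (Ne.symm hab) (Ne.symm hac)]
  rcases eq_or_ne x a with rfl | h1
  · simp only [if_pos rfl, if_neg hab, if_neg hac]
  · rcases eq_or_ne x b with rfl | h2
    · simp only [if_pos rfl, if_neg (Ne.symm hab)]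
    · rcases eq_or_ne x c with rfl | h3
      · simp only [if_pos rfl, if_neg (Ne.symm hac), if_neg (Ne.symm hbc)]
      · simp only [if_neg h1, if_neg h2, if_neg h3]

lemma c3_inv_swap {α : Type*} [DecidableEq α] (a b c : α) :
    (cycle3 a c b)⁻¹ = cycle3 a b c := by
  unfold cycle3
  rw [mul_inv_rev, Equiv.swap_inv, Equiv.swap_inv]

lemma c3_conj {α : Type*} [DecidableEq α] (g : Equiv.Perm α) (a b c : α) :
    cycle3 (g a) (g b) (g c) = g * cycle3 a b c * g⁻¹ := by
  unfold cycle3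
  rw [Equiv.swap_apply_apply, Equiv.swap_apply_apply]
  group

lemma conj_mem (g : Perm (V n)) (hg : g ∈ HH n) {a b c : V n}
    (h : cycle3 (g a) (g b) (g c) ∈ HH n) : cycle3 a b c ∈ HH n := by
  have e := c3_conj g a b c
  have e2 : cycle3 a b c = g⁻¹ * cycle3 (g a) (g b) (g c) * g := by rw [e]; group
  rw [e2]
  exact mul_mem (mul_mem (inv_mem hg) h) hg

end cycle3lemmas

section toffoli

variable [NeZero n]

lemma toff_mem :
    cycle3 (fun r => if r = (0 : Fin n) then (0 : ZMod 3) else 1)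
      ((fun r => if r = (0 : Fin n) then (0 : ZMod 3) else 1) + (Pi.single 0 1 : V n))
      ((fun r => if r = (0 : Fin n) then (0 : ZMod 3) else 1) + (Pi.single 0 1 : V n)
        + (Pi.single 0 1 : V n)) ∈ HH n := by
  set A : V n := (fun r => if r = (0 : Fin n) then (0 : ZMod 3) else 1) with hA
  set e : V n := (Pi.single 0 1 : V n) with he
  have hA0 : A 0 = 0 := by simp [hA]
  have hAr : ∀ r : Fin n, r ≠ 0 → A r = 1 := by intro r h; simp [hA, h]
  have he0 : e 0 = 1 := by simp [he]
  have her : ∀ r : Fin n, r ≠ 0 → e r = 0 := by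
    intro r h; rw [he]; exact Pi.single_eq_of_ne h 1
  have d1 : A ≠ A + e := by
    intro h; have := congrFun h 0
    rw [Pi.add_apply, hA0, he0] at this; exact absurd this (by decide)
  have d2 : A ≠ A + e + e := by
    intro h; have := congrFun h 0
    rw [Pi.add_apply, Pi.add_apply, hA0, he0] at this; exact absurd this (by decide)
  have d3 : A + e ≠ A + e + e := by
    intro h; have := congrFun h 0
    rw [Pi.add_apply, Pi.add_apply, Pi.add_apply, hA0, he0] at this
    exact absurd this (by decide)
  apply Subgroup.subset_closure
  refine Or.inr (Or.inr fun x => ?_)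
  rw [c3_apply d1 d2 d3]
  by_cases hx : ∀ r : Fin n, 0 < r.val → x r = 1
  · rw [toffoliFun, if_pos hx]
    have hxr : ∀ r : Fin n, r ≠ 0 → x r = 1 := fun r h => hx r ((pos_val_iff r).mpr h)
    have hval : ∀ r : Fin n, r ≠ 0 → ¬ r.val = 0 := by
      intro r h hh; exact h (Fin.ext (by simp [hh]))
    rcases z3cases (x 0) with h0 | h0 | h0
    · have hxA : x = A := by
        funext r
        rcases eq_or_ne r 0 with rfl | hr
        · rw [h0, hA0]
        · rw [hxr r hr, hAr r hr]
      rw [if_pos hxA]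
      funext r
      rcases eq_or_ne r 0 with rfl | hr
      · rw [if_pos (show ((0 : Fin n)).val = 0 by simp), h0]
        simp only [Pi.add_apply, hA0, he0]
        all_goals decide
      · rw [if_neg (hval r hr), hxr r hr]
        simp only [Pi.add_apply, hAr r hr, her r hr]
        all_goals decide
    · have hxA : x = A + e := by
        funext r
        rcases eq_or_ne r 0 with rfl | hr
        · rw [h0, Pi.add_apply, hA0, he0]; decide
        · rw [hxr r hr, Pi.add_apply, hAr r hr, her r hr, add_zero]
      have nA : x ≠ A := by rw [hxA]; exact (Ne.symm d1)
      rw [if_neg nA, if_pos hxA]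
      funext r
      rcases eq_or_ne r 0 with rfl | hr
      · rw [if_pos (show ((0 : Fin n)).val = 0 by simp), h0]
        simp only [Pi.add_apply, hA0, he0]
        all_goals decide
      · rw [if_neg (hval r hr), hxr r hr]
        simp only [Pi.add_apply, hAr r hr, her r hr]
        all_goals decide
    · have hxA : x = A + e + e := by
        funext r
        rcases eq_or_ne r 0 with rfl | hr
        · rw [h0, Pi.add_apply, Pi.add_apply, hA0, he0]; decide
        · rw [hxr r hr, Pi.add_apply, Pi.add_apply, hAr r hr, her r hr, add_zero, add_zero]
      have nA : x ≠ A := by rw [hxA]; exact (Ne.symm d2)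
      have nAe : x ≠ A + e := by rw [hxA]; exact (Ne.symm d3)
      rw [if_neg nA, if_neg nAe, if_pos hxA]
      funext r
      rcases eq_or_ne r 0 with rfl | hr
      · rw [if_pos (show ((0 : Fin n)).val = 0 by simp), h0, hA0]
        decide
      · rw [if_neg (hval r hr), hxr r hr, hAr r hr]
  · rw [toffoliFun, if_neg hx]
    push_neg at hx
    obtain ⟨r, hr, hxr⟩ := hx
    have hr0 : r ≠ 0 := (pos_val_iff r).mp hr
    have nA : x ≠ A := fun hh => hxr (by rw [hh, hAr r hr0])
    have nAe : x ≠ A + e := fun hh => hxr (by rw [hh, Pi.add_apply, hAr r hr0, her r hr0, add_zero])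
    have nAee : x ≠ A + e + e := fun hh => hxr (by
      rw [hh, Pi.add_apply, Pi.add_apply, hAr r hr0, her r hr0, add_zero, add_zero])
    rw [if_neg nA, if_neg nAe, if_neg nAee]

end toffoli

section steering

lemma steer (hn : 2 ≤ n) (u d : V n) (i : Fin n) (hd : d i = 1) :
    cycle3 u (u + d) (u + d + d) ∈ HH n := by
  haveI : NeZero n := ⟨by omega⟩
  set W : V n := fun r => if r = i then u i else 1 with hW
  set F1 : ZMod 3 → V n := fun v => W + (v - u i) • ((Pi.single i 1 : V n) - d) - u with hF1
  have hWi : W i = u i := by simp [hW]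
  have hF1i : ∀ a : ZMod 3, F1 a i = 0 := by
    intro a
    simp only [hF1, Pi.sub_apply, Pi.add_apply, Pi.smul_apply, Pi.single_eq_same,
      smul_eq_mul, hWi, hd]
    ring
  have e1 : shear i F1 hF1i u = W := by
    rw [shear_apply]
    simp only [hF1]
    rw [sub_self, zero_smul, add_zero]
    abel
  have e2 : shear i F1 hF1i (u + d) = W + (Pi.single i 1 : V n) := by
    rw [shear_apply]
    have h1 : (u + d) i = u i + 1 := by rw [Pi.add_apply, hd]
    rw [h1]
    simp only [hF1]
    rw [show u i + 1 - u i = 1 from by ring, one_smul]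
    abel
  have e3 : shear i F1 hF1i (u + d + d) = W + (Pi.single i 1 : V n) + (Pi.single i 1 : V n) := by
    rw [shear_apply]
    have h1 : (u + d + d) i = u i + 2 := by rw [Pi.add_apply, Pi.add_apply, hd]; ring
    rw [h1]
    simp only [hF1]
    rw [show u i + 2 - u i = 2 from by ring, two_smul]
    abel
  set vT : V n := (Pi.single i (- u i) : V n) with hvT
  set Ai : V n := fun r => if r = i then 0 else 1 with hAi
  have e4 : W + vT = Ai := by
    funext r
    simp only [Pi.add_apply, hW, hvT, hAi]
    rcases eq_or_ne r i with rfl | hr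
    · rw [if_pos rfl, if_pos rfl, Pi.single_eq_same]; ring
    · rw [if_neg hr, if_neg hr, Pi.single_eq_of_ne hr, add_zero]
  have t1 : trP vT W = Ai := by rw [trP_apply, e4]
  have t2 : trP vT (W + (Pi.single i 1 : V n)) = Ai + (Pi.single i 1 : V n) := by
    rw [trP_apply, show W + (Pi.single i 1 : V n) + vT = W + vT + (Pi.single i 1 : V n) from by
      abel, e4]
  have t3 : trP vT (W + (Pi.single i 1 : V n) + (Pi.single i 1 : V n))
      = Ai + (Pi.single i 1 : V n) + (Pi.single i 1 : V n) := by
    rw [trP_apply, show W + (Pi.single i 1 : V n) + (Pi.single i 1 : V n) + vT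
      = W + vT + (Pi.single i 1 : V n) + (Pi.single i 1 : V n) from by abel, e4]
  rcases eq_or_ne i 0 with rfl | hi0
  · apply conj_mem (trP vT * shear 0 F1 hF1i) (mul_mem (trP_mem vT) (shear_mem _ _ _))
    have c1 : (trP vT * shear 0 F1 hF1i) u = Ai := by rw [Perm.mul_apply, e1, t1]
    have c2 : (trP vT * shear 0 F1 hF1i) (u + d) = Ai + (Pi.single 0 1 : V n) := by
      rw [Perm.mul_apply, e2, t2]
    have c3 : (trP vT * shear 0 F1 hF1i) (u + d + d)
        = Ai + (Pi.single 0 1 : V n) + (Pi.single 0 1 : V n) := by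
      rw [Perm.mul_apply, e3, t3]
    rw [c1, c2, c3, hAi]
    exact toff_mem
  · have sAi : swP 0 i Ai = (fun r => if r = (0 : Fin n) then (0 : ZMod 3) else 1) := by
      funext r
      rw [swP_apply]
      simp only [hAi]
      rcases eq_or_ne r 0 with rfl | hr0
      · rw [Equiv.swap_apply_left, if_pos rfl, if_pos rfl]
      · rcases eq_or_ne r i with rfl | hri
        · rw [Equiv.swap_apply_right, if_neg (fun h => hi0 h.symm), if_neg hi0]
        · rw [Equiv.swap_apply_of_ne_of_ne hr0 hri, if_neg hri, if_neg hr0]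
    have sE : swP 0 i (Pi.single i 1 : V n) = (Pi.single 0 1 : V n) := by
      funext r
      rw [swP_apply]
      rcases eq_or_ne r 0 with rfl | hr0
      · rw [Equiv.swap_apply_left, Pi.single_eq_same, Pi.single_eq_same]
      · have hne : Equiv.swap (0 : Fin n) i r ≠ i := by
          intro hh
          rw [Equiv.swap_apply_eq_iff, Equiv.swap_apply_right] at hh
          exact hr0 hh
        rw [Pi.single_eq_of_ne hne, Pi.single_eq_of_ne hr0]
    have sAdd : ∀ y z : V n, swP 0 i (y + z) = swP 0 i y + swP 0 i z := fun y z => rfl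
    apply conj_mem (swP 0 i * (trP vT * shear i F1 hF1i))
      (mul_mem (swP_mem (Ne.symm hi0)) (mul_mem (trP_mem vT) (shear_mem _ _ _)))
    have c1 : (swP 0 i * (trP vT * shear i F1 hF1i)) u
        = (fun r => if r = (0 : Fin n) then (0 : ZMod 3) else 1) := by
      rw [Perm.mul_apply, Perm.mul_apply, e1, t1, sAi]
    have c2 : (swP 0 i * (trP vT * shear i F1 hF1i)) (u + d)
        = (fun r => if r = (0 : Fin n) then (0 : ZMod 3) else 1) + (Pi.single 0 1 : V n) := by
      rw [Perm.mul_apply, Perm.mul_apply, e2, t2, sAdd, sAi, sE]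
    have c3 : (swP 0 i * (trP vT * shear i F1 hF1i)) (u + d + d)
        = (fun r => if r = (0 : Fin n) then (0 : ZMod 3) else 1) + (Pi.single 0 1 : V n)
          + (Pi.single 0 1 : V n) := by
      rw [Perm.mul_apply, Perm.mul_apply, e3, t3, sAdd, sAdd, sAi, sE]
    rw [c1, c2, c3]
    exact toff_mem

lemma sum_zero_case (hn : 2 ≤ n) (u s t : V n) (hus : u ≠ s) (hst : s ≠ t) (hut : u ≠ t)
    (hsum : u + s + t = 0) : cycle3 u s t ∈ HH n := by
  have h3 : (3 : ZMod 3) = 0 := by decide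
  obtain ⟨i, hi⟩ := Function.ne_iff.mp hus
  set d : V n := s - u with hdd
  have hs : s = u + d := by rw [hdd]; abel
  have ht : t = u + d + d := by
    funext r
    have hsr := congrFun hsum r
    simp only [Pi.add_apply, Pi.zero_apply] at hsr
    simp only [Pi.add_apply, hdd, Pi.sub_apply]
    linear_combination hsr - s r * h3
  have hdi : d i ≠ 0 := by
    rw [hdd, Pi.sub_apply]
    exact sub_ne_zero.mpr (Ne.symm hi)
  rcases z3cases (d i) with h | h | h
  · exact absurd h hdi
  · have key : cycle3 u s t = cycle3 u (u + d) (u + d + d) := by rw [← ht, ← hs]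
    rw [key]
    exact steer hn u d i h
  · have hd' : (d + d) i = 1 := by rw [Pi.add_apply, h]; decide
    have ht' : t = u + (d + d) := by rw [ht]; abel
    have hs' : s = u + (d + d) + (d + d) := by
      funext r
      simp only [Pi.add_apply, hdd, Pi.sub_apply]
      linear_combination (u r - s r) * h3
    have hmem := steer hn u (d + d) i hd'
    have key : cycle3 u t s = cycle3 u (u + (d + d)) (u + (d + d) + (d + d)) := by
      rw [← hs', ← ht']
    rw [← key] at hmem
    rw [← c3_inv_swap u s t]
    exact inv_mem hmem

lemma caseD (hn : 2 ≤ n) (u s t : V n) (hus : u ≠ s) (hst : s ≠ t) (hut : u ≠ t)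
    (i : Fin n) (h1 : u i ≠ s i) (h2 : u i ≠ t i) (h3 : s i ≠ t i) :
    cycle3 u s t ∈ HH n := by
  haveI : NeZero n := ⟨by omega⟩
  have hzsum : ∀ a b c : ZMod 3, a ≠ b → a ≠ c → b ≠ c → a + b + c = 0 := by decide
  have hw : (u + s + t) i = 0 := by
    simp only [Pi.add_apply]
    exact hzsum _ _ _ h1 h2 h3
  set F : ZMod 3 → V n := fun v => if v = u i then -(u + s + t) else 0 with hF
  have hFi : ∀ a : ZMod 3, F a i = 0 := by
    intro a
    simp only [hF]
    rcases eq_or_ne a (u i) with rfl | ha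
    · rw [if_pos rfl, Pi.neg_apply, hw, neg_zero]
    · rw [if_neg ha, Pi.zero_apply]
  have gu : shear i F hFi u = u + -(u + s + t) := by
    rw [shear_apply]
    simp only [hF]
    rw [if_true]
  have gs : shear i F hFi s = s := by
    rw [shear_apply]
    simp only [hF]
    rw [if_neg (Ne.symm h1), add_zero]
  have gt : shear i F hFi t = t := by
    rw [shear_apply]
    simp only [hF]
    rw [if_neg (Ne.symm h2), add_zero]
  apply conj_mem (shear i F hFi) (shear_mem _ _ _)
  rw [gu, gs, gt]
  have inj := (shear i F hFi).injective
  refine sum_zero_case hn _ _ _ ?_ hst ?_ ?_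
  · have := inj.ne hus; rwa [gu, gs] at this
  · have := inj.ne hut; rwa [gu, gt] at this
  · abel

lemma caseP (hn : 2 ≤ n) (u s t : V n) (hus : u ≠ s) (hst : s ≠ t) (hut : u ≠ t)
    (k : Fin n) (hk1 : u k = s k) (hk2 : u k ≠ t k)
    (i : Fin n) (hi : u i ≠ s i) (hti : t i = u i) :
    cycle3 u s t ∈ HH n := by
  haveI : NeZero n := ⟨by omega⟩
  have hik : i ≠ k := fun hh => hi (by rw [hh, hk1])
  set f : ZMod 3 → ZMod 3 := fun v => if v = s i then s k - t k else 0 with hf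
  have gu : cgate k i hik f u = u := by
    rw [cgate_apply]
    simp only [hf]
    rw [if_neg hi, Pi.single_zero, add_zero]
  have gt : cgate k i hik f t = t := by
    rw [cgate_apply]
    simp only [hf]
    rw [hti, if_neg hi, Pi.single_zero, add_zero]
  have gs : cgate k i hik f s = s + Pi.single k (s k - t k) := by
    rw [cgate_apply]
    simp only [hf]
    rw [if_true]
  have hz : ∀ a b : ZMod 3, a ≠ b → a ≠ a + (a - b) ∧ b ≠ a + (a - b) := by decide
  have hkey := hz (s k) (t k) (by rw [← hk1]; exact hk2)
  have hsk : ((s + (Pi.single k (s k - t k) : V n)) : V n) k = s k + (s k - t k) := by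
    rw [Pi.add_apply, Pi.single_eq_same]
  apply conj_mem (cgate k i hik f) (cgate_mem _ _ _ _)
  rw [gu, gs, gt]
  have inj := (cgate k i hik f).injective
  refine caseD hn _ _ _ ?_ ?_ hut k ?_ hk2 ?_
  · have := inj.ne hus; rwa [gu, gs] at this
  · have := inj.ne hst; rwa [gs, gt] at this
  · rw [hsk, hk1]; exact hkey.1
  · rw [hsk]; intro hh; exact hkey.2 hh.symm

end steering

end SNTProof


theorem three_cycle_mem_closure_SNT (n : ℕ) (hn : 2 ≤ n) (u s t : V n)
    (hus : u ≠ s) (hst : s ≠ t) (hut : u ≠ t) :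
    cycle3 u s t ∈ Subgroup.closure (SNT n) := by
  haveI : NeZero n := ⟨by omega⟩
  show cycle3 u s t ∈ SNTProof.HH n
  by_cases hex : ∃ i, u i ≠ s i ∧ u i ≠ t i ∧ s i ≠ t i
  · obtain ⟨i, h1, h2, h3⟩ := hex
    exact SNTProof.caseD hn u s t hus hst hut i h1 h2 h3
  · have tri : ∀ i, u i = s i ∨ u i = t i ∨ s i = t i := by
      intro i
      by_contra hc
      push_neg at hc
      exact hex ⟨i, hc.1, hc.2.1, hc.2.2⟩
    obtain ⟨k, hk⟩ := Function.ne_iff.mp hus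
    rcases tri k with h | h | h
    · exact absurd h hk
    · obtain ⟨i, hi⟩ := Function.ne_iff.mp hut
      rcases tri i with h2 | h2 | h2
      · have hm := SNTProof.caseP hn u t s hut (Ne.symm hst) hus k h hk i hi h2.symm
        rw [← SNTProof.c3_inv_swap u s t]
        exact inv_mem hm
      · exact absurd h2 hi
      · have hm := SNTProof.caseP hn t u s (Ne.symm hut) hus (Ne.symm hst) k h.symm
          (by rw [← h]; exact hk) i (Ne.symm hi) h2
        rwa [SNTProof.c3_rot (Ne.symm hut) (Ne.symm hst) hus] at hm
    · obtain ⟨i, hi⟩ := Function.ne_iff.mp hst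
      rcases tri i with h2 | h2 | h2
      · have hm := SNTProof.caseP hn s t u hst (Ne.symm hut) (Ne.symm hus) k h (Ne.symm hk) i hi h2
        rwa [SNTProof.c3_rot hst (Ne.symm hus) (Ne.symm hut),
             SNTProof.c3_rot (Ne.symm hut) (Ne.symm hst) hus] at hm
      · have hm := SNTProof.caseP hn t s u (Ne.symm hst) (Ne.symm hus) (Ne.symm hut) k h.symm
          (by rw [← h]; exact Ne.symm hk) i (Ne.symm hi) h2
        rw [SNTProof.c3_rot (Ne.symm hst) (Ne.symm hut) (Ne.symm hus),
            SNTProof.c3_rot (Ne.symm hus) hst hut] at hm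
        rw [← SNTProof.c3_inv_swap u s t]
        exact inv_mem hm
      · exact absurd h2 hi
end

section
/- For n ≥ 2, every permutation of {0,1,2}^n (i.e. every n×n ternary reversible circuit) is a product of ternary Swap gates, ternary Not gates, and ternary Toffoli gates; that is, these gates generate the full symmetric group Sym({0,1,2}^n). -/
open Equiv

namespace Aux

variable {n : ℕ}

/-- `c` evaluated with coordinate `j` masked to `0`. -/
def mask (j : Fin n) (c : V n → ZMod 3) (x : V n) : ZMod 3 := c (Function.update x j 0)

lemma mask_update (j : Fin n) (c : V n → ZMod 3) (x : V n) (v : ZMod 3) :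
    mask j c (Function.update x j v) = mask j c x := by
  simp [mask, Function.update_idem]

/-- A function `c` is independent of coordinate `j`. -/
def Indep (j : Fin n) (c : V n → ZMod 3) : Prop :=
  ∀ x v, c (Function.update x j v) = c x

lemma Indep.mask_eq {j : Fin n} {c : V n → ZMod 3} (h : Indep j c) (x : V n) :
    mask j c x = c x := h x 0

/-- Add `mask j c x` to coordinate `j`. -/
def addPerm (j : Fin n) (c : V n → ZMod 3) : Equiv.Perm (V n) where
  toFun x := Function.update x j (x j + mask j c x)
  invFun x := Function.update x j (x j - mask j c x)
  left_inv x := by simp [mask_update, Function.update_idem]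
  right_inv x := by simp [mask_update, Function.update_idem]

lemma addPerm_apply (j : Fin n) (c : V n → ZMod 3) (x : V n) :
    addPerm j c x = Function.update x j (x j + mask j c x) := rfl

lemma addPerm_apply_of_indep {j : Fin n} {c : V n → ZMod 3} (h : Indep j c) (x : V n) :
    addPerm j c x = Function.update x j (x j + c x) := by
  rw [addPerm_apply, h.mask_eq]

lemma addPerm_apply_ne (j : Fin n) (c : V n → ZMod 3) (x : V n) {r : Fin n} (hr : r ≠ j) :
    addPerm j c x r = x r := by
  rw [addPerm_apply, Function.update_of_ne hr]

lemma addPerm_congr {j : Fin n} {c c' : V n → ZMod 3} (h : ∀ x, c x = c' x) :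
    addPerm j c = addPerm j c' := by
  have : c = c' := funext h
  subst this; rfl

lemma addPerm_mul (j : Fin n) (c₁ c₂ : V n → ZMod 3) :
    addPerm j c₁ * addPerm j c₂ = addPerm j (fun x => c₁ x + c₂ x) := by
  apply Equiv.ext; intro x
  simp only [Perm.mul_apply, addPerm_apply]
  have h1 : mask j c₁ (Function.update x j (x j + mask j c₂ x)) = mask j c₁ x :=
    mask_update j c₁ x _
  have h2 : mask j (fun x => c₁ x + c₂ x) x = mask j c₁ x + mask j c₂ x := rfl
  rw [h1, h2]
  simp only [Function.update_self]
  rw [add_assoc, add_comm (mask j c₂ x) (mask j c₁ x), ← add_assoc, Function.update_idem]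

lemma addPerm_zero (j : Fin n) : addPerm j (fun _ => 0) = 1 := by
  apply Equiv.ext; intro x
  simp [addPerm_apply, mask]

lemma addPerm_pow (j : Fin n) (c : V n → ZMod 3) (k : ℕ) :
    addPerm j c ^ k = addPerm j (fun x => (k : ZMod 3) * c x) := by
  induction k with
  | zero =>
      rw [pow_zero, ← addPerm_zero j]
      apply addPerm_congr; intro x; simp
  | succ k ih =>
      rw [pow_succ, ih, addPerm_mul]
      apply addPerm_congr; intro x
      push_cast
      ring

/-- Translation. -/
def transPerm (w : V n) : Equiv.Perm (V n) where
  toFun x := x + w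
  invFun x := x - w
  left_inv x := by simp
  right_inv x := by simp

lemma transPerm_apply (w x : V n) : transPerm w x = x + w := rfl

lemma transPerm_inv_apply (w x : V n) : (transPerm w)⁻¹ x = x - w := rfl

lemma transPerm_mul (u v : V n) : transPerm u * transPerm v = transPerm (u + v) := by
  apply Equiv.ext; intro x
  simp [transPerm_apply, Perm.mul_apply, add_assoc, add_comm u v]

/-- Coordinate permutation: `x ↦ x ∘ π`. -/
def coordPerm (π : Equiv.Perm (Fin n)) : Equiv.Perm (V n) where
  toFun x := x ∘ π
  invFun x := x ∘ π.symm
  left_inv x := by funext r; simp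
  right_inv x := by funext r; simp

lemma coordPerm_apply (π : Equiv.Perm (Fin n)) (x : V n) (r : Fin n) :
    coordPerm π x r = x (π r) := rfl

lemma coordPerm_inv (π : Equiv.Perm (Fin n)) :
    (coordPerm π)⁻¹ = coordPerm π.symm := rfl

/-- The control condition: all coordinates in `S` have the values given by `w`. -/
def ctrlCond (S : Finset (Fin n)) (w : V n) (x : V n) : ZMod 3 :=
  if ∀ r ∈ S, x r = w r then 1 else 0

lemma ctrlCond_indep {S : Finset (Fin n)} {j : Fin n} (hj : j ∉ S) (w : V n) :
    Indep j (ctrlCond S w) := by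
  intro x v
  unfold ctrlCond
  congr 1
  simp only [eq_iff_iff]
  constructor <;> intro h r hr <;> have hrj : r ≠ j := fun e => hj (e ▸ hr)
  · have := h r hr
    rwa [Function.update_of_ne hrj] at this
  · rw [Function.update_of_ne hrj]
    exact h r hr

/-- Controlled increment gate. -/
def ctrlInc (S : Finset (Fin n)) (j : Fin n) (w : V n) : Equiv.Perm (V n) :=
  addPerm j (ctrlCond S w)

/-- The gate perms. -/
def swapPerm (i j : Fin n) : Equiv.Perm (V n) := coordPerm (Equiv.swap i j)

lemma swapPerm_eq_swapFun (i j : Fin n) (x : V n) : swapPerm i j x = swapFun i j x := by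
  funext r
  simp only [swapPerm, coordPerm_apply, swapFun, Equiv.swap_apply_def]
  by_cases h1 : r = i
  · simp [h1]
  · by_cases h2 : r = j
    · by_cases h3 : j = i <;> simp [h1, h2, h3]
    · simp [h1, h2]

def notPerm (j : Fin n) : Equiv.Perm (V n) := addPerm j (fun _ => 1)

lemma notPerm_eq_notFun (j : Fin n) (x : V n) : notPerm j x = notFun j x := by
  rw [notPerm, addPerm_apply_of_indep (c := fun _ => 1) (fun _ _ => rfl)]; rfl

end Aux

namespace Aux

variable {n : ℕ}

lemma fin_ne_zero_iff (h : 0 < n) (r : Fin n) : r ≠ ⟨0, h⟩ ↔ 0 < r.val := by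
  constructor
  · intro hr
    rcases Nat.eq_zero_or_pos r.val with h0 | h0
    · exact absurd (Fin.ext h0) hr
    · exact h0
  · intro h0 e
    rw [e] at h0
    exact absurd h0 (lt_irrefl 0)

lemma ctrlInc_apply_of_notMem {S : Finset (Fin n)} {j : Fin n} (hj : j ∉ S) (w x : V n) :
    ctrlInc S j w x = Function.update x j (x j + ctrlCond S w x) :=
  addPerm_apply_of_indep (ctrlCond_indep hj w) x

lemma toffoliPerm_eq (h : 0 < n) (x : V n) :
    ctrlInc ({(⟨0, h⟩ : Fin n)}ᶜ) ⟨0, h⟩ (fun _ => 1) x = toffoliFun x := by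
  have hcond : (∀ r ∈ ({(⟨0, h⟩ : Fin n)}ᶜ : Finset (Fin n)), x r = 1) ↔
      (∀ r : Fin n, 0 < r.val → x r = 1) := by
    constructor
    · intro hc r hr
      exact hc r (by simp [Finset.mem_compl, (fin_ne_zero_iff h r).mpr hr])
    · intro hc r hr
      rw [Finset.mem_compl, Finset.mem_singleton] at hr
      exact hc r ((fin_ne_zero_iff h r).mp hr)
  rw [ctrlInc_apply_of_notMem (by simp)]
  simp only [ctrlCond, toffoliFun]
  by_cases hc : ∀ r : Fin n, 0 < r.val → x r = 1
  · rw [if_pos (hcond.mpr hc), if_pos hc]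
    funext r
    by_cases hr : r = ⟨0, h⟩
    · subst hr; simp
    · rw [Function.update_of_ne hr, if_neg]
      intro hv
      exact hr (Fin.ext hv)
  · rw [if_neg (fun hx => hc (hcond.mp hx)), if_neg hc]
    simp

/-- Membership lemmas. -/
lemma swapPerm_mem {i j : Fin n} (hij : i ≠ j) :
    swapPerm i j ∈ Subgroup.closure (SNT n) :=
  Subgroup.subset_closure (Or.inl ⟨i, j, hij, swapPerm_eq_swapFun i j⟩)

lemma notPerm_mem (j : Fin n) : notPerm j ∈ Subgroup.closure (SNT n) :=
  Subgroup.subset_closure (Or.inr (Or.inl ⟨j, notPerm_eq_notFun j⟩))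

lemma toffoliPerm_mem (h : 0 < n) :
    ctrlInc ({(⟨0, h⟩ : Fin n)}ᶜ) ⟨0, h⟩ (fun _ => 1) ∈ Subgroup.closure (SNT n) :=
  Subgroup.subset_closure (Or.inr (Or.inr (toffoliPerm_eq h)))

lemma transPerm_pow (v : V n) (k : ℕ) : transPerm v ^ k = transPerm ((k : ZMod 3) • v) := by
  induction k with
  | zero => apply Equiv.ext; intro x; simp [transPerm_apply]
  | succ k ih =>
      rw [pow_succ, ih, transPerm_mul]
      congr 1
      push_cast
      module

lemma notPerm_eq_transPerm (j : Fin n) : notPerm j = transPerm (Pi.single j 1) := by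
  apply Equiv.ext; intro x
  rw [notPerm_eq_notFun]
  funext r
  simp only [notFun, transPerm_apply, Pi.add_apply]
  by_cases hr : r = j
  · subst hr; simp
  · simp [Function.update_of_ne hr, Pi.single_eq_of_ne hr]

lemma transPerm_mem (w : V n) : transPerm w ∈ Subgroup.closure (SNT n) := by
  have key : ∀ (s : Finset (Fin n)) (w : V n), (∀ j ∉ s, w j = 0) →
      transPerm w ∈ Subgroup.closure (SNT n) := by
    intro s
    induction s using Finset.induction with
    | empty =>
        intro w hw
        have : w = 0 := funext fun j => hw j (by simp)
        subst this
        have : transPerm (0 : V n) = 1 := by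
          apply Equiv.ext; intro x; simp [transPerm_apply]
        rw [this]; exact Subgroup.one_mem _
    | @insert a s' ha ih =>
        intro w hw
        have hsplit : w = Pi.single a (w a) + Function.update w a 0 := by
          funext r
          by_cases hr : r = a
          · subst hr; simp
          · simp [Pi.single_eq_of_ne hr, Function.update_of_ne hr]
        rw [hsplit, ← transPerm_mul]
        refine Subgroup.mul_mem _ ?_ (ih _ ?_)
        · have : (Pi.single a (w a) : V n) = (((w a).val : ZMod 3) • (Pi.single a 1 : V n) : V n) := by
            rw [ZMod.natCast_val, ZMod.cast_id]
            funext r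
            by_cases hr : r = a
            · subst hr; simp
            · simp [Pi.single_eq_of_ne hr]
          rw [this, ← transPerm_pow, ← notPerm_eq_transPerm]
          exact Subgroup.pow_mem _ (notPerm_mem a) _
        · intro j hj
          by_cases hja : j = a
          · subst hja; simp
          · rw [Function.update_of_ne hja]
            exact hw j (by simp [hja, hj])
  exact key Finset.univ w (fun j hj => absurd (Finset.mem_univ j) hj)

/-- Conjugation of an `addPerm` (with `j`-independent condition) by a translation. -/
lemma conj_trans_addPerm (v : V n) (j : Fin n) (c : V n → ZMod 3) (hc : Indep j c) :
    transPerm v * addPerm j c * (transPerm v)⁻¹ = addPerm j (fun x => c (x - v)) := by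
  have hc' : Indep j (fun x => c (x - v)) := by
    intro x u
    have : Function.update x j u - v = Function.update (x - v) j (u - v j) := by
      funext r
      by_cases hr : r = j
      · subst hr; simp
      · simp [Function.update_of_ne hr]
    show c (Function.update x j u - v) = c (x - v)
    rw [this]
    exact hc _ _
  apply Equiv.ext; intro x
  simp only [Perm.mul_apply, transPerm_apply, transPerm_inv_apply,
    addPerm_apply_of_indep hc, addPerm_apply_of_indep hc']
  funext r
  by_cases hr : r = j
  · subst hr
    simp only [Pi.add_apply, Pi.sub_apply, Function.update_self]
    ring
  · simp [Function.update_of_ne hr]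

/-- Conjugation of an `addPerm` (with `j`-independent condition) by a coordinate
permutation. -/
lemma conj_coord_addPerm (π : Equiv.Perm (Fin n)) (j : Fin n) (c : V n → ZMod 3)
    (hc : Indep j c) :
    coordPerm π * addPerm j c * (coordPerm π)⁻¹ =
      addPerm (π.symm j) (fun x => c (x ∘ π.symm)) := by
  have hupd : ∀ (x : V n) (u : ZMod 3),
      (Function.update x (π.symm j) u) ∘ π.symm = Function.update (x ∘ π.symm) j u := by
    intro x u
    funext r
    by_cases hr : r = j
    · subst hr
      simp [Function.comp_apply]
    · have h2 : π.symm r ≠ π.symm j := fun e => hr (π.symm.injective e)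
      simp only [Function.comp_apply]
      rw [Function.update_of_ne h2, Function.update_of_ne hr]
      rfl
  have hc' : Indep (π.symm j) (fun x => c (x ∘ π.symm)) := by
    intro x u
    show c ((Function.update x (π.symm j) u) ∘ π.symm) = c (x ∘ π.symm)
    rw [hupd]
    exact hc _ _
  have hupd2 : ∀ (y : V n) (a : ZMod 3),
      (Function.update y j a) ∘ π = Function.update (y ∘ π) (π.symm j) a := by
    intro y a
    funext r
    by_cases hr : r = π.symm j
    · subst hr
      show Function.update y j a (π (π.symm j)) = Function.update (y ∘ π) (π.symm j) a (π.symm j)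
      rw [Equiv.apply_symm_apply, Function.update_self, Function.update_self]
    · have hπ : π r ≠ j := fun e => hr (by rw [← e]; simp)
      show Function.update y j a (π r) = Function.update (y ∘ π) (π.symm j) a r
      rw [Function.update_of_ne hπ, Function.update_of_ne hr]
      rfl
  apply Equiv.ext; intro x
  simp only [Perm.mul_apply, coordPerm_inv]
  rw [show (coordPerm π.symm x : V n) = x ∘ π.symm from rfl,
    addPerm_apply_of_indep hc, addPerm_apply_of_indep hc']
  show (Function.update (x ∘ π.symm) j ((x ∘ π.symm) j + c (x ∘ π.symm))) ∘ π = _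
  rw [hupd2]
  have hxx : (x ∘ π.symm) ∘ π = x := by
    funext r
    simp
  rw [hxx]
  rfl

end Aux

namespace Aux

variable {n : ℕ}

lemma ctrlInc_conj_trans (v : V n) {S : Finset (Fin n)} {j : Fin n} (hj : j ∉ S) (w : V n) :
    transPerm v * ctrlInc S j w * (transPerm v)⁻¹ = ctrlInc S j (w + v) := by
  rw [ctrlInc, conj_trans_addPerm v j _ (ctrlCond_indep hj w), ctrlInc]
  apply addPerm_congr
  intro x
  unfold ctrlCond
  congr 1
  simp only [eq_iff_iff]
  constructor <;> intro h r hr <;> have := h r hr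
  · rw [Pi.add_apply, ← this, Pi.sub_apply]
    ring
  · rw [Pi.sub_apply, this, Pi.add_apply]
    ring

lemma ctrlInc_conj_coord (π : Equiv.Perm (Fin n)) {S : Finset (Fin n)} {j : Fin n}
    (hj : j ∉ S) (w : V n) :
    coordPerm π * ctrlInc S j w * (coordPerm π)⁻¹ =
      ctrlInc (S.image π.symm) (π.symm j) (w ∘ π) := by
  rw [ctrlInc, conj_coord_addPerm π j _ (ctrlCond_indep hj w), ctrlInc]
  apply addPerm_congr
  intro x
  unfold ctrlCond
  congr 1
  simp only [eq_iff_iff]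
  constructor <;> intro h r hr
  · rw [Finset.mem_image] at hr
    obtain ⟨r', hr', rfl⟩ := hr
    have := h r' hr'
    simpa using this
  · have h2 := h (π.symm r) (Finset.mem_image_of_mem _ hr)
    simp only [Function.comp_apply, Equiv.apply_symm_apply] at h2
    exact h2

lemma compl_image_perm (π : Equiv.Perm (Fin n)) (j : Fin n) :
    ({j}ᶜ : Finset (Fin n)).image π = {π j}ᶜ := by
  ext r
  simp only [Finset.mem_image, Finset.mem_compl, Finset.mem_singleton]
  constructor
  · rintro ⟨r', hr', rfl⟩ e
    exact hr' (π.injective e)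
  · intro hr
    exact ⟨π.symm r, fun e => hr (by rw [← Equiv.apply_symm_apply π r, e]),
      Equiv.apply_symm_apply π r⟩

/-- Full-control gates with arbitrary target and pattern are in the closure. -/
lemma fullCtrl_mem (hn : 2 ≤ n) (j : Fin n) (w : V n) :
    ctrlInc ({j}ᶜ) j w ∈ Subgroup.closure (SNT n) := by
  have h0 : 0 < n := by omega
  set i0 : Fin n := ⟨0, h0⟩ with hi0
  have hmem : coordPerm (Equiv.swap i0 j) ∈ Subgroup.closure (SNT n) := by
    by_cases hj : i0 = j
    · rw [← hj, Equiv.swap_self]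
      have : coordPerm (Equiv.refl (Fin n)) = 1 := by
        apply Equiv.ext; intro x; funext r; rfl
      rw [this]; exact Subgroup.one_mem _
    · exact swapPerm_mem hj
  have step1 := ctrlInc_conj_coord (Equiv.swap i0 j)
    (S := {i0}ᶜ) (j := i0) (by simp) (fun _ => 1)
  rw [Equiv.symm_swap] at step1
  rw [compl_image_perm, Equiv.swap_apply_left] at step1
  have m1 : ctrlInc ({j}ᶜ) j ((fun _ => 1) ∘ (Equiv.swap i0 j)) ∈ Subgroup.closure (SNT n) := by
    rw [← step1]
    exact Subgroup.mul_mem _ (Subgroup.mul_mem _ hmem (toffoliPerm_mem h0)) (Subgroup.inv_mem _ hmem)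
  have step2 := ctrlInc_conj_trans (w - ((fun _ => 1) ∘ (Equiv.swap i0 j)))
    (S := ({j}ᶜ : Finset (Fin n))) (j := j) (by simp) ((fun _ => 1) ∘ (Equiv.swap i0 j))
  have : ((fun _ => 1) ∘ (Equiv.swap i0 j)) + (w - ((fun _ => 1) ∘ (Equiv.swap i0 j))) = w := by
    funext r; simp
  rw [this] at step2
  rw [← step2]
  exact Subgroup.mul_mem _ (Subgroup.mul_mem _ (transPerm_mem _) m1) (Subgroup.inv_mem _ (transPerm_mem _))

/-- Control elimination. -/
lemma ctrl_erase {S : Finset (Fin n)} {j k : Fin n} (hj : j ∉ S) (hk : k ∈ S) (w : V n) :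
    ctrlInc (S.erase k) j w =
      ctrlInc S j (Function.update w k 0) * ctrlInc S j (Function.update w k 1) *
        ctrlInc S j (Function.update w k 2) := by
  rw [ctrlInc, ctrlInc, ctrlInc, ctrlInc, addPerm_mul, addPerm_mul]
  apply addPerm_congr
  intro x
  have key : ∀ a : ZMod 3, ctrlCond S (Function.update w k a) x =
      if (x k = a ∧ ∀ r ∈ S.erase k, x r = w r) then 1 else 0 := by
    intro a
    unfold ctrlCond
    congr 1
    simp only [eq_iff_iff]
    constructor
    · intro h
      refine ⟨by simpa using h k hk, fun r hr => ?_⟩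
      rw [Finset.mem_erase] at hr
      have := h r hr.2
      rwa [Function.update_of_ne hr.1] at this
    · rintro ⟨h1, h2⟩ r hr
      by_cases hrk : r = k
      · subst hrk; simpa using h1
      · rw [Function.update_of_ne hrk]
        exact h2 r (Finset.mem_erase.mpr ⟨hrk, hr⟩)
  rw [key 0, key 1, key 2]
  unfold ctrlCond
  set P : Prop := ∀ r ∈ S.erase k, x r = w r with hP
  by_cases hcond : P
  · rw [if_pos hcond]
    have h3 : x k = 0 ∨ x k = 1 ∨ x k = 2 := by
      generalize x k = v
      fin_cases v
      · exact Or.inl rfl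
      · exact Or.inr (Or.inl rfl)
      · exact Or.inr (Or.inr rfl)
    rcases h3 with h | h | h
    · rw [h, if_pos (⟨rfl, hcond⟩ : (0 : ZMod 3) = 0 ∧ P),
        if_neg (fun hh : (0 : ZMod 3) = 1 ∧ P => absurd hh.1 (by decide)),
        if_neg (fun hh : (0 : ZMod 3) = 2 ∧ P => absurd hh.1 (by decide))]
      norm_num
    · rw [h, if_neg (fun hh : (1 : ZMod 3) = 0 ∧ P => absurd hh.1 (by decide)),
        if_pos (⟨rfl, hcond⟩ : (1 : ZMod 3) = 1 ∧ P),
        if_neg (fun hh : (1 : ZMod 3) = 2 ∧ P => absurd hh.1 (by decide))]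
      norm_num
    · rw [h, if_neg (fun hh : (2 : ZMod 3) = 0 ∧ P => absurd hh.1 (by decide)),
        if_neg (fun hh : (2 : ZMod 3) = 1 ∧ P => absurd hh.1 (by decide)),
        if_pos (⟨rfl, hcond⟩ : (2 : ZMod 3) = 2 ∧ P)]
      norm_num
  · rw [if_neg hcond, if_neg (fun hh : x k = 0 ∧ P => hcond hh.2),
      if_neg (fun hh : x k = 1 ∧ P => hcond hh.2),
      if_neg (fun hh : x k = 2 ∧ P => hcond hh.2)]
    norm_num

end Aux

namespace Aux

variable {n : ℕ}

/-- Every controlled-increment gate (target not a control) is in the closure. -/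
lemma ctrlInc_mem (hn : 2 ≤ n) {S : Finset (Fin n)} {j : Fin n} (hj : j ∉ S) (w : V n) :
    ctrlInc S j w ∈ Subgroup.closure (SNT n) := by
  -- downward induction on the number of missing controls
  suffices key : ∀ (m : ℕ) (S : Finset (Fin n)) (j : Fin n), j ∉ S →
      (({j}ᶜ : Finset (Fin n)) \ S).card ≤ m → ∀ w,
      ctrlInc S j w ∈ Subgroup.closure (SNT n) by
    exact key _ S j hj le_rfl w
  intro m
  induction m with
  | zero =>
      intro S j hj hcard w
      have hempty : ({j}ᶜ : Finset (Fin n)) \ S = ∅ := Finset.card_eq_zero.mp (Nat.le_zero.mp hcard)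
      have hSeq : S = ({j}ᶜ : Finset (Fin n)) := by
        apply Finset.Subset.antisymm
        · intro r hr
          rw [Finset.mem_compl, Finset.mem_singleton]
          exact fun e => hj (e ▸ hr)
        · intro r hr
          by_contra hrS
          have : r ∈ ({j}ᶜ : Finset (Fin n)) \ S := Finset.mem_sdiff.mpr ⟨hr, hrS⟩
          rw [hempty] at this
          exact absurd this (Finset.notMem_empty r)
      subst hSeq
      exact fullCtrl_mem hn j w
  | succ m ih =>
      intro S j hj hcard w
      by_cases hsmall : (({j}ᶜ : Finset (Fin n)) \ S).card ≤ m
      · exact ih S j hj hsmall w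
      · -- pick a missing control k
        have hpos : 0 < (({j}ᶜ : Finset (Fin n)) \ S).card := by omega
        obtain ⟨k, hk⟩ := Finset.card_pos.mp hpos
        rw [Finset.mem_sdiff, Finset.mem_compl, Finset.mem_singleton] at hk
        obtain ⟨hkj, hkS⟩ := hk
        have hS' : j ∉ insert k S := by
          rw [Finset.mem_insert]
          rintro (e | e)
          · exact hkj e.symm
          · exact hj e
        have herase : (insert k S).erase k = S := Finset.erase_insert hkS
        have hcard' : (({j}ᶜ : Finset (Fin n)) \ insert k S).card ≤ m := by
          have : ({j}ᶜ : Finset (Fin n)) \ insert k S =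
              (({j}ᶜ : Finset (Fin n)) \ S).erase k := by
            ext r
            simp only [Finset.mem_sdiff, Finset.mem_insert, Finset.mem_erase,
              Finset.mem_compl, Finset.mem_singleton]
            tauto
          rw [this]
          have hkmem : k ∈ ({j}ᶜ : Finset (Fin n)) \ S := by
            rw [Finset.mem_sdiff, Finset.mem_compl, Finset.mem_singleton]
            exact ⟨hkj, hkS⟩
          rw [Finset.card_erase_of_mem hkmem]
          omega
        have := ctrl_erase (S := insert k S) (j := j) (k := k) hS'
          (Finset.mem_insert_self k S) w
        rw [herase] at this
        rw [this]
        exact Subgroup.mul_mem _ (Subgroup.mul_mem _ (ih _ _ hS' hcard' _)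
          (ih _ _ hS' hcard' _)) (ih _ _ hS' hcard' _)

/-- Gate adding `g (x i)` to coordinate `j`. -/
def fgPerm (j i : Fin n) (g : ZMod 3 → ZMod 3) : Equiv.Perm (V n) :=
  addPerm j (fun x => g (x i))

lemma fgPerm_indep {j i : Fin n} (hij : j ≠ i) (g : ZMod 3 → ZMod 3) :
    Indep j (fun x : V n => g (x i)) := by
  intro x v
  simp only []
  rw [Function.update_of_ne (fun e => hij e.symm)]

lemma fgPerm_apply {j i : Fin n} (hij : j ≠ i) (g : ZMod 3 → ZMod 3) (x : V n) :
    fgPerm j i g x = Function.update x j (x j + g (x i)) :=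
  addPerm_apply_of_indep (fgPerm_indep hij g) x

lemma fgPerm_apply_ne {j i : Fin n} (g : ZMod 3 → ZMod 3) (x : V n) {r : Fin n}
    (hr : r ≠ j) : fgPerm j i g x r = x r :=
  addPerm_apply_ne j _ x hr

lemma fgPerm_mem (hn : 2 ≤ n) {j i : Fin n} (hij : j ≠ i) (g : ZMod 3 → ZMod 3) :
    fgPerm j i g ∈ Subgroup.closure (SNT n) := by
  have hiS : j ∉ ({i} : Finset (Fin n)) := by simpa using hij
  have key : fgPerm j i g =
      ctrlInc {i} j (fun _ => 0) ^ (g 0).val *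
        (ctrlInc {i} j (fun _ => 1) ^ (g 1).val *
          ctrlInc {i} j (fun _ => 2) ^ (g 2).val) := by
    unfold fgPerm ctrlInc
    rw [addPerm_pow, addPerm_pow, addPerm_pow, addPerm_mul, addPerm_mul]
    apply addPerm_congr
    intro x
    have hval : ∀ a : ZMod 3, ((a.val : ZMod 3)) = a := fun a => by
      rw [ZMod.natCast_val, ZMod.cast_id]
    have hcc : ∀ a : ZMod 3, ctrlCond ({i} : Finset (Fin n)) (fun _ => a) x =
        if x i = a then 1 else 0 := by
      intro a
      unfold ctrlCond
      congr 1
      simp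
    rw [hcc, hcc, hcc, hval, hval, hval]
    have h3 : x i = 0 ∨ x i = 1 ∨ x i = 2 := by
      generalize x i = v
      fin_cases v
      · exact Or.inl rfl
      · exact Or.inr (Or.inl rfl)
      · exact Or.inr (Or.inr rfl)
    rcases h3 with h | h | h <;> rw [h] <;>
      simp only [if_pos rfl, if_neg (by decide : ¬(0 : ZMod 3) = 1),
        if_neg (by decide : ¬(0 : ZMod 3) = 2), if_neg (by decide : ¬(1 : ZMod 3) = 0),
        if_neg (by decide : ¬(1 : ZMod 3) = 2), if_neg (by decide : ¬(2 : ZMod 3) = 0),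
        if_neg (by decide : ¬(2 : ZMod 3) = 1)] <;> simp
  rw [key]
  exact Subgroup.mul_mem _ (Subgroup.pow_mem _ (ctrlInc_mem hn hiS _) _)
    (Subgroup.mul_mem _ (Subgroup.pow_mem _ (ctrlInc_mem hn hiS _) _)
      (Subgroup.pow_mem _ (ctrlInc_mem hn hiS _) _))

end Aux

namespace Aux

section Cycle3

variable {α : Type*} [DecidableEq α] {a b c : α}

lemma cycle3_apply_a (hab : a ≠ b) (hbc : b ≠ c) : cycle3 a b c a = b := by
  simp only [cycle3, Perm.mul_apply, Equiv.swap_apply_left]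
  exact Equiv.swap_apply_of_ne_of_ne (Ne.symm hab) hbc

lemma cycle3_apply_b (hab : a ≠ b) : cycle3 a b c b = c := by
  simp only [cycle3, Perm.mul_apply]
  rw [Equiv.swap_apply_right, Equiv.swap_apply_left]

lemma cycle3_apply_c (hbc : b ≠ c) (hac : a ≠ c) : cycle3 a b c c = a := by
  simp only [cycle3, Perm.mul_apply]
  rw [Equiv.swap_apply_of_ne_of_ne (Ne.symm hac) (Ne.symm hbc), Equiv.swap_apply_right]

lemma cycle3_apply_other {x : α} (hxa : x ≠ a) (hxb : x ≠ b) (hxc : x ≠ c) :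
    cycle3 a b c x = x := by
  simp only [cycle3, Perm.mul_apply]
  rw [Equiv.swap_apply_of_ne_of_ne hxa hxb, Equiv.swap_apply_of_ne_of_ne hxa hxc]

lemma cycle3_inv (a b c : α) : (cycle3 a b c)⁻¹ = cycle3 a c b := by
  simp only [cycle3, mul_inv_rev, Equiv.swap_inv]

lemma cycle3_conj (π : Equiv.Perm α) (a b c : α) :
    π * cycle3 a b c * π⁻¹ = cycle3 (π a) (π b) (π c) := by
  simp only [cycle3, Equiv.swap_apply_apply]
  group

/-- A permutation acting as an explicit 3-cycle equals `cycle3`. -/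
lemma eq_cycle3 {P : Equiv.Perm α} (hab : a ≠ b) (hbc : b ≠ c) (hac : a ≠ c)
    (ha : P a = b) (hb : P b = c) (hc : P c = a)
    (hfix : ∀ x, x ≠ a → x ≠ b → x ≠ c → P x = x) : P = cycle3 a b c := by
  apply Equiv.ext
  intro x
  by_cases hxa : x = a
  · subst hxa; rw [ha, cycle3_apply_a hab hbc]
  by_cases hxb : x = b
  · subst hxb; rw [hb, cycle3_apply_b hab]
  by_cases hxc : x = c
  · subst hxc; rw [hc, cycle3_apply_c hbc hac]
  rw [hfix x hxa hxb hxc, cycle3_apply_other hxa hxb hxc]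

end Cycle3

end Aux

namespace Aux

variable {n : ℕ}

lemma mem_hetCols {u s t : V n} {r : Fin n} :
    r ∈ hetCols u s t ↔ ¬(u r = s r ∧ s r = t r) := by
  simp [hetCols]

lemma notMem_hetCols {u s t : V n} {r : Fin n} :
    r ∉ hetCols u s t ↔ (u r = s r ∧ s r = t r) := by
  rw [mem_hetCols, not_not]

/-- Base case: a triple that differs in exactly one column. -/
lemma cycle3_mem_of_card_one (hn : 2 ≤ n) {u s t : V n} (hus : u ≠ s) (hst : s ≠ t)
    (hut : u ≠ t) {r : Fin n} (hr : hetCols u s t = {r}) :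
    cycle3 u s t ∈ Subgroup.closure (SNT n) := by
  have hoff : ∀ r', r' ≠ r → u r' = s r' ∧ s r' = t r' := by
    intro r' hr'
    have : r' ∉ hetCols u s t := by rw [hr]; simpa using hr'
    exact notMem_hetCols.mp this
  have hus' : u r ≠ s r := by
    intro e
    exact hus (funext fun r' => by
      by_cases h : r' = r
      · subst h; exact e
      · exact (hoff r' h).1)
  have hst' : s r ≠ t r := by
    intro e
    exact hst (funext fun r' => by
      by_cases h : r' = r
      · subst h; exact e
      · exact (hoff r' h).2)
  have hut' : u r ≠ t r := by
    intro e
    exact hut (funext fun r' => by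
      by_cases h : r' = r
      · subst h; exact e
      · exact ((hoff r' h).1).trans (hoff r' h).2)
  set P : Equiv.Perm (V n) := ctrlInc ({r}ᶜ) r u with hP
  have hPmem : P ∈ Subgroup.closure (SNT n) := fullCtrl_mem hn r u
  have hnotmem : r ∉ ({r}ᶜ : Finset (Fin n)) := by simp
  have hcond : ∀ x : V n, (∀ r', r' ≠ r → x r' = u r') →
      P x = Function.update x r (x r + 1) := by
    intro x hx
    rw [hP, ctrlInc_apply_of_notMem hnotmem]
    congr 1
    unfold ctrlCond
    rw [if_pos]
    intro r' hr'
    rw [Finset.mem_compl, Finset.mem_singleton] at hr'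
    exact hx r' hr'
  have hcond' : ∀ x : V n, ¬(∀ r', r' ≠ r → x r' = u r') → P x = x := by
    intro x hx
    rw [hP, ctrlInc_apply_of_notMem hnotmem]
    unfold ctrlCond
    rw [if_neg, add_zero, Function.update_eq_self]
    intro hc
    exact hx (fun r' hr' => hc r' (by simp [hr']))
  have hsoff : ∀ r', r' ≠ r → s r' = u r' := fun r' h => ((hoff r' h).1).symm
  have htoff : ∀ r', r' ≠ r → t r' = u r' := fun r' h =>
    ((hoff r' h).2).symm.trans ((hoff r' h).1).symm
  have huoff : ∀ r', r' ≠ r → u r' = u r' := fun _ _ => rfl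
  -- update at r determines membership in {u, s, t}
  have hupdate : ∀ x : V n, (∀ r', r' ≠ r → x r' = u r') → ∀ v : V n,
      (∀ r', r' ≠ r → v r' = u r') → x r = v r → x = v := by
    intro x hx v hv he
    funext r'
    by_cases h : r' = r
    · subst h; exact he
    · rw [hx r' h, hv r' h]
  have hPfix : ∀ x : V n, x ≠ u → x ≠ s → x ≠ t → P x = x := by
    intro x hxu hxs hxt
    by_cases hx : ∀ r', r' ≠ r → x r' = u r'
    · exfalso
      have hcover : ∀ a b c y : ZMod 3, a ≠ b → b ≠ c → a ≠ c →
          y = a ∨ y = b ∨ y = c := by decide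
      rcases hcover (u r) (s r) (t r) (x r) hus' hst' hut' with h | h | h
      · exact hxu (hupdate x hx u huoff h)
      · exact hxs (hupdate x hx s hsoff h)
      · exact hxt (hupdate x hx t htoff h)
    · exact hcond' x hx
  have hstep : ∀ x : V n, (∀ r', r' ≠ r → x r' = u r') → ∀ v : V n,
      (∀ r', r' ≠ r → v r' = u r') → v r = x r + 1 → P x = v := by
    intro x hx v hv he
    rw [hcond x hx]
    funext r'
    by_cases h : r' = r
    · subst h; rw [Function.update_self, he]
    · rw [Function.update_of_ne h, hx r' h, hv r' h]
  have htri : ∀ a b c : ZMod 3, a ≠ b → b ≠ c → a ≠ c →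
      (b = a + 1 ∧ c = a + 2) ∨ (b = a + 2 ∧ c = a + 1) := by decide
  have hadd : ∀ a : ZMod 3, (a + 1) + 1 = a + 2 := by decide
  have hadd2 : ∀ a : ZMod 3, (a + 2) + 1 = a := by decide
  rcases htri (u r) (s r) (t r) hus' hst' hut' with ⟨h1, h2⟩ | ⟨h1, h2⟩
  · have hPu : P u = s := hstep u huoff s hsoff h1
    have hPs : P s = t := hstep s hsoff t htoff (by rw [h1, h2, hadd])
    have hPt : P t = u := hstep t htoff u huoff (by rw [h2, hadd2])
    have : P = cycle3 u s t := eq_cycle3 hus hst hut hPu hPs hPt hPfix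
    rw [← this]
    exact hPmem
  · have hPu : P u = t := hstep u huoff t htoff h2
    have hPt : P t = s := hstep t htoff s hsoff (by rw [h1, h2, hadd])
    have hPs : P s = u := hstep s hsoff u huoff (by rw [h1, hadd2])
    have hPeq : P = cycle3 u t s := eq_cycle3 hut (Ne.symm hst) hus hPu hPt hPs
      (fun x ha hb hc => hPfix x ha hc hb)
    have : cycle3 u s t = P⁻¹ := by rw [hPeq, cycle3_inv]
    rw [this]
    exact Subgroup.inv_mem _ hPmem

lemma claimK : ∀ a1 a2 a3 b1 b2 b3 : ZMod 3, (a1 = a2 → b1 = b2) → (a1 = a3 → b1 = b3) →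
    (a2 = a3 → b2 = b3) →
    ∃ h : ZMod 3 → ZMod 3, b1 + h a1 = b2 + h a2 ∧ b2 + h a2 = b3 + h a3 := by decide

lemma claimD : ∀ a1 a2 a3 b1 b2 b3 : ZMod 3, ¬(a1 = a2 ∧ a2 = a3) →
    ¬((a1 = a2 → b1 = b2) ∧ (a1 = a3 → b1 = b3) ∧ (a2 = a3 → b2 = b3)) →
    ∃ g : ZMod 3 → ZMod 3, a1 + g b1 ≠ a2 + g b2 ∧ a1 + g b1 ≠ a3 + g b3 ∧
      a2 + g b2 ≠ a3 + g b3 := by decide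

lemma fgPerm_apply_self {j i : Fin n} (hij : j ≠ i) (g : ZMod 3 → ZMod 3) (x : V n) :
    fgPerm j i g x j = x j + g (x i) := by
  rw [fgPerm_apply hij, Function.update_self]

/-- Killing column `r2` using column `r1`. -/
lemma hetCols_kill {u s t : V n} {r1 r2 : Fin n} (hne : r2 ≠ r1) (h : ZMod 3 → ZMod 3)
    (hc1 : u r2 + h (u r1) = s r2 + h (s r1)) (hc2 : s r2 + h (s r1) = t r2 + h (t r1)) :
    hetCols (fgPerm r2 r1 h u) (fgPerm r2 r1 h s) (fgPerm r2 r1 h t) =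
      (hetCols u s t).erase r2 := by
  ext r
  rw [mem_hetCols, Finset.mem_erase, mem_hetCols]
  by_cases hr : r = r2
  · subst hr
    rw [fgPerm_apply_self hne, fgPerm_apply_self hne, fgPerm_apply_self hne]
    constructor
    · intro hfalse
      exact absurd ⟨hc1, hc2⟩ hfalse
    · rintro ⟨h1, -⟩
      exact absurd rfl h1
  · rw [fgPerm_apply_ne h u hr, fgPerm_apply_ne h s hr, fgPerm_apply_ne h t hr]
    constructor
    · intro hh
      exact ⟨hr, hh⟩
    · rintro ⟨-, hh⟩
      exact hh

/-- Modifying column `r1` without changing the heterogeneous columns. -/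
lemma hetCols_preserve {u s t : V n} {r1 r2 : Fin n} (hne : r1 ≠ r2) (g : ZMod 3 → ZMod 3)
    (hhet : ¬(u r1 + g (u r2) = s r1 + g (s r2) ∧ s r1 + g (s r2) = t r1 + g (t r2)))
    (hr1 : r1 ∈ hetCols u s t) :
    hetCols (fgPerm r1 r2 g u) (fgPerm r1 r2 g s) (fgPerm r1 r2 g t) = hetCols u s t := by
  ext r
  rw [mem_hetCols, mem_hetCols]
  by_cases hr : r = r1
  · subst hr
    rw [fgPerm_apply_self hne, fgPerm_apply_self hne, fgPerm_apply_self hne]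
    constructor
    · intro _
      exact mem_hetCols.mp hr1
    · intro _
      exact hhet
  · rw [fgPerm_apply_ne g u hr, fgPerm_apply_ne g s hr, fgPerm_apply_ne g t hr]

/-- The reduction step. -/
lemma reduce (hn : 2 ≤ n) {u s t : V n} (h2 : 2 ≤ (hetCols u s t).card) :
    ∃ g ∈ Subgroup.closure (SNT n),
      (hetCols (g u) (g s) (g t)).card < (hetCols u s t).card := by
  obtain ⟨r1, hr1, r2, hr2, hner⟩ := Finset.one_lt_card.mp h2
  have hpos : 0 < (hetCols u s t).card := by omega
  have ha : ¬(u r1 = s r1 ∧ s r1 = t r1) := mem_hetCols.mp hr1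
  have hb : ¬(u r2 = s r2 ∧ s r2 = t r2) := mem_hetCols.mp hr2
  by_cases href : (u r1 = s r1 → u r2 = s r2) ∧ (u r1 = t r1 → u r2 = t r2) ∧
      (s r1 = t r1 → s r2 = t r2)
  · obtain ⟨h, hh1, hh2⟩ := claimK (u r1) (s r1) (t r1) (u r2) (s r2) (t r2)
      href.1 href.2.1 href.2.2
    refine ⟨fgPerm r2 r1 h, fgPerm_mem hn (Ne.symm hner) h, ?_⟩
    rw [hetCols_kill (Ne.symm hner) h hh1 hh2, Finset.card_erase_of_mem hr2]
    omega
  · obtain ⟨g, hg1, hg2, hg3⟩ := claimD (u r1) (s r1) (t r1) (u r2) (s r2) (t r2) ha href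
    set u' := fgPerm r1 r2 g u with hu'
    set s' := fgPerm r1 r2 g s with hs'
    set t' := fgPerm r1 r2 g t with ht'
    have ha1 : u' r1 = u r1 + g (u r2) := fgPerm_apply_self hner g u
    have ha2 : s' r1 = s r1 + g (s r2) := fgPerm_apply_self hner g s
    have ha3 : t' r1 = t r1 + g (t r2) := fgPerm_apply_self hner g t
    have hb1 : u' r2 = u r2 := fgPerm_apply_ne g u (Ne.symm hner)
    have hb2 : s' r2 = s r2 := fgPerm_apply_ne g s (Ne.symm hner)
    have hb3 : t' r2 = t r2 := fgPerm_apply_ne g t (Ne.symm hner)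
    have hd12 : u' r1 ≠ s' r1 := by rw [ha1, ha2]; exact hg1
    have hd13 : u' r1 ≠ t' r1 := by rw [ha1, ha3]; exact hg2
    have hd23 : s' r1 ≠ t' r1 := by rw [ha2, ha3]; exact hg3
    have hpres : hetCols u' s' t' = hetCols u s t :=
      hetCols_preserve hner g (fun hh => hg1 hh.1) hr1
    obtain ⟨h, hh1, hh2⟩ := claimK (u' r1) (s' r1) (t' r1) (u' r2) (s' r2) (t' r2)
      (fun e => absurd e hd12) (fun e => absurd e hd13) (fun e => absurd e hd23)
    refine ⟨fgPerm r2 r1 h * fgPerm r1 r2 g,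
      Subgroup.mul_mem _ (fgPerm_mem hn (Ne.symm hner) h) (fgPerm_mem hn hner g), ?_⟩
    have happ : ∀ x : V n, (fgPerm r2 r1 h * fgPerm r1 r2 g) x = fgPerm r2 r1 h (fgPerm r1 r2 g x) :=
      fun x => rfl
    rw [happ, happ, happ, ← hu', ← hs', ← ht',
      hetCols_kill (Ne.symm hner) h hh1 hh2, hpres, Finset.card_erase_of_mem hr2]
    omega

/-- Main induction: every explicit 3-cycle on distinct vectors is in the closure. -/
lemma cycle3_mem_closure (hn : 2 ≤ n) : ∀ (m : ℕ) (u s t : V n), u ≠ s → s ≠ t → u ≠ t →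
    (hetCols u s t).card ≤ m → cycle3 u s t ∈ Subgroup.closure (SNT n) := by
  intro m
  induction m with
  | zero =>
      intro u s t hus _ _ hcard
      exfalso
      apply hus
      funext r
      have : r ∉ hetCols u s t := by
        intro hmem
        have := Finset.card_pos.mpr ⟨r, hmem⟩
        omega
      exact (notMem_hetCols.mp this).1
  | succ m ih =>
      intro u s t hus hst hut hcard
      by_cases h1 : (hetCols u s t).card ≤ 1
      · have hne : (hetCols u s t).Nonempty := by
          by_contra hemp
          rw [Finset.not_nonempty_iff_eq_empty] at hemp
          apply hus
          funext r
          have : r ∉ hetCols u s t := by rw [hemp]; exact Finset.notMem_empty r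
          exact (notMem_hetCols.mp this).1
        have hcard1 : (hetCols u s t).card = 1 := by
          have := Finset.card_pos.mpr hne
          omega
        obtain ⟨r, hr⟩ := Finset.card_eq_one.mp hcard1
        exact cycle3_mem_of_card_one hn hus hst hut hr
      · have h2 : 2 ≤ (hetCols u s t).card := by omega
        obtain ⟨g, hgmem, hlt⟩ := reduce hn h2
        have hmem' := ih (g u) (g s) (g t)
          (fun e => hus (g.injective e)) (fun e => hst (g.injective e))
          (fun e => hut (g.injective e)) (by omega)
        have hconj : cycle3 u s t = g⁻¹ * cycle3 (g u) (g s) (g t) * g := by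
          rw [← cycle3_conj g u s t]
          group
        rw [hconj]
        exact Subgroup.mul_mem _ (Subgroup.mul_mem _ (Subgroup.inv_mem _ hgmem) hmem') hgmem

end Aux

namespace Aux

variable {n : ℕ}

section Sign

variable {i0 i1 : Fin n}

lemma swapPerm_sq (i0 i1 : Fin n) : swapPerm i0 i1 ^ 2 = 1 := by
  apply Equiv.ext
  intro x
  show swapPerm i0 i1 (swapPerm i0 i1 x) = x
  funext r
  simp only [swapPerm, coordPerm_apply, Equiv.swap_apply_self]

lemma swapPerm_fixed_iff (x : V n) : swapPerm i0 i1 x = x ↔ x i0 = x i1 := by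
  constructor
  · intro h
    have := congrFun h i0
    simpa [swapPerm, coordPerm_apply, Equiv.swap_apply_left] using this.symm
  · intro h
    funext r
    simp only [swapPerm, coordPerm_apply, Equiv.swap_apply_def]
    by_cases h1 : r = i0
    · simp [h1, h.symm]
    · by_cases h2 : r = i1
      · by_cases h3 : i1 = i0
        · simp [h1, h2, h3, h]
        · simp [h1, h2, h3, h]
      · simp [h1, h2]

lemma swapPerm_ne_one (hne : i0 ≠ i1) : swapPerm i0 i1 ≠ (1 : Equiv.Perm (V n)) := by
  intro h
  have hx : swapPerm i0 i1 (Pi.single i0 1) = Pi.single i0 1 := by rw [h]; rfl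
  rw [swapPerm_fixed_iff] at hx
  rw [Pi.single_eq_same, Pi.single_eq_of_ne (Ne.symm hne)] at hx
  exact one_ne_zero hx

/-- The equivalence between vectors with equal `i0, i1` coordinates and functions on the
complement of `i0`. -/
def fixEquiv (hne : i1 ≠ i0) : {x : V n // x i0 = x i1} ≃ ({j : Fin n // j ≠ i0} → ZMod 3) where
  toFun x j := x.1 j.1
  invFun y := ⟨fun j => if h : j = i0 then y ⟨i1, hne⟩ else y ⟨j, h⟩, by
    simp [hne]⟩
  left_inv x := by
    apply Subtype.ext
    funext j
    show (if h : j = i0 then x.1 i1 else x.1 j) = x.1 j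
    by_cases h : j = i0
    · rw [dif_pos h, h]
      exact x.2.symm
    · rw [dif_neg h]
  right_inv y := by
    funext j
    obtain ⟨j, hj⟩ := j
    show (if h : j = i0 then y ⟨i1, hne⟩ else y ⟨j, h⟩) = y ⟨j, hj⟩
    rw [dif_neg hj]

lemma card_fixed (hne : i1 ≠ i0) :
    (Finset.univ.filter (fun x : V n => x i0 = x i1)).card = 3 ^ (n - 1) := by
  have h1 : (Finset.univ.filter (fun x : V n => x i0 = x i1)).card =
      Fintype.card {x : V n // x i0 = x i1} := (Fintype.card_subtype _).symm
  rw [h1, Fintype.card_congr (fixEquiv hne), Fintype.card_fun]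
  have h2 : Fintype.card {j : Fin n // j ≠ i0} = n - 1 := by
    rw [Fintype.card_subtype_compl, Fintype.card_subtype_eq, Fintype.card_fin]
  rw [h2, ZMod.card]

lemma card_V : Fintype.card (V n) = 3 ^ n := by
  rw [Fintype.card_fun, ZMod.card, Fintype.card_fin]

lemma swapPerm_support_card (hn : 2 ≤ n) (hne : i0 ≠ i1) :
    (swapPerm i0 i1 : Equiv.Perm (V n)).support.card = 2 * 3 ^ (n - 1) := by
  have hsupp : (swapPerm i0 i1 : Equiv.Perm (V n)).support =
      Finset.univ.filter (fun x => ¬(x i0 = x i1)) := by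
    ext x
    rw [Equiv.Perm.mem_support, Finset.mem_filter]
    constructor
    · intro h
      exact ⟨Finset.mem_univ x, fun he => h ((swapPerm_fixed_iff x).mpr he)⟩
    · rintro ⟨-, h⟩ he
      exact h ((swapPerm_fixed_iff x).mp he)
  rw [hsupp]
  have hsplit := Finset.card_filter_add_card_filter_not
    (s := (Finset.univ : Finset (V n))) (p := fun x => x i0 = x i1)
  rw [Finset.card_univ, card_V] at hsplit
  have h1 : (Finset.univ.filter (fun x : V n => x i0 = x i1)).card = 3 ^ (n - 1) :=
    card_fixed (Ne.symm hne)
  have hn1 : n - 1 + 1 = n := Nat.sub_add_cancel (le_trans (by norm_num) hn)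
  have h3 : 3 ^ n = 3 * 3 ^ (n - 1) := by
    calc 3 ^ n = 3 ^ (n - 1 + 1) := by rw [hn1]
    _ = 3 ^ (n - 1) * 3 := pow_succ 3 (n - 1)
    _ = 3 * 3 ^ (n - 1) := by ring
  rw [h1, h3] at hsplit
  have h4 : 3 * 3 ^ (n - 1) = 3 ^ (n - 1) + 2 * 3 ^ (n - 1) := by ring
  rw [h4] at hsplit
  exact Nat.add_left_cancel hsplit

lemma swapPerm_sign (hn : 2 ≤ n) (hne : i0 ≠ i1) :
    Equiv.Perm.sign (swapPerm i0 i1 : Equiv.Perm (V n)) = -1 := by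
  set E : Equiv.Perm (V n) := swapPerm i0 i1 with hE
  have horder : orderOf E = 2 := by
    apply orderOf_eq_prime
    · exact swapPerm_sq i0 i1
    · exact swapPerm_ne_one hne
  have hall2 : ∀ a ∈ E.cycleType, a = 2 := by
    intro a ha
    have hdvd : a ∣ 2 := by
      rw [← horder, ← Equiv.Perm.lcm_cycleType]
      exact Multiset.dvd_lcm ha
    have h2le : 2 ≤ a := Equiv.Perm.two_le_of_mem_cycleType ha
    exact Nat.le_antisymm (Nat.le_of_dvd (by norm_num) hdvd) h2le
  have hrep : E.cycleType = Multiset.replicate (Multiset.card E.cycleType) 2 :=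
    Multiset.eq_replicate_card.mpr hall2
  have hsum : E.cycleType.sum = 2 * Multiset.card E.cycleType := by
    rw [hrep, Multiset.sum_replicate, Multiset.card_replicate]
    ring
  have hsupport : E.cycleType.sum = 2 * 3 ^ (n - 1) := by
    rw [Equiv.Perm.sum_cycleType]
    exact swapPerm_support_card hn hne
  have hcard : Multiset.card E.cycleType = 3 ^ (n - 1) := by omega
  rw [Equiv.Perm.sign_of_cycleType, hsupport, hcard]
  have hodd : Odd (2 * 3 ^ (n - 1) + 3 ^ (n - 1)) := by
    have h3 : Odd (3 ^ (n - 1)) := Odd.pow (by decide)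
    obtain ⟨k, hk⟩ := h3
    exact ⟨3 * k + 1, by omega⟩
  exact Odd.neg_one_pow hodd

end Sign

/-- Three-cycles are `cycle3`s. -/
lemma isThreeCycle_eq_cycle3 {α : Type*} [Fintype α] [DecidableEq α] {σ : Equiv.Perm α}
    (h : σ.IsThreeCycle) :
    ∃ u s t : α, u ≠ s ∧ s ≠ t ∧ u ≠ t ∧ σ = cycle3 u s t := by
  have hcard : σ.support.card = 3 := h.card_support
  have hne : σ.support.Nonempty := Finset.card_pos.mp (by omega)
  obtain ⟨u, hu⟩ := hne
  set s := σ u with hs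
  set t := σ s with ht
  have hcube : ∀ x, σ (σ (σ x)) = x := by
    intro x
    have h3 : σ ^ 3 = 1 := by
      rw [← h.orderOf]
      exact pow_orderOf_eq_one σ
    have := Equiv.ext_iff.mp h3 x
    simpa [pow_succ, Equiv.Perm.mul_apply] using this
  have hsu : s ≠ u := Equiv.Perm.mem_support.mp hu
  have hts : t ≠ s := Equiv.Perm.mem_support.mp (Equiv.Perm.apply_mem_support.mpr hu)
  have htu : t ≠ u := by
    intro e
    apply hsu
    have h1 : σ t = σ u := congrArg σ e
    have h2 : σ t = u := by
      rw [ht, hs]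
      exact hcube u
    rw [h2] at h1
    rw [hs, ← h1]
  have hsubset : ({u, s, t} : Finset α) ⊆ σ.support := by
    intro x hx
    rw [Finset.mem_insert, Finset.mem_insert, Finset.mem_singleton] at hx
    rcases hx with rfl | rfl | rfl
    · exact hu
    · exact Equiv.Perm.apply_mem_support.mpr hu
    · exact Equiv.Perm.apply_mem_support.mpr (Equiv.Perm.apply_mem_support.mpr hu)
  have hcard3 : ({u, s, t} : Finset α).card = 3 := by
    rw [Finset.card_insert_of_notMem, Finset.card_insert_of_notMem, Finset.card_singleton]
    · simp only [Finset.mem_singleton]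
      exact Ne.symm hts
    · simp only [Finset.mem_insert, Finset.mem_singleton]
      rintro (e | e)
      · exact hsu e.symm
      · exact htu e.symm
  have hsupp_eq : σ.support = ({u, s, t} : Finset α) :=
    (Finset.eq_of_subset_of_card_le hsubset (by omega)).symm
  refine ⟨u, s, t, Ne.symm hsu, Ne.symm hts, Ne.symm htu, ?_⟩
  apply eq_cycle3 (Ne.symm hsu) (Ne.symm hts) (Ne.symm htu) rfl rfl
  · rw [ht, hs]
    exact hcube u
  · intro x hxu hxs hxt
    by_contra hmoved
    have : x ∈ σ.support := Equiv.Perm.mem_support.mpr hmoved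
    rw [hsupp_eq] at this
    rw [Finset.mem_insert, Finset.mem_insert, Finset.mem_singleton] at this
    rcases this with e | e | e
    · exact hxu e
    · exact hxs e
    · exact hxt e

end Aux

theorem swap_not_toffoli_universal (n : ℕ) (hn : 2 ≤ n) :
    Subgroup.closure (SNT n) = ⊤ := by
  have h0 : 0 < n := by omega
  have h1 : 1 < n := by omega
  set i0 : Fin n := ⟨0, h0⟩ with hi0
  set i1 : Fin n := ⟨1, h1⟩ with hi1
  have hne : i0 ≠ i1 := by
    intro e
    have := congrArg Fin.val e
    rw [hi0, hi1] at this
    exact absurd this (by norm_num)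
  have hEmem : Aux.swapPerm i0 i1 ∈ Subgroup.closure (SNT n) := Aux.swapPerm_mem hne
  have hsign := Aux.swapPerm_sign (i0 := i0) (i1 := i1) hn hne
  have h3cyc : ∀ σ : Equiv.Perm (V n), σ.IsThreeCycle → σ ∈ Subgroup.closure (SNT n) := by
    intro σ hσ
    obtain ⟨u, s, t, hus, hst, hut, rfl⟩ := Aux.isThreeCycle_eq_cycle3 hσ
    exact Aux.cycle3_mem_closure hn (hetCols u s t).card u s t hus hst hut le_rfl
  have hAlt : alternatingGroup (V n) ≤ Subgroup.closure (SNT n) := by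
    rw [← Equiv.Perm.closure_three_cycles_eq_alternating]
    apply (Subgroup.closure_le _).mpr
    intro σ hσ
    exact h3cyc σ hσ
  rw [eq_top_iff]
  intro σ _
  rcases Int.units_eq_one_or (Equiv.Perm.sign σ) with hs | hs
  · exact hAlt (Equiv.Perm.mem_alternatingGroup.mpr hs)
  · have hprod : Equiv.Perm.sign (σ * Aux.swapPerm i0 i1) = 1 := by
      rw [map_mul, hs, hsign]
      decide
    have hmem := hAlt (Equiv.Perm.mem_alternatingGroup.mpr hprod)
    have hfac : σ = (σ * Aux.swapPerm i0 i1) * (Aux.swapPerm i0 i1)⁻¹ := by group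
    rw [hfac]
    exact Subgroup.mul_mem _ hmem (Subgroup.inv_mem _ hEmem)
end

section
/- For n ≥ 2 and 1 ≤ i ≠ j ≤ n, the ternary Swap gate satisfies E_{i,j} = MT_i ∘ C_{j,i} ∘ C_{i,j} ∘ C_{i,j} ∘ MT_j ∘ C_{i,j} ∘ C_{j,i} ∘ C_{j,i} ∘ MT_i ∘ C_{j,i} ∘ C_{i,j} ∘ C_{i,j}, where composition is applied left-to-right (the leftmost gate acts first). -/
open Equiv

/-- State with coordinates `i`, `j` replaced by `a`, `b`. -/
def pairState {n : ℕ} (i j : Fin n) (x : V n) (a b : ZMod 3) : V n :=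
  fun r => if r = i then a else if r = j then b else x r

section aux
variable {n : ℕ} {i j : Fin n} {x : V n} {a b : ZMod 3}

lemma cnot_pair_ij (hij : i ≠ j) :
    cnotFun i j (pairState i j x a b) = pairState i j x (if b = 1 then a + 1 else a) b := by
  funext r
  simp only [cnotFun, pairState, Function.update_apply, if_neg (Ne.symm hij), if_pos rfl]
  by_cases hb : b = 1 <;> by_cases hri : r = i <;> by_cases hrj : r = j <;>
    simp_all [pairState, Function.update_apply, Ne.symm hij]

lemma cnot_pair_ji (hij : i ≠ j) :
    cnotFun j i (pairState i j x a b) = pairState i j x a (if a = 1 then b + 1 else b) := by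
  funext r
  simp only [cnotFun, pairState, Function.update_apply, if_pos rfl]
  by_cases ha : a = 1 <;> by_cases hri : r = i <;> by_cases hrj : r = j <;>
    simp_all [pairState, Function.update_apply, Ne.symm hij]

lemma mt_pair_i (hij : i ≠ j) :
    mtFun i (pairState i j x a b) = pairState i j x (2 * a) b := by
  funext r
  simp only [mtFun, pairState, Function.update_apply, if_pos rfl]
  by_cases hri : r = i <;> simp_all [pairState, Function.update_apply]

lemma mt_pair_j (hij : i ≠ j) :
    mtFun j (pairState i j x a b) = pairState i j x a (2 * b) := by
  funext r
  simp only [mtFun, pairState, Function.update_apply, if_neg (Ne.symm hij), if_pos rfl]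
  by_cases hri : r = i <;> by_cases hrj : r = j <;> simp_all [pairState, Function.update_apply, Ne.symm hij]

end aux

theorem swap_eq_mt_cnot_product (n : ℕ) (hn : 2 ≤ n) (i j : Fin n) (hij : i ≠ j)
    (x : V n) :
    swapFun i j x =
      cnotFun i j (cnotFun i j (cnotFun j i (mtFun i
        (cnotFun j i (cnotFun j i (cnotFun i j (mtFun j
          (cnotFun i j (cnotFun i j (cnotFun j i (mtFun i x))))))))))) := by
  have L0 : x = pairState i j x (x i) (x j) := by
    funext r
    simp only [pairState]
    split_ifs <;> simp_all
  have L5 : swapFun i j x = pairState i j x (x j) (x i) := rfl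
  rw [L5]
  conv_rhs => rw [L0]
  rw [mt_pair_i hij, cnot_pair_ji hij, cnot_pair_ij hij, cnot_pair_ij hij,
    mt_pair_j hij, cnot_pair_ij hij, cnot_pair_ji hij, cnot_pair_ji hij,
    mt_pair_i hij, cnot_pair_ji hij, cnot_pair_ij hij, cnot_pair_ij hij]
  have pair_congr : ∀ a a' b b' : ZMod 3, a = a' → b = b' →
      pairState i j x a b = pairState i j x a' b' := by
    rintro _ _ _ _ rfl rfl; rfl
  apply pair_congr
  · generalize x i = a; generalize x j = b; revert a b; decide
  · generalize x i = a; generalize x j = b; revert a b; decide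
end

section
/- For n ≥ 2, the ternary Not gates, Controlled-Not gates, Multiply-Two gates, and the ternary Toffoli gate together generate the full symmetric group Sym({0,1,2}^n); i.e. every n×n ternary reversible circuit is a composition of these gates. -/
open Equiv

/-- The set of Not, Controlled-Not, Multiply-Two and Toffoli gates, as permutations. -/
def NCMT (n : ℕ) : Set (Equiv.Perm (V n)) :=
  {g | (∃ j : Fin n, ∀ x, g x = notFun j x) ∨
       (∃ j i : Fin n, j ≠ i ∧ ∀ x, g x = cnotFun j i x) ∨
       (∃ i : Fin n, ∀ x, g x = mtFun i x) ∨
       (∀ x, g x = toffoliFun x)}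

/- ### cycle3 lemmas -/
section Cycle3
variable {α : Type*} [DecidableEq α] (a b c : α)

lemma cycle3_apply_left (hba : b ≠ a) (hbc : b ≠ c) : cycle3 a b c a = b := by
  simp [cycle3, Perm.mul_apply, swap_apply_of_ne_of_ne hba hbc]

lemma cycle3_apply_mid : cycle3 a b c b = c := by
  by_cases hba : b = a
  · subst hba; simp [cycle3, Perm.mul_apply]
  · simp [cycle3, Perm.mul_apply, swap_apply_of_ne_of_ne, Equiv.swap_apply_right,
      show b ≠ a from hba]

lemma cycle3_apply_right (hca : c ≠ a) (hcb : c ≠ b) : cycle3 a b c c = a := by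
  simp [cycle3, Perm.mul_apply, swap_apply_of_ne_of_ne hca hcb]

lemma cycle3_apply_other {x : α} (hxa : x ≠ a) (hxb : x ≠ b) (hxc : x ≠ c) :
    cycle3 a b c x = x := by
  simp [cycle3, Perm.mul_apply, swap_apply_of_ne_of_ne hxa hxb,
    swap_apply_of_ne_of_ne hxa hxc]

lemma cycle3_conj (g : Perm α) : g * cycle3 a b c * g⁻¹ = cycle3 (g a) (g b) (g c) := by
  simp only [cycle3, swap_apply_apply]
  group

end Cycle3

/- ### ZMod 3 and Pi facts -/
lemma zmod3_cases : ∀ c : ZMod 3, c = 0 ∨ c = 1 ∨ c = 2 := by decide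

namespace TernaryUniversal
variable {n : ℕ}

lemma addRight_add (a b : V n) :
    Equiv.addRight (a + b) = Equiv.addRight a * Equiv.addRight b := by
  ext x
  simp [Perm.mul_apply, add_assoc, add_comm a b]

/- ### gate permutations -/

def notP (j : Fin n) : Perm (V n) := Equiv.addRight (Pi.single j 1)

lemma notP_eq (j : Fin n) (x : V n) : notP j x = notFun j x := by
  funext r
  by_cases h : r = j <;> simp [notP, notFun, Function.update_apply, Pi.single_apply, h]

def cnotP (j i : Fin n) (h : j ≠ i) : Perm (V n) where
  toFun := cnotFun j i
  invFun x := if x i = 1 then Function.update x j (x j - 1) else x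
  left_inv x := by
    by_cases hx : x i = 1 <;>
      simp [cnotFun, hx, Function.update_of_ne (Ne.symm h), Function.update_idem]
  right_inv x := by
    by_cases hx : x i = 1 <;>
      simp [cnotFun, hx, Function.update_of_ne (Ne.symm h), Function.update_idem]

lemma cnotP_eq (j i : Fin n) (h : j ≠ i) (x : V n) : cnotP j i h x = cnotFun j i x := rfl

lemma mtFun_invol (i : Fin n) : Function.Involutive (mtFun (n := n) i) := by
  intro x
  funext r
  by_cases h : r = i
  · subst h
    simp [mtFun, Function.update_idem]
    ring_nf
    rw [show ((4 : ZMod 3)) = 1 by decide]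
    ring
  · simp [mtFun, Function.update_of_ne h]

def mtP (i : Fin n) : Perm (V n) := (mtFun_invol i).toPerm

lemma mtP_eq (i : Fin n) (x : V n) : mtP i x = mtFun i x := rfl

def uPt (n : ℕ) (k : ZMod 3) : V n := fun r => if r.val = 0 then k else 1

def toffoliP (n : ℕ) : Perm (V n) := cycle3 (uPt n 0) (uPt n 1) (uPt n 2)

lemma uPt_inj (hn : 0 < n) {k l : ZMod 3} (h : uPt n k = uPt n l) : k = l := by
  have := congrFun h ⟨0, hn⟩
  simpa [uPt] using this

lemma toffoliP_eq (hn : 0 < n) (x : V n) : toffoliP n x = toffoliFun x := by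
  by_cases hx : ∀ r : Fin n, 0 < r.val → x r = 1
  · have hxu : x = uPt n (x ⟨0, hn⟩) := by
      funext r
      by_cases hr : r.val = 0
      · have : r = ⟨0, hn⟩ := Fin.ext hr
        subst this; simp [uPt]
      · simp [uPt, hr, hx r (by omega)]
    have hne : ∀ k l : ZMod 3, k ≠ l → uPt n k ≠ uPt n l := by
      intro k l hkl h; exact hkl (uPt_inj hn h)
    have htf : toffoliFun x = uPt n (x ⟨0, hn⟩ + 1) := by
      rw [toffoliFun, if_pos hx]
      funext r
      by_cases hr : r.val = 0
      · have : r = ⟨0, hn⟩ := Fin.ext hr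
        subst this; simp [uPt]
      · simp [uPt, hr, hx r (by omega)]
    rw [htf]
    rcases zmod3_cases (x ⟨0, hn⟩) with h0 | h0 | h0 <;>
      rw [show x = uPt n (x ⟨0, hn⟩) from hxu] <;> rw [h0] <;> unfold toffoliP
    · rw [cycle3_apply_left _ _ _ (hne _ _ (by decide)) (hne _ _ (by decide))]
      norm_num [uPt]
    · rw [cycle3_apply_mid]
      norm_num [uPt]
    · rw [cycle3_apply_right _ _ _ (hne _ _ (by decide)) (hne _ _ (by decide)),
        show uPt n 2 ⟨0, hn⟩ + 1 = 0 from by simp only [uPt]; norm_num; decide]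
  · push_neg at hx
    obtain ⟨r, hr, hxr⟩ := hx
    have hne : ∀ k : ZMod 3, x ≠ uPt n k := by
      intro k h
      apply hxr
      rw [h]
      simp only [uPt]
      rw [if_neg (by omega)]
    rw [toffoliFun, if_neg (by push_neg; exact ⟨r, hr, hxr⟩)]
    exact cycle3_apply_other _ _ _ (hne 0) (hne 1) (hne 2)

end TernaryUniversal

namespace TernaryUniversal
variable {n : ℕ}

/- ### membership in the closure -/

abbrev H (n : ℕ) : Subgroup (Perm (V n)) := Subgroup.closure (NCMT n)

lemma notP_mem (j : Fin n) : notP j ∈ H n :=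
  Subgroup.subset_closure (Or.inl ⟨j, notP_eq j⟩)

lemma cnotP_mem (j i : Fin n) (h : j ≠ i) : cnotP j i h ∈ H n :=
  Subgroup.subset_closure (Or.inr (Or.inl ⟨j, i, h, cnotP_eq j i h⟩))

lemma mtP_mem (i : Fin n) : mtP i ∈ H n :=
  Subgroup.subset_closure (Or.inr (Or.inr (Or.inl ⟨i, mtP_eq i⟩)))

lemma toffoliP_mem (hn : 0 < n) : toffoliP n ∈ H n :=
  Subgroup.subset_closure (Or.inr (Or.inr (Or.inr (toffoliP_eq hn))))

lemma single_mem (j : Fin n) (c : ZMod 3) : Equiv.addRight (Pi.single j c) ∈ H n := by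
  rcases zmod3_cases c with rfl | rfl | rfl
  · have : Equiv.addRight ((Pi.single j (0 : ZMod 3) : V n)) = (1 : Perm (V n)) := by
      ext x; simp
    rw [this]; exact one_mem _
  · exact notP_mem j
  · have h2 : (Pi.single j (2 : ZMod 3) : V n) = Pi.single j 1 + Pi.single j 1 := by
      rw [← Pi.single_add]; norm_num
    rw [h2, addRight_add]
    exact mul_mem (notP_mem j) (notP_mem j)

lemma trans_mem (v : V n) : Equiv.addRight v ∈ H n := by
  classical
  suffices key : ∀ s : Finset (Fin n), ∀ v : V n, (∀ j, j ∉ s → v j = 0) →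
      Equiv.addRight v ∈ H n by
    exact key Finset.univ v (by simp)
  intro s
  induction s using Finset.induction_on with
  | empty =>
    intro v hv
    have hv0 : v = 0 := funext fun j => hv j (by simp)
    subst hv0
    have : Equiv.addRight (0 : V n) = (1 : Perm (V n)) := by ext x; simp
    rw [this]; exact one_mem _
  | @insert j s hj ih =>
    intro v hv
    have hsplit : v = Function.update v j 0 + Pi.single j (v j) := by
      funext r
      by_cases hr : r = j
      · subst hr; simp
      · simp [Function.update_of_ne hr, Pi.single_eq_of_ne hr]
    rw [hsplit, addRight_add]
    refine mul_mem (ih _ fun q hq => ?_) (single_mem j (v j))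
    by_cases hqj : q = j
    · subst hqj; simp
    · rw [Function.update_of_ne hqj]
      exact hv q (by simp [hqj, hq])

/- ### controlled-add-on-value gates -/

lemma cnotFun_eq_add (j i : Fin n) (hj : j ≠ i) (x : V n) :
    cnotFun j i x = if x i = 1 then x + Pi.single j 1 else x := by
  unfold cnotFun
  split
  · funext r
    by_cases hr : r = j <;>
      simp [Function.update_apply, Pi.single_apply, hr]
  · rfl

def addIfP (q r : Fin n) (h : q ≠ r) (a : ZMod 3) : Perm (V n) :=
  Equiv.addRight (Pi.single r (a - 1)) * cnotP q r h * Equiv.addRight (Pi.single r (1 - a))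

lemma addIfP_mem (q r : Fin n) (h : q ≠ r) (a : ZMod 3) : addIfP q r h a ∈ H n :=
  mul_mem (mul_mem (trans_mem _) (cnotP_mem q r h)) (trans_mem _)

lemma addIfP_apply (q r : Fin n) (h : q ≠ r) (a : ZMod 3) (x : V n) :
    addIfP q r h a x = if x r = a then x + Pi.single q 1 else x := by
  have key : ((x + Pi.single r (1 - a) : V n)) r = 1 ↔ x r = a := by
    rw [Pi.add_apply, Pi.single_eq_same]
    constructor <;> intro h' <;> linear_combination h'
  simp only [addIfP, Perm.mul_apply, coe_addRight, cnotP_eq,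
    cnotFun_eq_add q r h]
  by_cases hx : x r = a
  · rw [if_pos (key.mpr hx), if_pos hx, add_assoc, add_assoc]
    congr 1
    rw [show (Pi.single r (1-a) + (Pi.single q 1 + Pi.single r (a-1)) : V n)
        = (Pi.single r (1-a) + Pi.single r (a-1)) + Pi.single q 1 from by abel,
      ← Pi.single_add, show (1-a)+(a-1) = (0:ZMod 3) from by ring, Pi.single_zero, zero_add]
  · rw [if_neg (fun hc => hx (key.mp hc)), if_neg hx, add_assoc, ← Pi.single_add,
      show (1 - a) + (a - 1) = (0 : ZMod 3) from by ring, Pi.single_zero, add_zero]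

/- ### transvection x_q += x_r -/

def tvP (q r : Fin n) (h : q ≠ r) : Perm (V n) :=
  addIfP q r h 1 * (addIfP q r h 2 * addIfP q r h 2)

lemma tvP_mem (q r : Fin n) (h : q ≠ r) : tvP q r h ∈ H n :=
  mul_mem (addIfP_mem q r h 1) (mul_mem (addIfP_mem q r h 2) (addIfP_mem q r h 2))

lemma tvP_apply (q r : Fin n) (h : q ≠ r) (x : V n) :
    tvP q r h x = x + Pi.single q (x r) := by
  rcases zmod3_cases (x r) with h0 | h0 | h0
  · have s1 : addIfP q r h 2 x = x := by
      rw [addIfP_apply, if_neg (by rw [h0]; decide)]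
    rw [tvP, Perm.mul_apply, Perm.mul_apply, s1, s1, addIfP_apply,
      if_neg (by rw [h0]; decide), h0, Pi.single_zero, add_zero]
  · have s1 : addIfP q r h 2 x = x := by
      rw [addIfP_apply, if_neg (by rw [h0]; decide)]
    rw [tvP, Perm.mul_apply, Perm.mul_apply, s1, s1, addIfP_apply, if_pos h0, h0]
  · have hy1 : ((x + Pi.single q (1 : ZMod 3) : V n)) r = 2 := by
      rw [Pi.add_apply, Pi.single_eq_of_ne (Ne.symm h), add_zero, h0]
    have hy2 : ((x + Pi.single q (1 : ZMod 3) + Pi.single q (1 : ZMod 3) : V n)) r = 2 := by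
      rw [Pi.add_apply, Pi.single_eq_of_ne (Ne.symm h), add_zero, hy1]
    have s1 : addIfP q r h 2 x = x + Pi.single q 1 := by
      rw [addIfP_apply, if_pos h0]
    have s2 : addIfP q r h 2 (x + Pi.single q 1) = x + Pi.single q 1 + Pi.single q 1 := by
      rw [addIfP_apply, if_pos hy1]
    rw [tvP, Perm.mul_apply, Perm.mul_apply, s1, s2, addIfP_apply,
      if_neg (by rw [hy2]; decide), h0, add_assoc, ← Pi.single_add]
    norm_num

end TernaryUniversal

namespace TernaryUniversal
variable {n : ℕ}

/- ### coordinate swap -/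

def swE (i j : Fin n) (hij : i ≠ j) : Perm (V n) :=
  mtP j * tvP i j hij * tvP j i hij.symm * tvP j i hij.symm * tvP i j hij

lemma swE_mem (i j : Fin n) (hij : i ≠ j) : swE i j hij ∈ H n := by
  unfold swE
  exact mul_mem (mul_mem (mul_mem (mul_mem (mtP_mem j) (tvP_mem _ _ _)) (tvP_mem _ _ _))
    (tvP_mem _ _ _)) (tvP_mem _ _ _)

lemma swE_apply (i j : Fin n) (hij : i ≠ j) (x : V n) :
    swE i j hij x = swapFun i j x := by
  have hji := hij.symm
  simp only [swE, Perm.mul_apply, tvP_apply, mtP_eq]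
  funext r
  simp only [mtFun, swapFun, Function.update_apply, Pi.add_apply, Pi.single_apply]
  rcases eq_or_ne r i with rfl | hri <;> rcases eq_or_ne r j with rfl | hrj
  · exact absurd rfl hij
  · simp only [if_pos rfl, if_neg hij, if_neg hji, if_true, add_zero, zero_add]
    ring_nf
    have h3 : (3 : ZMod 3) = 0 := by decide
    linear_combination (x r + x j) * h3
  · simp only [if_pos rfl, if_neg hij, if_neg hji, if_true, add_zero, zero_add]
    ring_nf
    have h3 : (3 : ZMod 3) = 0 := by decide
    linear_combination (2 * x r + x i) * h3
  · simp only [if_neg hri, if_neg hrj, if_true, add_zero, zero_add]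

end TernaryUniversal

set_option maxRecDepth 8000

namespace TernaryUniversal
variable {n : ℕ}

lemma cycle3_conj_mem {a b c : V n} {g : Perm (V n)} (hg : g ∈ H n)
    (h : cycle3 a b c ∈ H n) : cycle3 (g a) (g b) (g c) ∈ H n := by
  rw [← cycle3_conj]
  exact mul_mem (mul_mem hg h) (inv_mem hg)

lemma swapFun_add (i j : Fin n) (x y : V n) :
    swapFun i j (x + y) = swapFun i j x + swapFun i j y := by
  funext r
  simp only [swapFun, Pi.add_apply]
  split_ifs <;> rfl

lemma swapFun_single (i j : Fin n) (hij : i ≠ j) (k : ZMod 3) :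
    swapFun i j (Pi.single i k) = Pi.single j k := by
  funext r
  simp only [swapFun, Pi.single_apply]
  split_ifs with h1 h2 <;> simp_all

lemma mtFun_add (i : Fin n) (x y : V n) :
    mtFun i (x + y) = mtFun i x + mtFun i y := by
  funext r
  by_cases h : r = i
  · subst h; simp [mtFun]; ring
  · simp [mtFun, Function.update_of_ne h]

lemma mtFun_single_same (i : Fin n) (k : ZMod 3) :
    mtFun i (Pi.single i k) = Pi.single i (2 * k) := by
  funext r
  by_cases h : r = i
  · subst h; simp [mtFun]
  · simp [mtFun, Function.update_of_ne h, Pi.single_eq_of_ne h]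

lemma uPt_succ (h0 : 0 < n) (k : ZMod 3) :
    uPt n (k + 1) = uPt n k + Pi.single (⟨0, h0⟩ : Fin n) 1 := by
  funext r
  by_cases hr : r = ⟨0, h0⟩
  · subst hr; simp [uPt]
  · have : r.val ≠ 0 := fun hc => hr (Fin.ext hc)
    simp [uPt, this, Pi.single_eq_of_ne hr]

lemma line_e0_mem (h0 : 0 < n) (u : V n) :
    cycle3 u (u + Pi.single (⟨0, h0⟩ : Fin n) 1)
      (u + (Pi.single (⟨0, h0⟩ : Fin n) 1 + Pi.single (⟨0, h0⟩ : Fin n) 1)) ∈ H n := by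
  set i0 : Fin n := ⟨0, h0⟩
  have hm := cycle3_conj_mem (g := Equiv.addRight (u - uPt n 0)) (trans_mem _)
    (toffoliP_mem h0)
  have e0 : (Equiv.addRight (u - uPt n 0)) (uPt n 0) = u := by
    simp
  have e1 : (Equiv.addRight (u - uPt n 0)) (uPt n 1) = u + Pi.single i0 1 := by
    rw [coe_addRight, show (1 : ZMod 3) = 0 + 1 from by norm_num, uPt_succ h0]
    norm_num
    abel
  have e2 : (Equiv.addRight (u - uPt n 0)) (uPt n 2) =
      u + (Pi.single i0 1 + Pi.single i0 1) := by
    rw [coe_addRight, show (2 : ZMod 3) = 0 + 1 + 1 from by norm_num, uPt_succ h0,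
      uPt_succ h0]
    norm_num
    abel
  rw [e0, e1, e2] at hm
  exact hm

lemma line_single_mem (h0 : 0 < n) (r : Fin n) (c : ZMod 3) (hc : c ≠ 0) (u : V n) :
    cycle3 u (u + Pi.single r c) (u + (Pi.single r c + Pi.single r c)) ∈ H n := by
  set i0 : Fin n := ⟨0, h0⟩ with hi0
  have key1 : ∀ u : V n, cycle3 u (u + Pi.single r 1)
      (u + (Pi.single r 1 + Pi.single r 1)) ∈ H n := by
    intro u
    by_cases hr : r = i0
    · subst hr; exact line_e0_mem h0 u
    · have hir : i0 ≠ r := fun h => hr h.symm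
      set g := swE i0 r hir with hg
      have hadd : ∀ (y : V n) (k : ZMod 3),
          g (y + Pi.single i0 k) = g y + Pi.single r k := by
        intro y k
        rw [hg, swE_apply, swE_apply, swapFun_add, swapFun_single i0 r hir]
      set u' := g.symm u with hu'
      have egu : g u' = u := by rw [hu']; exact Equiv.apply_symm_apply g u
      have e1 : g (u' + Pi.single i0 1) = u + Pi.single r 1 := by
        rw [hadd, egu]
      have e2 : g (u' + (Pi.single i0 1 + Pi.single i0 1)) =
          u + (Pi.single r 1 + Pi.single r 1) := by
        rw [← add_assoc, hadd, hadd, egu, add_assoc]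
      have hm := cycle3_conj_mem (swE_mem i0 r hir) (line_e0_mem h0 u')
      rw [egu, e1, e2] at hm
      exact hm
  rcases zmod3_cases c with rfl | rfl | rfl
  · exact absurd rfl hc
  · exact key1 u
  · set g := mtP r with hg
    have hadd : ∀ (y : V n) (k : ZMod 3),
        g (y + Pi.single r k) = g y + Pi.single r (2 * k) := by
      intro y k
      rw [hg, mtP_eq, mtP_eq, mtFun_add, mtFun_single_same]
    set u' := g.symm u with hu'
    have egu : g u' = u := by rw [hu']; exact Equiv.apply_symm_apply g u
    have e1 : g (u' + Pi.single r 1) = u + Pi.single r 2 := by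
      rw [hadd, egu]; norm_num
    have e2 : g (u' + (Pi.single r 1 + Pi.single r 1)) =
        u + (Pi.single r 2 + Pi.single r 2) := by
      rw [← add_assoc, hadd, hadd, egu, add_assoc, ← Pi.single_add, ← Pi.single_add]
      norm_num
    have hm := cycle3_conj_mem (mtP_mem r) (key1 u')
    rw [egu, e1, e2] at hm
    exact hm

lemma line_mem (h0 : 0 < n) (w : V n) (hw : w ≠ 0) (u : V n) :
    cycle3 u (u + w) (u + (w + w)) ∈ H n := by
  classical
  obtain ⟨k, hk⟩ : ∃ k, (Finset.univ.filter (fun j => w j ≠ 0)).card ≤ k := ⟨_, le_refl _⟩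
  induction k generalizing w u with
  | zero =>
    exfalso
    apply hw
    funext j
    rw [Pi.zero_apply]
    by_contra hj
    have : j ∈ Finset.univ.filter (fun j => w j ≠ 0) := by simp [hj]
    have := Finset.card_pos.mpr ⟨j, this⟩
    omega
  | succ k ih =>
    obtain ⟨r, hr⟩ : ∃ r, w r ≠ 0 := by
      by_contra hc
      push_neg at hc
      exact hw (funext fun j => hc j)
    by_cases hsingle : ∀ q, q ≠ r → w q = 0
    · have hw1 : w = Pi.single r (w r) := by
        funext j
        by_cases hj : j = r
        · subst hj; simp
        · rw [Pi.single_eq_of_ne hj]; exact hsingle j hj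
      rw [hw1]
      exact line_single_mem h0 r (w r) hr u
    · push_neg at hsingle
      obtain ⟨q, hqr, hwq⟩ := hsingle
      set w' := Function.update w q 0 with hw'def
      have hw'r : w' r = w r := Function.update_of_ne (Ne.symm hqr) _ _
      have hw' : w' ≠ 0 := by
        intro hc
        apply hr
        rw [← hw'r, hc]
        rfl
      have hcard : (Finset.univ.filter (fun j => w' j ≠ 0)).card ≤ k := by
        have hsub : (Finset.univ.filter (fun j => w' j ≠ 0)) ⊆
            (Finset.univ.filter (fun j => w j ≠ 0)).erase q := by
          intro j hj
          simp only [Finset.mem_filter, Finset.mem_univ, true_and] at hj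
          rcases eq_or_ne j q with rfl | hjq
          · exact absurd (by simp [hw'def]) hj
          · rw [Finset.mem_erase]
            refine ⟨hjq, ?_⟩
            simp only [Finset.mem_filter, Finset.mem_univ, true_and]
            rwa [hw'def, Function.update_of_ne hjq] at hj
        have h1 := Finset.card_le_card hsub
        have h2 := Finset.card_erase_of_mem
          (show q ∈ Finset.univ.filter (fun j => w j ≠ 0) from by simp [hwq])
        omega
      -- the multiplier
      set c := w q * w r with hc
      have hrr : w r * w r = 1 := by
        rcases zmod3_cases (w r) with h | h | h
        · exact absurd h hr
        · rw [h]; decide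
        · rw [h]; decide
      have hcwr : c * w' r = w q := by
        rw [hw'r, hc, mul_assoc, hrr, mul_one]
      have hcne : c ≠ 0 := mul_ne_zero hwq hr
      -- T with T y = y + single q (c * y r)
      obtain ⟨T, hTmem, hTapp⟩ : ∃ T : Perm (V n), T ∈ H n ∧
          ∀ y : V n, T y = y + Pi.single q (c * y r) := by
        rcases zmod3_cases c with h | h | h
        · exact absurd h hcne
        · refine ⟨tvP q r hqr, tvP_mem q r hqr, fun y => ?_⟩
          rw [tvP_apply, h, one_mul]
        · refine ⟨tvP q r hqr * tvP q r hqr, mul_mem (tvP_mem q r hqr) (tvP_mem q r hqr),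
            fun y => ?_⟩
          rw [Perm.mul_apply, tvP_apply, tvP_apply, h]
          have : ((y + Pi.single q (y r) : V n)) r = y r := by
            rw [Pi.add_apply, Pi.single_eq_of_ne (Ne.symm hqr), add_zero]
          rw [this, add_assoc, ← Pi.single_add, two_mul]
      have key : ∀ y z : V n, T (y + z) = T y + (z + Pi.single q (c * z r)) := by
        intro y z
        rw [hTapp, hTapp]
        have : c * ((y + z : V n)) r = c * y r + c * z r := by
          rw [Pi.add_apply]; ring
        rw [this, Pi.single_add]
        abel
      have hww' : w = w' + Pi.single q (c * w' r) := by
        rw [hcwr]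
        funext j
        rcases eq_or_ne j q with rfl | hjq
        · simp [hw'def]
        · rw [Pi.add_apply, Pi.single_eq_of_ne hjq, add_zero, hw'def,
            Function.update_of_ne hjq]
      set u'' := T.symm u with hu''
      have egu : T u'' = u := by rw [hu'']; exact Equiv.apply_symm_apply T u
      have e1 : T (u'' + w') = u + w := by rw [key, egu, ← hww']
      have e2 : T (u'' + (w' + w')) = u + (w + w) := by
        rw [key, egu]
        congr 1
        have : c * ((w' + w' : V n)) r = c * w' r + c * w' r := by
          rw [Pi.add_apply]; ring
        rw [this, Pi.single_add, hww']
        abel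
      have hm := cycle3_conj_mem hTmem (ih w' hw' u'' hcard)
      rw [egu, e1, e2] at hm
      exact hm

end TernaryUniversal

namespace TernaryUniversal
variable {n : ℕ}

lemma h3v (v : V n) : v + v + v = 0 := by
  funext r
  simp only [Pi.add_apply, Pi.zero_apply]
  exact (by decide : ∀ a : ZMod 3, a + a + a = 0) (v r)

lemma cycle3_mem (h0 : 0 < n) {u s t : V n} (hus : u ≠ s) (hut : u ≠ t) (hst : s ≠ t) :
    cycle3 u s t ∈ H n := by
  have hdz : ∀ v : V n, v + v = 0 → v = 0 := by
    intro v hv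
    have h := h3v v
    rw [hv, zero_add] at h
    exact h
  have hw1 : s - u ≠ 0 := sub_ne_zero.mpr (Ne.symm hus)
  have hw2 : t - u ≠ 0 := sub_ne_zero.mpr (Ne.symm hut)
  by_cases hdep : t - u = (s - u) + (s - u)
  · have hm := line_mem h0 (s - u) hw1 u
    rw [show u + (s - u) = s from by abel,
      show u + ((s - u) + (s - u)) = t from by rw [← hdep]; abel] at hm
    exact hm
  · obtain ⟨p, hp⟩ : ∃ p : V n, p = u + ((s - u) + (s - u)) := ⟨_, rfl⟩
    obtain ⟨d, hd⟩ : ∃ d : V n, d = t - p := ⟨_, rfl⟩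
    have hdne : d ≠ 0 := by
      intro hc
      apply hdep
      linear_combination hc - hd + hp
    have hm0 := line_mem h0 d hdne p
    have hσ := line_mem h0 (s - u) hw1 u
    rw [show u + (s - u) = s from by abel, ← hp] at hσ
    have hm := cycle3_conj_mem hm0 hσ
    have egu : cycle3 p (p + d) (p + (d + d)) u = u := by
      apply cycle3_apply_other
      · intro hc; exact hw1 (hdz _ (by linear_combination -hc - hp))
      · intro hc; exact hut (by linear_combination hc + hd)
      · intro hc; exact hst (by linear_combination 2 * hc + 4 * hd - 2 * hp + h3v (t - s))
    have egs : cycle3 p (p + d) (p + (d + d)) s = s := by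
      apply cycle3_apply_other
      · intro hc; exact hw1 (by linear_combination -hc - hp)
      · intro hc; exact hst (by linear_combination hc + hd)
      · intro hc; exact hw2 (by linear_combination hc + 2 * hd - hp + h3v (t - s))
    have egp : cycle3 p (p + d) (p + (d + d)) p = p + d := by
      apply cycle3_apply_left
      · intro hc; exact hdne (by linear_combination hc)
      · intro hc; exact hdne (by linear_combination -hc)
    have hpdt : p + d = t := by linear_combination hd
    rw [egu, egs, egp, hpdt] at hm
    exact hm

lemma threeCycle_mem (h0 : 0 < n) {σ : Perm (V n)} (hσ : σ.IsThreeCycle) : σ ∈ H n := by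
  classical
  have hcard := hσ.card_support
  have hcube : σ ^ 3 = 1 := by rw [← hσ.orderOf]; exact pow_orderOf_eq_one σ
  obtain ⟨a, ha⟩ : ∃ a, a ∈ σ.support := Finset.card_pos.mp (by rw [hcard]; norm_num)
  have hσa : σ a ≠ a := Perm.mem_support.mp ha
  have hbsupp : σ a ∈ σ.support := (Perm.apply_mem_support).mpr ha
  have hσb : σ (σ a) ≠ σ a := Perm.mem_support.mp hbsupp
  have h3a : σ (σ (σ a)) = a := by
    have h := congrArg (fun τ : Perm (V n) => τ a) hcube
    simpa [pow_succ, Perm.mul_apply] using h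
  have hca : σ (σ a) ≠ a := by
    intro hca
    exact hσa (by nth_rewrite 1 [← hca]; rw [h3a])
  have hsub : ({a, σ a, σ (σ a)} : Finset (V n)) ⊆ σ.support := by
    intro x hx
    simp only [Finset.mem_insert, Finset.mem_singleton] at hx
    rcases hx with rfl | rfl | rfl
    · exact ha
    · exact hbsupp
    · exact (Perm.apply_mem_support).mpr hbsupp
  have hc3 : ({a, σ a, σ (σ a)} : Finset (V n)).card = 3 := by
    rw [Finset.card_insert_of_notMem (by
        intro hmem
        rcases Finset.mem_insert.mp hmem with h | h
        · exact Ne.symm hσa h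
        · exact Ne.symm hca (Finset.mem_singleton.mp h)),
      Finset.card_insert_of_notMem (by
        intro hmem
        exact Ne.symm hσb (Finset.mem_singleton.mp hmem)), Finset.card_singleton]
  have hsupp : σ.support = {a, σ a, σ (σ a)} :=
    (Finset.eq_of_subset_of_card_le hsub (by rw [hcard, hc3])).symm
  have hσeq : σ = cycle3 a (σ a) (σ (σ a)) := by
    apply Equiv.ext
    intro x
    by_cases hxa : x = a
    · subst hxa
      rw [cycle3_apply_left _ _ _ hσa (Ne.symm hσb)]
    · by_cases hxb : x = σ a
      · subst hxb
        rw [cycle3_apply_mid]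
      · by_cases hxc : x = σ (σ a)
        · subst hxc
          rw [cycle3_apply_right _ _ _ hca hσb, h3a]
        · have hxs : x ∉ σ.support := by
            rw [hsupp]
            simp [hxa, hxb, hxc]
          rw [Perm.notMem_support.mp hxs, cycle3_apply_other _ _ _ hxa hxb hxc]
  rw [hσeq]
  exact cycle3_mem h0 (Ne.symm hσa) (Ne.symm hca) (Ne.symm hσb)

lemma alternating_le (h0 : 0 < n) : alternatingGroup (V n) ≤ H n := by
  rw [← Equiv.Perm.closure_three_cycles_eq_alternating]
  exact (Subgroup.closure_le _).mpr (fun σ hσ => threeCycle_mem h0 hσ)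

lemma sign_mtP (i : Fin n) : Perm.sign (mtP i) = -1 := by
  classical
  have hswap : ∀ a : ZMod 3, Equiv.swap (1 : ZMod 3) 2 a = 2 * a := by decide
  have hkey : ∀ x : V n, (Equiv.funSplitAt i (ZMod 3)) (mtP i x)
      = (Equiv.prodCongrLeft (fun _ : ({ j // j ≠ i } → ZMod 3) => Equiv.swap (1 : ZMod 3) 2))
          ((Equiv.funSplitAt i (ZMod 3)) x) := by
    intro x
    have h1 : (mtP i x) i = 2 * x i := by
      rw [mtP_eq, mtFun, Function.update_self]
    have h2 : ∀ j : { j // j ≠ i }, (mtP i x) j.val = x j.val := by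
      intro j
      rw [mtP_eq, mtFun, Function.update_of_ne j.2]
    apply Prod.ext <;>
      simp [Equiv.funSplitAt, Equiv.piSplitAt, Equiv.prodCongrLeft, h1, h2, hswap]
  have hs := Equiv.Perm.sign_eq_sign_of_equiv (mtP i) _ (Equiv.funSplitAt i (ZMod 3)) hkey
  rw [hs, Equiv.Perm.sign_prodCongrLeft, Finset.prod_const,
    Equiv.Perm.sign_swap (by decide : (1 : ZMod 3) ≠ 2)]
  have hodd : Odd (Finset.univ : Finset ({ j // j ≠ i } → ZMod 3)).card := by
    rw [Finset.card_univ, Fintype.card_fun]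
    exact Odd.pow (by decide)
  exact Odd.neg_one_pow hodd

end TernaryUniversal


theorem not_cnot_mt_toffoli_universal (n : ℕ) (hn : 2 ≤ n) :
    Subgroup.closure (NCMT n) = ⊤ := by
  have h0 : 0 < n := by omega
  rw [eq_top_iff]
  intro σ _
  show σ ∈ TernaryUniversal.H n
  by_cases hs : Perm.sign σ = 1
  · exact TernaryUniversal.alternating_le h0 (Equiv.Perm.mem_alternatingGroup.mpr hs)
  · have hsign : Perm.sign σ = -1 := by
      rcases Int.units_eq_one_or (Perm.sign σ) with h | h
      · exact absurd h hs
      · exact h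
    have hτ : Perm.sign (σ * TernaryUniversal.mtP ⟨0, h0⟩) = 1 := by
      rw [map_mul, hsign, TernaryUniversal.sign_mtP]
      norm_num
    have hmem := TernaryUniversal.alternating_le h0 (Equiv.Perm.mem_alternatingGroup.mpr hτ)
    have hσr : σ = (σ * TernaryUniversal.mtP ⟨0, h0⟩) * (TernaryUniversal.mtP ⟨0, h0⟩)⁻¹ := by
      group
    rw [hσr]
    exact mul_mem hmem (inv_mem (TernaryUniversal.mtP_mem _))
end

section
/- The ternary Controlled-Not gate C_{j,i} on {0,1,2}^n (n ≥ 2, i ≠ j) is an even permutation: it is a product of 3^{n-2} disjoint 3-cycles. -/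
open Equiv

section Aux

variable {α : Type*} [DecidableEq α]

lemma cycle3_apply_a (a b c : α) (hab : a ≠ b) (hbc : b ≠ c) :
    cycle3 a b c a = b := by
  simp only [cycle3, Equiv.Perm.mul_apply, Equiv.swap_apply_left]
  exact Equiv.swap_apply_of_ne_of_ne hab.symm hbc

lemma cycle3_apply_b (a b c : α) (hab : a ≠ b) :
    cycle3 a b c b = c := by
  simp only [cycle3, Equiv.Perm.mul_apply, Equiv.swap_apply_right,
    Equiv.swap_apply_left]

lemma cycle3_apply_c (a b c : α) (hac : a ≠ c) (hbc : b ≠ c) :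
    cycle3 a b c c = a := by
  simp only [cycle3, Equiv.Perm.mul_apply]
  rw [Equiv.swap_apply_of_ne_of_ne hac.symm hbc.symm, Equiv.swap_apply_right]

lemma cycle3_apply_ne (a b c y : α) (ha : y ≠ a) (hb : y ≠ b) (hc : y ≠ c) :
    cycle3 a b c y = y := by
  simp only [cycle3, Equiv.Perm.mul_apply]
  rw [Equiv.swap_apply_of_ne_of_ne ha hb, Equiv.swap_apply_of_ne_of_ne ha hc]

lemma cycle3_isThreeCycle [Fintype α] (a b c : α) (hab : a ≠ b) (hac : a ≠ c) (hbc : b ≠ c) :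
    (cycle3 a b c).IsThreeCycle := by
  have := Equiv.Perm.isThreeCycle_swap_mul_swap_same hac hab hbc.symm
  simpa [cycle3] using this

lemma prod_apply_eq_self (l : List (Equiv.Perm α)) (y : α)
    (h : ∀ τ ∈ l, τ y = y) : l.prod y = y := by
  induction l with
  | nil => rfl
  | cons τ t ih =>
    simp only [List.prod_cons, Equiv.Perm.mul_apply]
    rw [ih (fun ρ hρ => h ρ (List.mem_cons_of_mem _ hρ)), h τ List.mem_cons_self]

lemma prod_apply_of_mem (l : List (Equiv.Perm α)) (σ : Equiv.Perm α)
    (hσ : σ ∈ l) (hpw : l.Pairwise Equiv.Perm.Disjoint) (y : α) (hy : σ y ≠ y) :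
    l.prod y = σ y := by
  induction l with
  | nil => cases hσ
  | cons τ t ih =>
    rw [List.pairwise_cons] at hpw
    rcases List.mem_cons.mp hσ with rfl | hmem
    · simp only [List.prod_cons, Equiv.Perm.mul_apply]
      rw [prod_apply_eq_self t y]
      intro ρ hρ
      rcases (hpw.1 ρ hρ) y with h | h
      · exact absurd h hy
      · exact h
    · simp only [List.prod_cons, Equiv.Perm.mul_apply]
      rw [ih hmem hpw.2]
      rcases (hpw.1 σ hmem) (σ y) with h | h
      · exact h
      · exact absurd (σ.injective h) hy

end Aux

theorem cnot_gate_structure (n : ℕ) (hn : 2 ≤ n) (j i : Fin n) (hij : j ≠ i)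
    (C : Equiv.Perm (V n)) (hC : ∀ x, C x = cnotFun j i x) :
    (∃ l : List (Equiv.Perm (V n)), l.length = 3 ^ (n - 2) ∧
      (∀ τ ∈ l, τ.IsThreeCycle) ∧ l.Pairwise Equiv.Perm.Disjoint ∧ l.prod = C) ∧
    Equiv.Perm.sign C = 1 := by
  classical
  have hval : ∀ v : ZMod 3, v = 0 ∨ v = 1 ∨ v = 2 := by decide
  set S : Finset (V n) := Finset.univ.filter (fun x => x i = 1 ∧ x j = 0) with hSdef
  have hmemS : ∀ x : V n, x ∈ S ↔ (x i = 1 ∧ x j = 0) := by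
    intro x; simp [hSdef]
  set τ : V n → Equiv.Perm (V n) :=
    fun x => cycle3 x (Function.update x j 1) (Function.update x j 2) with hτdef
  have hBj : ∀ x : V n, (Function.update x j (1 : ZMod 3)) j = 1 := fun x => by simp
  have hCj : ∀ x : V n, (Function.update x j (2 : ZMod 3)) j = 2 := fun x => by simp
  have hAB : ∀ x : V n, x j = 0 → x ≠ Function.update x j 1 := by
    intro x hx h
    have := congrFun h j
    rw [hx, hBj] at this; exact absurd this (by decide)
  have hAC : ∀ x : V n, x j = 0 → x ≠ Function.update x j 2 := by
    intro x hx h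
    have := congrFun h j
    rw [hx, hCj] at this; exact absurd this (by decide)
  have hBC : ∀ x : V n, Function.update x j (1 : ZMod 3) ≠ Function.update x j 2 := by
    intro x h
    have := congrFun h j
    rw [hBj, hCj] at this; exact absurd this (by decide)
  have hsupp : ∀ x : V n, ∀ y : V n, τ x y ≠ y →
      (y = x ∨ y = Function.update x j 1 ∨ y = Function.update x j 2) := by
    intro x y hy
    by_contra h
    push_neg at h
    exact hy (cycle3_apply_ne _ _ _ _ h.1 h.2.1 h.2.2)
  have htriple : ∀ x x' : V n, x j = 0 → x' j = 0 →
      ∀ k k' : ZMod 3, Function.update x j k = Function.update x' j k' → x = x' := by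
    intro x x' hx hx' k k' h
    funext r
    by_cases hr : r = j
    · subst hr; rw [hx, hx']
    · have := congrFun h r
      rwa [Function.update_of_ne hr, Function.update_of_ne hr] at this
  -- length
  have hlen : (S.toList.map τ).length = 3 ^ (n - 2) := by
    rw [List.length_map, Finset.length_toList]
    have e : {x : V n // x i = 1 ∧ x j = 0} ≃ ({r : Fin n // r ≠ i ∧ r ≠ j} → ZMod 3) :=
      { toFun := fun x r => x.1 r.1
        invFun := fun g => ⟨fun r => if hr : r = i then 1 else if hr' : r = j then 0
            else g ⟨r, hr, hr'⟩, by simp, by simp [hij]⟩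
        left_inv := by
          intro x
          ext r
          by_cases hr : r = i
          · subst hr; simp [x.2.1]
          · by_cases hr' : r = j
            · subst hr'; simp [hr, x.2.2]
            · simp [hr, hr']
        right_inv := by
          intro g
          funext r
          simp [r.2.1, r.2.2] }
    have h1 : S.card = Fintype.card {x : V n // x i = 1 ∧ x j = 0} := by
      rw [Fintype.card_subtype]
    have h2 : Fintype.card {r : Fin n // r ≠ i ∧ r ≠ j} = n - 2 := by
      rw [Fintype.card_subtype]
      have heq : (Finset.univ.filter fun r : Fin n => r ≠ i ∧ r ≠ j)
          = ({i, j} : Finset (Fin n))ᶜ := by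
        ext r
        simp [not_or]
      rw [heq, Finset.card_compl,
        Finset.card_insert_of_notMem (by simp [Ne.symm hij]),
        Finset.card_singleton, Fintype.card_fin]
    rw [h1, Fintype.card_congr e, Fintype.card_fun, ZMod.card, h2]
  -- three-cycles
  have h3c : ∀ σ ∈ S.toList.map τ, σ.IsThreeCycle := by
    intro σ hσ
    rcases List.mem_map.mp hσ with ⟨x, hx, rfl⟩
    rw [Finset.mem_toList, hmemS] at hx
    exact cycle3_isThreeCycle _ _ _ (hAB x hx.2) (hAC x hx.2) (hBC x)
  -- pairwise disjoint
  have hpw : (S.toList.map τ).Pairwise Equiv.Perm.Disjoint := by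
    rw [List.pairwise_map]
    refine List.Pairwise.imp_of_mem ?_ S.nodup_toList
    intro a b ha hb hne
    rw [Finset.mem_toList, hmemS] at ha hb
    intro y
    by_contra h
    push_neg at h
    have ha0 : a = Function.update a j (0 : ZMod 3) := by
      rw [← ha.2, Function.update_eq_self]
    have hb0 : b = Function.update b j (0 : ZMod 3) := by
      rw [← hb.2, Function.update_eq_self]
    have hy1 := hsupp a y h.1
    have hy2 := hsupp b y h.2
    have hya : ∃ k : ZMod 3, y = Function.update a j k := by
      rcases hy1 with h1 | h1 | h1
      · exact ⟨0, by rw [h1, ← ha0]⟩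
      · exact ⟨1, h1⟩
      · exact ⟨2, h1⟩
    have hyb : ∃ k : ZMod 3, y = Function.update b j k := by
      rcases hy2 with h2 | h2 | h2
      · exact ⟨0, by rw [h2, ← hb0]⟩
      · exact ⟨1, h2⟩
      · exact ⟨2, h2⟩
    obtain ⟨k, hk⟩ := hya
    obtain ⟨k', hk'⟩ := hyb
    exact hne (htriple a b ha.2 hb.2 k k' (hk ▸ hk'))
  -- product equals C
  have hprod : (S.toList.map τ).prod = C := by
    refine Equiv.ext fun y => ?_
    by_cases hy : y i = 1
    · set x : V n := Function.update y j 0 with hxdef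
      have hxS : x ∈ S := by
        rw [hmemS]
        constructor
        · rw [hxdef, Function.update_of_ne (Ne.symm hij), hy]
        · simp [hxdef]
      have hxj : x j = 0 := by simp [hxdef]
      have hmem : τ x ∈ S.toList.map τ := List.mem_map.mpr ⟨x, Finset.mem_toList.mpr hxS, rfl⟩
      have key : τ x y = Function.update y j (y j + 1) := by
        rcases hval (y j) with h0 | h1 | h2
        · have hyx : y = x := by
            rw [hxdef, ← h0, Function.update_eq_self]
          rw [hyx, hτdef]
          have hcy := cycle3_apply_a x (Function.update x j 1) (Function.update x j 2)
            (hAB x hxj) (hBC x)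
          rw [hcy, ← hyx, h0]
          norm_num
        · have hyx : y = Function.update x j 1 := by
            rw [hxdef, Function.update_idem, ← h1, Function.update_eq_self]
          rw [hyx, hτdef]
          have hcy := cycle3_apply_b x (Function.update x j 1) (Function.update x j 2)
            (hAB x hxj)
          rw [hcy, ← hyx]
          have h22 : Function.update x j (2 : ZMod 3) = Function.update y j 2 := by
            rw [hxdef, Function.update_idem]
          rw [h22, h1]
          norm_num
        · have hyx : y = Function.update x j 2 := by
            rw [hxdef, Function.update_idem, ← h2, Function.update_eq_self]
          rw [hyx, hτdef]
          have hcy := cycle3_apply_c x (Function.update x j 1) (Function.update x j 2)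
            (hAC x hxj) (hBC x)
          rw [hcy, ← hyx]
          have hx2 : x = Function.update y j (y j + 1) := by
            rw [hxdef, h2]
            norm_num
            rfl
          exact hx2
      have hne : τ x y ≠ y := by
        rw [key]
        intro hcon
        have hcj := congrFun hcon j
        rw [Function.update_self] at hcj
        exact absurd (add_left_cancel (a := y j) (by rw [add_zero, hcj])) one_ne_zero
      rw [prod_apply_of_mem _ _ hmem hpw y hne, key, hC, cnotFun, if_pos hy]
    · rw [prod_apply_eq_self, hC, cnotFun, if_neg hy]
      intro σ hσ
      rcases List.mem_map.mp hσ with ⟨x, hx, rfl⟩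
      rw [Finset.mem_toList, hmemS] at hx
      refine cycle3_apply_ne _ _ _ _ ?_ ?_ ?_
      · intro hcon; rw [hcon] at hy; exact hy hx.1
      · intro hcon
        rw [hcon, Function.update_of_ne (Ne.symm hij)] at hy
        exact hy hx.1
      · intro hcon
        rw [hcon, Function.update_of_ne (Ne.symm hij)] at hy
        exact hy hx.1
  refine ⟨⟨S.toList.map τ, hlen, h3c, hpw, hprod⟩, ?_⟩
  rw [← hprod, map_list_prod]
  apply List.prod_eq_one
  intro z hz
  rcases List.mem_map.mp hz with ⟨σ, hσ, rfl⟩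
  exact (h3c σ hσ).sign
end

section
/- For n ≥ 2, any 3-cycle (u s t) of vectors u, s, t ∈ {0,1,2}^n such that there is exactly one coordinate position at which u, s, t are not all equal (a single heterogeneous column), pairwise distinct at that coordinate, can be written as g^{-1} ∘ T^{ε} ∘ g, where ε ∈ {1, 2}, T is the ternary Toffoli gate, and g is a composition of Swap and Not gates. -/
open Equiv

/-- The set of Swap and Not gates on `n` ternary digits, as permutations. -/
def SN (n : ℕ) : Set (Equiv.Perm (V n)) :=
  {g | (∃ i j : Fin n, i ≠ j ∧ ∀ x, g x = swapFun i j x) ∨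
       (∃ j : Fin n, ∀ x, g x = notFun j x)}

lemma cycle3_apply {α : Type*} [DecidableEq α] (a b c x : α)
    (hab : a ≠ b) (hbc : b ≠ c) (hac : a ≠ c) :
    cycle3 a b c x = if x = a then b else if x = b then c else if x = c then a else x := by
  simp only [cycle3, Equiv.Perm.mul_apply, Equiv.swap_apply_def]
  split_ifs <;> simp_all

lemma conj_swap {α : Type*} [DecidableEq α] (g : Perm α) (a b : α) :
    g⁻¹ * Equiv.swap a b * g = Equiv.swap (g⁻¹ a) (g⁻¹ b) := by
  have := Equiv.swap_apply_apply g⁻¹ a b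
  simp only [inv_inv] at this
  rw [this]

lemma conj_cycle3 {α : Type*} [DecidableEq α] (g : Perm α) (a b c : α) :
    g⁻¹ * cycle3 a b c * g = cycle3 (g⁻¹ a) (g⁻¹ b) (g⁻¹ c) := by
  have h1 := conj_swap g a c
  have h2 := conj_swap g a b
  rw [cycle3, cycle3, ← h1, ← h2]
  group

lemma cycle3_sq {α : Type*} [DecidableEq α] (a b c : α)
    (hab : a ≠ b) (hbc : b ≠ c) (hac : a ≠ c) :
    cycle3 a b c * cycle3 a b c = cycle3 a c b := by
  ext x
  have key : ∀ y, cycle3 a b c y = if y = a then b else if y = b then c else if y = c then a else y :=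
    fun y => cycle3_apply a b c y hab hbc hac
  rw [Equiv.Perm.mul_apply, key, key, cycle3_apply a c b x hac hbc.symm hab]
  split_ifs <;> simp_all

lemma addRight_mul' {M : Type*} [AddCommGroup M] (d e : M) :
    Equiv.addRight (d + e) = (Equiv.addRight d) * (Equiv.addRight e) := by
  ext x
  simp [Equiv.Perm.mul_apply]
  abel

lemma addRight_zero' {M : Type*} [AddCommGroup M] :
    (Equiv.addRight (0 : M) : Perm M) = 1 := by
  ext x; simp

lemma notPerm_mem {n : ℕ} (j : Fin n) :
    (Equiv.addRight (Pi.single j (1 : ZMod 3)) : Perm (V n)) ∈ SN n := by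
  right
  refine ⟨j, fun x => ?_⟩
  funext r
  by_cases h : r = j <;>
    simp [notFun, Function.update_apply, Pi.single_apply, h]

lemma addRight_single_mem {n : ℕ} (j : Fin n) (cv : ZMod 3) :
    (Equiv.addRight (Pi.single j cv) : Perm (V n)) ∈ Subgroup.closure (SN n) := by
  have h3 : cv = 0 ∨ cv = 1 ∨ cv = 2 :=
    (show ∀ z : ZMod 3, z = 0 ∨ z = 1 ∨ z = 2 by decide) cv
  rcases h3 with h | h | h
  · subst h
    rw [Pi.single_zero, addRight_zero']
    exact one_mem _
  · subst h
    exact Subgroup.subset_closure (notPerm_mem j)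
  · subst h
    have h2 : (Pi.single j (2 : ZMod 3) : V n) = Pi.single j 1 + Pi.single j 1 := by
      rw [← Pi.single_add]
      norm_num
    rw [h2, addRight_mul']
    exact mul_mem (Subgroup.subset_closure (notPerm_mem j))
      (Subgroup.subset_closure (notPerm_mem j))

lemma addRight_mem {n : ℕ} (d : V n) :
    (Equiv.addRight d : Perm (V n)) ∈ Subgroup.closure (SN n) := by
  have key : ∀ F : Finset (Fin n),
      (Equiv.addRight (∑ r ∈ F, Pi.single r (d r)) : Perm (V n)) ∈ Subgroup.closure (SN n) := by
    intro F
    induction F using Finset.induction_on with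
    | empty => rw [Finset.sum_empty, addRight_zero']; exact one_mem _
    | insert _ _ hnm ih =>
        rw [Finset.sum_insert hnm, addRight_mul']
        exact mul_mem (addRight_single_mem _ _) ih
  have := key Finset.univ
  rwa [Finset.univ_sum_single] at this


theorem single_het_column_three_cycle (n : ℕ) (hn : 2 ≤ n) (u s t : V n)
    (r0 : Fin n) (hcol : hetCols u s t = {r0})
    (h1 : u r0 ≠ s r0) (h2 : s r0 ≠ t r0) (h3 : u r0 ≠ t r0)
    (T : Equiv.Perm (V n)) (hT : ∀ x, T x = toffoliFun x) :
    ∃ ε : ℕ, (ε = 1 ∨ ε = 2) ∧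
      ∃ g ∈ Subgroup.closure (SN n), cycle3 u s t = g⁻¹ * T ^ ε * g := by
  have hn0 : 0 < n := by omega
  set i0 : Fin n := ⟨0, hn0⟩ with hi0
  have hval0 : ∀ r : Fin n, r.val = 0 ↔ r = i0 := by
    intro r; rw [Fin.ext_iff]
  have hpos : ∀ r : Fin n, 0 < r.val → r ≠ i0 := by
    intro r hr h
    rw [h] at hr; simp [hi0] at hr
  have hpos' : ∀ r : Fin n, r ≠ i0 → 0 < r.val := by
    intro r hr
    exact Nat.pos_of_ne_zero (fun h => hr ((hval0 r).mp h))
  have hzmod : ∀ z : ZMod 3, z = 0 ∨ z = 1 ∨ z = 2 := by decide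
  -- agreement off r0
  have hagree : ∀ r : Fin n, r ≠ r0 → u r = s r ∧ s r = t r := by
    intro r hr
    by_contra h
    have hmem : r ∈ hetCols u s t := Finset.mem_filter.mpr ⟨Finset.mem_univ r, h⟩
    rw [hcol, Finset.mem_singleton] at hmem
    exact hr hmem
  -- the three special vectors
  set a : V n := fun r => if r = i0 then 0 else 1 with ha
  set b : V n := fun r => if r = i0 then 1 else 1 with hb
  set c : V n := fun r => if r = i0 then 2 else 1 with hc
  have hai : a i0 = 0 := by rw [ha]; simp
  have hbi : b i0 = 1 := by rw [hb]; simp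
  have hci : c i0 = 2 := by rw [hc]; simp
  have hab : a ≠ b := fun h => by
    have h' := congrFun h i0; rw [hai, hbi] at h'; exact absurd h' (by decide)
  have hbc : b ≠ c := fun h => by
    have h' := congrFun h i0; rw [hbi, hci] at h'; exact absurd h' (by decide)
  have hac : a ≠ c := fun h => by
    have h' := congrFun h i0; rw [hai, hci] at h'; exact absurd h' (by decide)
  have hgen : ∀ v : ZMod 3,
      toffoliFun (fun r => if r = i0 then v else 1 : V n)
        = (fun r => if r = i0 then v + 1 else 1) := by
    intro v
    have hall : ∀ r : Fin n, 0 < r.val →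
        (fun r => if r = i0 then v else 1 : V n) r = 1 := by
      intro r hr
      simp [hpos r hr]
    rw [toffoliFun, if_pos hall]
    funext r
    by_cases hr : r = i0
    · subst hr; simp [hval0]
    · have hv : ¬ r.val = 0 := fun h => hr ((hval0 r).mp h)
      simp [hv, hr]
  -- T is the 3-cycle (a b c)
  have hTc : T = cycle3 a b c := by
    ext x
    rw [hT, cycle3_apply a b c x hab hbc hac]
    by_cases hall : ∀ r : Fin n, 0 < r.val → x r = 1
    · have hxr : ∀ r : Fin n, r ≠ i0 → x r = 1 := fun r hr => hall r (hpos' r hr)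
      have hxeq : x = fun r => if r = i0 then x i0 else 1 := by
        funext r
        by_cases hr : r = i0
        · subst hr; simp
        · simp [hr, hxr r hr]
      rcases hzmod (x i0) with h | h | h
      · have hxa : x = a := by rw [hxeq, h, ha]
        rw [hxa, if_pos rfl, ha, hgen, hb]
        simp [show (0 : ZMod 3) + 1 = 1 from by decide]
      · have hxb : x = b := by rw [hxeq, h, hb]
        rw [hxb, if_neg hab.symm, if_pos rfl, hb, hgen, hc]
        simp [show (1 : ZMod 3) + 1 = 2 from by decide]
      · have hxc : x = c := by rw [hxeq, h, hc]
        rw [hxc, if_neg hac.symm, if_neg hbc.symm, if_pos rfl, hc, hgen, ha]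
        simp [show (2 : ZMod 3) + 1 = 0 from by decide]
    · have hone : ∀ (v : ZMod 3) (r : Fin n), 0 < r.val →
          (fun r => if r = i0 then v else 1 : V n) r = 1 := by
        intro v r hr; simp [hpos r hr]
      have hxa : x ≠ a := by rintro rfl; rw [ha] at hall; exact hall (hone 0)
      have hxb : x ≠ b := by rintro rfl; rw [hb] at hall; exact hall (hone 1)
      have hxc : x ≠ c := by rintro rfl; rw [hc] at hall; exact hall (hone 2)
      rw [if_neg hxa, if_neg hxb, if_neg hxc, toffoliFun, if_neg hall]
  -- the coordinate permutation σ
  set σP : Perm (V n) := Equiv.arrowCongr (Equiv.swap i0 r0) (Equiv.refl (ZMod 3)) with hσP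
  have hσ : ∀ (x : V n) (r : Fin n), σP x r = x (Equiv.swap i0 r0 r) := by
    intro x r
    simp [hσP, Equiv.arrowCongr]
  have hσmem : σP ∈ Subgroup.closure (SN n) := by
    by_cases h0 : i0 = r0
    · have : σP = 1 := by
        ext x r
        rw [hσ, h0, Equiv.swap_self]
        rfl
      rw [this]; exact one_mem _
    · apply Subgroup.subset_closure
      left
      refine ⟨i0, r0, h0, fun x => ?_⟩
      funext r
      rw [hσ]
      simp only [swapFun, Equiv.swap_apply_def]
      split_ifs <;> rfl
  -- the translation
  set dv : V n := fun r => a r - u (Equiv.swap i0 r0 r) with hdv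
  set g : Perm (V n) := Equiv.addRight dv * σP with hg
  have hgmem : g ∈ Subgroup.closure (SN n) := mul_mem (addRight_mem dv) hσmem
  have hgx : ∀ (x : V n) (r : Fin n),
      g x r = x (Equiv.swap i0 r0 r) + (a r - u (Equiv.swap i0 r0 r)) := by
    intro x r
    rw [hg, Equiv.Perm.mul_apply]
    have : (Equiv.addRight dv) (σP x) = σP x + dv := rfl
    rw [this]
    simp [hσ, hdv]
  have hswne : ∀ r : Fin n, r ≠ i0 → Equiv.swap i0 r0 r ≠ r0 := by
    intro r hr h
    apply hr
    exact (Equiv.swap i0 r0).injective (h.trans (Equiv.swap_apply_left i0 r0).symm)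
  have hgu : g u = a := by
    funext r
    rw [hgx]
    ring
  have hgs : g s = fun r => if r = i0 then s r0 - u r0 else 1 := by
    funext r
    rw [hgx]
    by_cases hr : r = i0
    · subst hr
      rw [Equiv.swap_apply_left, hai, if_pos rfl]
      ring
    · have hne := hswne r hr
      rw [(hagree _ hne).1, if_neg hr]
      have : a r = 1 := by rw [ha]; simp [hr]
      rw [this]; ring
  have hgt : g t = fun r => if r = i0 then t r0 - u r0 else 1 := by
    funext r
    rw [hgx]
    by_cases hr : r = i0
    · subst hr
      rw [Equiv.swap_apply_left, hai, if_pos rfl]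
      ring
    · have hne := hswne r hr
      have he : t (Equiv.swap i0 r0 r) = u (Equiv.swap i0 r0 r) := by
        rw [(hagree _ hne).1, (hagree _ hne).2]
      rw [he, if_neg hr]
      have : a r = 1 := by rw [ha]; simp [hr]
      rw [this]; ring
  have hδ : s r0 - u r0 = 1 ∨ s r0 - u r0 = 2 := by
    have hne : s r0 - u r0 ≠ 0 := sub_ne_zero_of_ne (Ne.symm h1)
    rcases hzmod (s r0 - u r0) with h | h | h
    · exact absurd h hne
    · exact Or.inl h
    · exact Or.inr h
  have hginv : ∀ x y, g x = y → g⁻¹ y = x := by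
    intro x y h
    rw [← h]
    simp
  rcases hδ with hδ1 | hδ2
  · -- ε = 1
    have hτ : t r0 - u r0 = 2 := by
      have key : ∀ zu zs zt : ZMod 3, zu ≠ zs → zs ≠ zt → zu ≠ zt →
          zs - zu = 1 → zt - zu = 2 := by decide
      exact key _ _ _ h1 h2 h3 hδ1
    have hgsb : g s = b := by
      rw [hgs, hb, hδ1]
    have hgtc : g t = c := by
      rw [hgt, hc, hτ]
    refine ⟨1, Or.inl rfl, g, hgmem, ?_⟩
    rw [pow_one, hTc, conj_cycle3, hginv _ _ hgu, hginv _ _ hgsb, hginv _ _ hgtc]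
  · -- ε = 2
    have hτ : t r0 - u r0 = 1 := by
      have key : ∀ zu zs zt : ZMod 3, zu ≠ zs → zs ≠ zt → zu ≠ zt →
          zs - zu = 2 → zt - zu = 1 := by decide
      exact key _ _ _ h1 h2 h3 hδ2
    have hgsc : g s = c := by
      rw [hgs, hc, hδ2]
    have hgtb : g t = b := by
      rw [hgt, hb, hτ]
    refine ⟨2, Or.inr rfl, g, hgmem, ?_⟩
    rw [pow_two, hTc, cycle3_sq a b c hab hbc hac, conj_cycle3,
      hginv _ _ hgu, hginv _ _ hgsc, hginv _ _ hgtb]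
end

section
/- For n ≥ 2, the subgroup of Sym({0,1,2}^n) generated by the ternary Swap, Not, and Toffoli gates contains an odd permutation (namely any Swap gate), and hence is not contained in the alternating group; combined with containing all 3-cycles, it equals the full symmetric group. -/
open Equiv

namespace SNTProof

variable {n m : ℕ}

lemma perm_mul_apply (f g : Perm (V n)) (x : V n) : (f * g) x = f (g x) := rfl

/-- translation -/
def trPerm (u : V n) : Perm (V n) where
  toFun x := u + x
  invFun x := -u + x
  left_inv x := by simp [← add_assoc]
  right_inv x := by simp [← add_assoc]

@[simp] lemma trPerm_apply (u x : V n) : trPerm u x = u + x := rfl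

lemma trPerm_zero : trPerm (0 : V n) = 1 := Equiv.ext fun x => by simp [trPerm]

lemma trPerm_add (u v : V n) : trPerm (u + v) = trPerm u * trPerm v :=
  Equiv.ext fun x => by simp [trPerm, perm_mul_apply, add_assoc]

lemma trPerm_nsmul (k : ℕ) (u : V n) : trPerm (k • u) = trPerm u ^ k := by
  induction k with
  | zero => simpa using trPerm_zero
  | succ k ih => rw [succ_nsmul, trPerm_add, ih, pow_succ]

def swapPerm (i j : Fin n) : Perm (V n) where
  toFun x := fun r => x (Equiv.swap i j r)
  invFun x := fun r => x (Equiv.swap i j r)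
  left_inv x := by funext r; simp
  right_inv x := by funext r; simp

@[simp] lemma swapPerm_apply (i j : Fin n) (x : V n) (r : Fin n) :
    swapPerm i j x r = x (Equiv.swap i j r) := rfl

lemma swapPerm_eq_swapFun (i j : Fin n) (x : V n) : swapPerm i j x = swapFun i j x := by
  funext r
  rw [swapPerm_apply, swapFun, Equiv.swap_apply_def]
  split_ifs <;> rfl

lemma swapPerm_self (c : Fin n) : swapPerm c c = 1 :=
  Equiv.ext fun x => funext fun r => by simp

def tofCond (x : V (m+2)) : Prop := ∀ r, r ≠ 0 → x r = 1

instance : DecidablePred (tofCond (m := m)) := fun _ => by unfold tofCond; infer_instance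

def tof (k : ZMod 3) : Perm (V (m+2)) where
  toFun x := if tofCond x then Function.update x 0 (x 0 + k) else x
  invFun x := if tofCond x then Function.update x 0 (x 0 - k) else x
  left_inv x := by
    dsimp only
    by_cases h : tofCond x
    · have h' : tofCond (Function.update x 0 (x 0 + k)) := fun r hr => by
        rw [Function.update_of_ne hr]; exact h r hr
      rw [if_pos h, if_pos h', Function.update_idem, Function.update_self,
        add_sub_cancel_right, Function.update_eq_self]
    · rw [if_neg h, if_neg h]
  right_inv x := by
    dsimp only
    by_cases h : tofCond x
    · have h' : tofCond (Function.update x 0 (x 0 - k)) := fun r hr => by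
        rw [Function.update_of_ne hr]; exact h r hr
      rw [if_pos h, if_pos h', Function.update_idem, Function.update_self,
        sub_add_cancel, Function.update_eq_self]
    · rw [if_neg h, if_neg h]

lemma tof_apply (k : ZMod 3) (x : V (m+2)) :
    tof k x = if tofCond x then Function.update x 0 (x 0 + k) else x := rfl

lemma tofCond_iff (x : V (m+2)) : tofCond x ↔ ∀ r : Fin (m+2), 0 < r.val → x r = 1 := by
  unfold tofCond
  constructor
  · intro h r hr
    refine h r fun h0 => ?_
    rw [h0] at hr; simp at hr
  · intro h r hr
    refine h r (Nat.pos_of_ne_zero fun h0 => hr (Fin.ext ?_))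
    simp [h0]

lemma tof_one_eq : ∀ x, tof (m := m) 1 x = toffoliFun x := by
  intro x
  rw [tof_apply, toffoliFun]
  by_cases h : tofCond x
  · rw [if_pos h, if_pos ((tofCond_iff x).1 h)]
    funext r
    by_cases hr : r = 0
    · subst hr; rw [Function.update_self]; simp
    · rw [Function.update_of_ne hr, if_neg (fun h0 => hr (Fin.ext (by simp [h0])))]
  · rw [if_neg h, if_neg (fun h' => h ((tofCond_iff x).2 h'))]

lemma tof_add (k l : ZMod 3) : tof (m := m) (k + l) = tof k * tof l := by
  refine Equiv.ext fun x => ?_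
  rw [perm_mul_apply, tof_apply, tof_apply]
  by_cases h : tofCond x
  · have h' : tofCond (Function.update x 0 (x 0 + l)) := fun r hr => by
      rw [Function.update_of_ne hr]; exact h r hr
    simp only [if_pos h, tof_apply]
    rw [if_pos h', Function.update_idem, Function.update_self]
    congr 1
    ring
  · simp only [if_neg h, tof_apply]

lemma tof_mem (k : ZMod 3) : tof (m := m) k ∈ Subgroup.closure (SNT (m+2)) := by
  have h1 : tof (m := m) 1 ∈ Subgroup.closure (SNT (m+2)) :=
    Subgroup.subset_closure (Or.inr (Or.inr tof_one_eq))
  rcases (by decide : ∀ j : ZMod 3, j = 0 ∨ j = 1 ∨ j = 2) k with rfl | rfl | rfl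
  · have h0 : tof (m := m) 0 = 1 := by
      refine Equiv.ext fun x => ?_
      rw [tof_apply]
      split_ifs <;> simp
    rw [h0]; exact one_mem _
  · exact h1
  · have : (2 : ZMod 3) = 1 + 1 := by decide
    rw [this, tof_add]; exact mul_mem h1 h1


lemma not_eq (j : Fin n) : ∀ x, trPerm (Pi.single j (1 : ZMod 3)) x = notFun j x := by
  intro x; funext r
  rw [trPerm_apply, notFun]
  by_cases hr : r = j
  · subst hr; simp [add_comm]
  · rw [Function.update_of_ne hr]; simp [Pi.single_eq_of_ne hr]

lemma trPerm_mem (u : V (m+2)) : trPerm u ∈ Subgroup.closure (SNT (m+2)) := by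
  suffices h : ∀ (s : Finset (Fin (m+2))) (u : V (m+2)), (∀ j ∉ s, u j = 0) →
      trPerm u ∈ Subgroup.closure (SNT (m+2)) from h Finset.univ u (by simp)
  intro s
  induction s using Finset.induction_on with
  | empty =>
    intro u hu
    have : u = 0 := funext fun j => hu j (Finset.notMem_empty j)
    rw [this, trPerm_zero]; exact one_mem _
  | @insert j s hj ih =>
    intro u hu
    have hdec : u = Pi.single j (u j) + Function.update u j 0 := by
      funext r
      by_cases hr : r = j
      · subst hr; simp
      · simp [Pi.single_eq_of_ne hr, Function.update_of_ne hr]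
    rw [hdec, trPerm_add]
    refine mul_mem ?_ (ih _ fun r hr => ?_)
    · have hs : Pi.single j (u j) = ((u j).val • Pi.single j (1 : ZMod 3) : V (m+2)) := by
        funext r
        by_cases hr : r = j
        · subst hr
          simp [ZMod.natCast_val, ZMod.cast_id]
        · simp [Pi.single_eq_of_ne hr]
      rw [hs, trPerm_nsmul]
      have hN : trPerm (Pi.single j (1 : ZMod 3)) ∈ Subgroup.closure (SNT (m+2)) :=
        Subgroup.subset_closure (Or.inr (Or.inl ⟨j, not_eq j⟩))
      exact pow_mem hN _
    · by_cases h : r = j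
      · subst h; simp
      · rw [Function.update_of_ne h]
        exact hu r (by simp [Finset.mem_insert, h, hr])

def condAdd (c : Fin (m+2)) (v : V (m+2)) (k : ZMod 3) : Perm (V (m+2)) :=
  trPerm (v - 1) * swapPerm 0 c * tof k * swapPerm 0 c * trPerm (-(v - 1))

lemma condAdd_mem (c : Fin (m+2)) (v : V (m+2)) (k : ZMod 3) :
    condAdd c v k ∈ Subgroup.closure (SNT (m+2)) := by
  have hsw : swapPerm (0 : Fin (m+2)) c ∈ Subgroup.closure (SNT (m+2)) := by
    by_cases hc : c = 0
    · subst hc; rw [swapPerm_self]; exact one_mem _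
    · exact Subgroup.subset_closure
        (Or.inl ⟨0, c, fun h => hc h.symm, fun x => swapPerm_eq_swapFun 0 c x⟩)
  exact mul_mem (mul_mem (mul_mem (mul_mem (trPerm_mem _) hsw) (tof_mem k)) hsw) (trPerm_mem _)

lemma condAdd_apply (c : Fin (m+2)) (v : V (m+2)) (k : ZMod 3) (x : V (m+2)) :
    condAdd c v k x = if ∀ r, r ≠ c → x r = v r then Function.update x c (x c + k) else x := by
  set σ := Equiv.swap (0 : Fin (m+2)) c with hσ
  set y : V (m+2) := -(v - 1) + x with hy
  have happ : condAdd c v k x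
      = trPerm (v - 1) (swapPerm 0 c (tof k (swapPerm 0 c y))) := rfl
  have hyr : ∀ r, y r = -(v r - 1) + x r := fun r => rfl
  have hcond : (tofCond (swapPerm 0 c y)) ↔ (∀ r, r ≠ c → x r = v r) := by
    constructor
    · intro h r hr
      have h1 : σ r ≠ 0 := fun h0 => hr (by
        have h2 := congrArg σ h0
        rwa [Equiv.swap_apply_self, Equiv.swap_apply_left] at h2)
      have h2 := h (σ r) h1
      rw [swapPerm_apply, ← hσ, Equiv.swap_apply_self, hyr r] at h2
      linear_combination h2
    · intro h r hr
      rw [swapPerm_apply, ← hσ]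
      have h1 : σ r ≠ c := fun h0 => hr (by
        have h2 := congrArg σ h0
        rwa [Equiv.swap_apply_self, Equiv.swap_apply_right] at h2)
      rw [hyr (σ r)]
      linear_combination h (σ r) h1
  rw [happ]
  by_cases hC : ∀ r, r ≠ c → x r = v r
  · rw [if_pos hC]
    have htk : tof k (swapPerm 0 c y)
        = Function.update (swapPerm 0 c y) 0 ((swapPerm 0 c y) 0 + k) := by
      rw [tof_apply, if_pos (hcond.2 hC)]
    rw [htk]
    funext r
    rw [trPerm_apply, Pi.add_apply, swapPerm_apply, ← hσ]
    by_cases hr : r = c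
    · subst hr
      rw [Equiv.swap_apply_right, Function.update_self, Function.update_self,
        swapPerm_apply, ← hσ, Equiv.swap_apply_left, hyr r]
      simp only [Pi.sub_apply, Pi.one_apply]
      ring
    · have hσr : σ r ≠ 0 := fun h0 => hr (by
        have h2 := congrArg σ h0
        rwa [Equiv.swap_apply_self, Equiv.swap_apply_left] at h2)
      rw [Function.update_of_ne hσr, Function.update_of_ne hr, swapPerm_apply, ← hσ,
        Equiv.swap_apply_self, hyr r]
      simp only [Pi.sub_apply, Pi.one_apply]
      ring
  · rw [if_neg hC]
    have htk : tof k (swapPerm 0 c y) = swapPerm 0 c y := by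
      rw [tof_apply, if_neg (fun h => hC (hcond.1 h))]
    rw [htk]
    funext r
    rw [trPerm_apply, Pi.add_apply, swapPerm_apply, ← hσ, swapPerm_apply, ← hσ,
      Equiv.swap_apply_self, hyr r]
    simp only [Pi.sub_apply, Pi.one_apply]
    ring

lemma condAdd_move {c : Fin (m+2)} {v : V (m+2)} {k : ZMod 3} {x : V (m+2)}
    (h : ∀ r, r ≠ c → x r = v r) : condAdd c v k x = Function.update x c (x c + k) := by
  rw [condAdd_apply, if_pos h]

lemma condAdd_fix {c : Fin (m+2)} {v : V (m+2)} {k : ZMod 3} {x : V (m+2)}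
    (r0 : Fin (m+2)) (hr0 : r0 ≠ c) (h : x r0 ≠ v r0) : condAdd c v k x = x := by
  rw [condAdd_apply, if_neg (fun hall => h (hall r0 hr0))]


def aVec (k : ZMod 3) : V (m+2) := fun r => if r = 0 then k else 1

@[simp] lemma aVec_zero (k : ZMod 3) : aVec (m := m) k 0 = k := if_pos rfl

lemma aVec_ne (k : ZMod 3) {r : Fin (m+2)} (hr : r ≠ 0) : aVec (m := m) k r = 1 := if_neg hr

lemma aVec_inj {k l : ZMod 3} (h : aVec (m := m) k = aVec l) : k = l := by
  have h0 := congrFun h 0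
  simpa using h0

lemma aVec_ne_aVec {k l : ZMod 3} (h : k ≠ l) : aVec (m := m) k ≠ aVec l :=
  fun he => h (aVec_inj he)

lemma eq_aVec_of {x : V (m+2)} (h : ∀ r, r ≠ 0 → x r = 1) : x = aVec (x 0) := by
  funext r
  by_cases hr : r = 0
  · subst hr; simp
  · rw [h r hr, aVec_ne _ hr]

lemma tof_one_eq_cycle3 : tof (m := m) 1 = cycle3 (aVec 0) (aVec 1) (aVec 2) := by
  have hne01 : aVec (m := m) 0 ≠ aVec 1 := aVec_ne_aVec (by decide)
  have hne02 : aVec (m := m) 0 ≠ aVec 2 := aVec_ne_aVec (by decide)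
  have hne12 : aVec (m := m) 1 ≠ aVec 2 := aVec_ne_aVec (by decide)
  refine Equiv.ext fun x => ?_
  rw [tof_apply]
  by_cases h : tofCond x
  · rw [if_pos h]
    have hx := eq_aVec_of h
    have hupdate : Function.update x 0 (x 0 + 1) = aVec (x 0 + 1) := by
      funext r
      by_cases hr : r = 0
      · subst hr; simp
      · rw [Function.update_of_ne hr, aVec_ne _ hr]; exact h r hr
    rw [hupdate]
    rcases (by decide : ∀ j : ZMod 3, j = 0 ∨ j = 1 ∨ j = 2) (x 0) with h0 | h0 | h0 <;>
      rw [hx, h0, cycle3, perm_mul_apply]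
    · rw [Equiv.swap_apply_left, Equiv.swap_apply_of_ne_of_ne (Ne.symm hne01) hne12]
      norm_num
    · rw [Equiv.swap_apply_right, Equiv.swap_apply_left]
      norm_num
    · rw [Equiv.swap_apply_of_ne_of_ne (Ne.symm hne02) (Ne.symm hne12),
        Equiv.swap_apply_right]
      have h1 : (2 : ZMod 3) + 1 = 0 := by decide
      rw [aVec_zero, h1]
  · rw [if_neg h, cycle3, perm_mul_apply]
    have hx : ∀ k : ZMod 3, x ≠ aVec k := fun k he =>
      h (by rw [he]; intro r hr; exact aVec_ne _ hr)
    rw [Equiv.swap_apply_of_ne_of_ne (hx 0) (hx 1), Equiv.swap_apply_of_ne_of_ne (hx 0) (hx 2)]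

lemma cycle3_aaa_mem : cycle3 (aVec (m := m) 0) (aVec 1) (aVec 2)
    ∈ Subgroup.closure (SNT (m+2)) := tof_one_eq_cycle3 ▸ tof_mem 1

lemma cycle3_conj {α : Type*} [DecidableEq α] (g : Perm α) (x y z : α) :
    g * cycle3 x y z * g⁻¹ = cycle3 (g x) (g y) (g z) := by
  rw [cycle3, cycle3, Equiv.swap_apply_apply, Equiv.swap_apply_apply]
  group

lemma cleanup : ∀ (N : ℕ) (k : V (m+2)),
    (Finset.univ.filter (fun c => k c ≠ aVec (k 0) c)).card ≤ N →
    ∃ g ∈ Subgroup.closure (SNT (m+2)),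
      (∀ z : V (m+2), z 0 ≠ k 0 → g z = z) ∧ g k = aVec (k 0) := by
  intro N
  induction N with
  | zero =>
    intro k hk
    refine ⟨1, one_mem _, fun z _ => rfl, ?_⟩
    have hemp : Finset.univ.filter (fun c => k c ≠ aVec (k 0) c) = ∅ :=
      Finset.card_eq_zero.1 (Nat.le_zero.1 hk)
    have hall : ∀ c, k c = aVec (k 0) c := by
      intro c; by_contra hc
      have hmem : c ∈ Finset.univ.filter (fun c => k c ≠ aVec (k 0) c) :=
        Finset.mem_filter.2 ⟨Finset.mem_univ _, hc⟩
      rw [hemp] at hmem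
      exact absurd hmem (Finset.notMem_empty c)
    simpa using funext hall
  | succ N ih =>
    intro k hk
    by_cases hdone : ∀ c, k c = aVec (k 0) c
    · exact ⟨1, one_mem _, fun z _ => rfl, by simpa using funext hdone⟩
    · push_neg at hdone
      obtain ⟨c, hc⟩ := hdone
      have hc0 : c ≠ 0 := fun h => hc (by rw [h]; simp)
      have hmove : condAdd c k (1 - k c) k = Function.update k c 1 := by
        rw [condAdd_move (fun r _ => rfl)]
        congr 1
        ring
      set k' := Function.update k c 1 with hk'
      have hk'0 : k' 0 = k 0 := Function.update_of_ne (Ne.symm hc0) _ _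
      have hsub : (Finset.univ.filter (fun d => k' d ≠ aVec (k' 0) d)) ⊆
          (Finset.univ.filter (fun d => k d ≠ aVec (k 0) d)).erase c := by
        intro d hd
        rw [Finset.mem_filter] at hd
        have hd2 := hd.2
        rw [hk'0] at hd2
        have hdc : d ≠ c := by
          intro h
          subst h
          exact hd2 (by rw [hk', Function.update_self, aVec_ne _ hc0])
        refine Finset.mem_erase.2 ⟨hdc, Finset.mem_filter.2 ⟨Finset.mem_univ _, ?_⟩⟩
        rwa [hk', Function.update_of_ne hdc] at hd2
      have hcard : (Finset.univ.filter (fun d => k' d ≠ aVec (k' 0) d)).card ≤ N := by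
        have h1 := Finset.card_le_card hsub
        have hcmem : c ∈ Finset.univ.filter (fun d => k d ≠ aVec (k 0) d) :=
          Finset.mem_filter.2 ⟨Finset.mem_univ _, hc⟩
        have h2 := Finset.card_erase_lt_of_mem hcmem
        omega
      obtain ⟨g2, hg2G, hg2fix, hg2k⟩ := ih k' hcard
      refine ⟨g2 * condAdd c k (1 - k c), mul_mem hg2G (condAdd_mem _ _ _), fun z hz => ?_, ?_⟩
      · rw [perm_mul_apply, condAdd_fix 0 (Ne.symm hc0) hz]
        exact hg2fix z (by rw [hk'0]; exact hz)
      · rw [perm_mul_apply, hmove, hg2k, hk'0]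


lemma detour : ∃ g ∈ Subgroup.closure (SNT (m+2)),
    g (aVec 0) = aVec 0 ∧ g (aVec 2) = aVec 1 := by
  have h10 : (1 : Fin (m+2)) ≠ 0 := by
    intro h
    have h2 := congrArg Fin.val h
    simp at h2
  set y1 : V (m+2) := Function.update (aVec 2) 1 2 with hy1
  set y2 : V (m+2) := Function.update y1 0 1 with hy2
  have hy1_0 : y1 0 = 2 := by rw [hy1, Function.update_of_ne (Ne.symm h10), aVec_zero]
  have hy1_1 : y1 1 = 2 := by rw [hy1, Function.update_self]
  have hy2_0 : y2 0 = 1 := by rw [hy2, Function.update_self]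
  have hy2_1 : y2 1 = 2 := by rw [hy2, Function.update_of_ne h10, hy1_1]
  refine ⟨condAdd 1 y2 2 * (condAdd 0 y1 2 * condAdd 1 (aVec 2) 1),
    mul_mem (condAdd_mem _ _ _) (mul_mem (condAdd_mem _ _ _) (condAdd_mem _ _ _)), ?_, ?_⟩
  · have f1 : condAdd 1 (aVec 2) 1 (aVec (m := m) 0) = aVec 0 :=
      condAdd_fix 0 (Ne.symm h10) (by rw [aVec_zero, aVec_zero]; decide)
    have f2 : condAdd 0 y1 2 (aVec (m := m) 0) = aVec 0 :=
      condAdd_fix 1 h10 (by rw [aVec_ne _ h10, hy1_1]; decide)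
    have f3 : condAdd 1 y2 2 (aVec (m := m) 0) = aVec 0 :=
      condAdd_fix 0 (Ne.symm h10) (by rw [aVec_zero, hy2_0]; decide)
    rw [perm_mul_apply, perm_mul_apply, f1, f2, f3]
  · rw [perm_mul_apply, perm_mul_apply]
    rw [condAdd_move (fun r _ => rfl)]
    have e1 : Function.update (aVec (m := m) 2) 1 (aVec (m := m) 2 1 + 1) = y1 := by
      rw [aVec_ne _ h10, hy1]
      norm_num
    rw [e1, condAdd_move (fun r _ => rfl)]
    have e2 : Function.update y1 0 (y1 0 + 2) = y2 := by
      rw [hy1_0, hy2]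
      have h22 : (2 : ZMod 3) + 2 = 1 := by decide
      rw [h22]
    rw [e2, condAdd_move (fun r _ => rfl)]
    have h22 : y2 1 + 2 = 1 := by rw [hy2_1]; decide
    rw [h22]
    funext r
    by_cases hr1 : r = 1
    · subst hr1
      rw [Function.update_self, aVec_ne _ h10]
    · rw [Function.update_of_ne hr1]
      by_cases hr0 : r = 0
      · subst hr0
        rw [hy2_0, aVec_zero]
      · rw [hy2, Function.update_of_ne hr0, hy1, Function.update_of_ne hr1,
          aVec_ne _ hr0, aVec_ne _ hr0]

lemma stabA2 (y : V (m+2)) (hy0 : y 0 ≠ 0) :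
    ∃ g ∈ Subgroup.closure (SNT (m+2)), g (aVec 0) = aVec 0 ∧ g y = aVec 1 := by
  obtain ⟨g1, hg1G, hg1fix, hg1y⟩ := cleanup _ y le_rfl
  have hfix0 : g1 (aVec 0) = aVec 0 := hg1fix _ (by rw [aVec_zero]; exact Ne.symm hy0)
  rcases (by decide : ∀ j : ZMod 3, j = 0 ∨ j = 1 ∨ j = 2) (y 0) with h0 | h0 | h0
  · exact absurd h0 hy0
  · exact ⟨g1, hg1G, hfix0, by rw [hg1y, h0]⟩
  · obtain ⟨gd, hgdG, hgd0, hgd2⟩ := detour (m := m)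
    refine ⟨gd * g1, mul_mem hgdG hg1G, ?_, ?_⟩
    · rw [perm_mul_apply, hfix0, hgd0]
    · rw [perm_mul_apply, hg1y, h0, hgd2]

lemma stabA (y : V (m+2)) (hy : y ≠ aVec 0) :
    ∃ g ∈ Subgroup.closure (SNT (m+2)), g (aVec 0) = aVec 0 ∧ g y = aVec 1 := by
  by_cases hy0 : y 0 = 0
  · have hex : ∃ r, r ≠ 0 ∧ y r ≠ 1 := by
      by_contra hne
      push_neg at hne
      refine hy ?_
      conv_lhs => rw [eq_aVec_of (fun r hr => hne r hr)]
      rw [hy0]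
    obtain ⟨r0, hr00, hr01⟩ := hex
    have hfix : condAdd 0 y 1 (aVec (m := m) 0) = aVec 0 :=
      condAdd_fix r0 hr00 (by rw [aVec_ne _ hr00]; exact fun h => hr01 h.symm)
    set y' := Function.update y 0 1 with hy'
    have hmv : condAdd 0 y 1 y = y' := by
      rw [condAdd_move (fun r _ => rfl), hy0, hy']
      norm_num
    have hy'0 : y' 0 = 1 := Function.update_self _ _ _
    obtain ⟨g1, hg1G, hg10, hg1y⟩ := stabA2 y' (by rw [hy'0]; decide)
    refine ⟨g1 * condAdd 0 y 1, mul_mem hg1G (condAdd_mem _ _ _), ?_, ?_⟩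
    · rw [perm_mul_apply, hfix, hg10]
    · rw [perm_mul_apply, hmv, hg1y]
  · exact stabA2 y hy0

lemma stabB (w : V (m+2)) (h0 : w ≠ aVec 0) (h1 : w ≠ aVec 1) :
    ∃ g ∈ Subgroup.closure (SNT (m+2)),
      g (aVec 0) = aVec 0 ∧ g (aVec 1) = aVec 1 ∧ g w = aVec 2 := by
  by_cases hall : ∀ r, r ≠ 0 → w r = 1
  · have hw := eq_aVec_of hall
    rcases (by decide : ∀ j : ZMod 3, j = 0 ∨ j = 1 ∨ j = 2) (w 0) with hq | hq | hq
    · exact absurd (by rw [hw, hq]) h0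
    · exact absurd (by rw [hw, hq]) h1
    · exact ⟨1, one_mem _, rfl, rfl, by rw [Equiv.Perm.one_apply, hw, hq]⟩
  · push_neg at hall
    obtain ⟨r0, hr00, hr01⟩ := hall
    have hfix0 : ∀ (k : ZMod 3), condAdd 0 w k (aVec (m := m) 0) = aVec 0 := fun k =>
      condAdd_fix r0 hr00 (by rw [aVec_ne _ hr00]; exact fun h => hr01 h.symm)
    have hfix1 : ∀ (k : ZMod 3), condAdd 0 w k (aVec (m := m) 1) = aVec 1 := fun k =>
      condAdd_fix r0 hr00 (by rw [aVec_ne _ hr00]; exact fun h => hr01 h.symm)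
    by_cases hw0 : w 0 = 2
    · obtain ⟨g1, hg1G, hg1fix, hg1w⟩ := cleanup _ w le_rfl
      exact ⟨g1, hg1G, hg1fix _ (by rw [aVec_zero, hw0]; decide),
        hg1fix _ (by rw [aVec_zero, hw0]; decide), by rw [hg1w, hw0]⟩
    · set w' := Function.update w 0 2 with hw'
      have hmv : condAdd 0 w (2 - w 0) w = w' := by
        rw [condAdd_move (fun r _ => rfl), hw']
        congr 1
        ring
      have hw'0 : w' 0 = 2 := Function.update_self _ _ _
      obtain ⟨g1, hg1G, hg1fix, hg1w⟩ := cleanup _ w' le_rfl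
      refine ⟨g1 * condAdd 0 w (2 - w 0), mul_mem hg1G (condAdd_mem _ _ _), ?_, ?_, ?_⟩
      · rw [perm_mul_apply, hfix0, hg1fix _ (by rw [aVec_zero, hw'0]; decide)]
      · rw [perm_mul_apply, hfix1, hg1fix _ (by rw [aVec_zero, hw'0]; decide)]
      · rw [perm_mul_apply, hmv, hg1w, hw'0]

lemma twoTrans (x y : V (m+2)) (hxy : x ≠ y) :
    ∃ h ∈ Subgroup.closure (SNT (m+2)), h x = aVec 0 ∧ h y = aVec 1 := by
  set u := aVec (m := m) 0 - x with hu
  have htx : trPerm u x = aVec 0 := by rw [trPerm_apply, hu, sub_add_cancel]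
  have hty : trPerm u y ≠ aVec 0 := by
    rw [trPerm_apply, hu]
    intro h
    exact hxy (by linear_combination -h)
  obtain ⟨g, hgG, hg0, hgy⟩ := stabA (trPerm u y) hty
  refine ⟨g * trPerm u, mul_mem hgG (trPerm_mem _), ?_, ?_⟩
  · rw [perm_mul_apply, htx, hg0]
  · rw [perm_mul_apply]
    exact hgy

lemma cycle3_mem (x y z : V (m+2)) (hxy : x ≠ y) (hxz : x ≠ z) (hyz : y ≠ z) :
    cycle3 x y z ∈ Subgroup.closure (SNT (m+2)) := by
  obtain ⟨h, hhG, hhx, hhy⟩ := twoTrans x y hxy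
  set w := h z with hw
  have hw0 : w ≠ aVec 0 := by
    rw [hw, ← hhx]
    exact fun he => hxz (h.injective he).symm
  have hw1 : w ≠ aVec 1 := by
    rw [hw, ← hhy]
    exact fun he => hyz (h.injective he).symm
  obtain ⟨g, hgG, hg0, hg1, hgw⟩ := stabB w hw0 hw1
  have hinv0 : g⁻¹ (aVec (m := m) 0) = aVec 0 := (Equiv.Perm.eq_inv_iff_eq.2 hg0).symm
  have hinv1 : g⁻¹ (aVec (m := m) 1) = aVec 1 := (Equiv.Perm.eq_inv_iff_eq.2 hg1).symm
  have hinvw : g⁻¹ (aVec (m := m) 2) = w := (Equiv.Perm.eq_inv_iff_eq.2 hgw).symm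
  have e1 := cycle3_conj g⁻¹ (aVec (m := m) 0) (aVec 1) (aVec 2)
  rw [inv_inv, hinv0, hinv1, hinvw] at e1
  have hmem1 : cycle3 (aVec (m := m) 0) (aVec 1) w ∈ Subgroup.closure (SNT (m+2)) := by
    rw [← e1]
    exact mul_mem (mul_mem (inv_mem hgG) cycle3_aaa_mem) hgG
  have hx' : h⁻¹ (aVec (m := m) 0) = x := (Equiv.Perm.eq_inv_iff_eq.2 hhx).symm
  have hy' : h⁻¹ (aVec (m := m) 1) = y := (Equiv.Perm.eq_inv_iff_eq.2 hhy).symm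
  have hz' : h⁻¹ w = z := by rw [hw]; exact Equiv.symm_apply_apply h z
  have e2 := cycle3_conj h⁻¹ (aVec (m := m) 0) (aVec 1) w
  rw [inv_inv, hx', hy', hz'] at e2
  rw [← e2]
  exact mul_mem (mul_mem (inv_mem hhG) hmem1) hhG


lemma isThreeCycle_mem (σ : Perm (V (m+2))) (hσ : σ.IsThreeCycle) :
    σ ∈ Subgroup.closure (SNT (m+2)) := by
  have hcard := hσ.card_support
  obtain ⟨x, hx⟩ : σ.support.Nonempty := Finset.card_pos.1 (by rw [hcard]; norm_num)
  rw [Equiv.Perm.mem_support] at hx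
  set y := σ x with hy
  set z := σ y with hz
  have hord : σ ^ 3 = 1 := by rw [← hσ.orderOf]; exact pow_orderOf_eq_one σ
  have h3 : σ (σ (σ x)) = x := by
    have h := congrArg (fun (g : Perm (V (m+2))) => g x) hord
    simpa [pow_succ, Equiv.Perm.mul_apply] using h
  have hσz : σ z = x := by rw [hz, hy]; exact h3
  have hxy : x ≠ y := by
    intro h
    rw [hy] at h
    exact hx h.symm
  have hyz : y ≠ z := by
    intro h
    rw [hz] at h
    have h2 := σ.injective h.symm
    rw [hy] at h2
    exact hx h2
  have hxz : x ≠ z := by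
    intro h
    exact hx ((congrArg σ h).trans hσz)
  have hsub : ({x, y, z} : Finset (V (m+2))) ⊆ σ.support := by
    intro w hw
    rw [Finset.mem_insert, Finset.mem_insert, Finset.mem_singleton] at hw
    rcases hw with rfl | rfl | rfl
    · exact Equiv.Perm.mem_support.2 hx
    · refine Equiv.Perm.mem_support.2 fun h => hyz ?_
      rw [hz]; exact h.symm
    · refine Equiv.Perm.mem_support.2 fun h => hxz ?_
      rw [← hσz]; exact h
  have hcard3 : ({x, y, z} : Finset (V (m+2))).card = 3 := by
    rw [Finset.card_insert_of_notMem (by simp [hxy, hxz]),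
      Finset.card_insert_of_notMem (by simp [hyz]), Finset.card_singleton]
  have hsupp : ({x, y, z} : Finset (V (m+2))) = σ.support :=
    Finset.eq_of_subset_of_card_le hsub (le_of_eq (hcard.trans hcard3.symm))
  have hfix : ∀ w, w ∉ ({x, y, z} : Finset (V (m+2))) → σ w = w := fun w hw =>
    Equiv.Perm.notMem_support.1 (fun hmem => hw (by rw [hsupp]; exact hmem))
  have hcyc : σ = cycle3 x y z := by
    refine Equiv.ext fun w => ?_
    rw [cycle3, Equiv.Perm.mul_apply]
    by_cases hwx : w = x
    · subst hwx
      rw [Equiv.swap_apply_left, Equiv.swap_apply_of_ne_of_ne (Ne.symm hxy) hyz, ← hy]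
    · by_cases hwy : w = y
      · subst hwy
        rw [Equiv.swap_apply_right, Equiv.swap_apply_left, ← hz]
      · by_cases hwz : w = z
        · subst hwz
          rw [Equiv.swap_apply_of_ne_of_ne (Ne.symm hxz) (Ne.symm hyz),
            Equiv.swap_apply_right, hσz]
        · rw [Equiv.swap_apply_of_ne_of_ne hwx hwy, Equiv.swap_apply_of_ne_of_ne hwx hwz,
            hfix w (by simp [hwx, hwy, hwz])]
  rw [hcyc]
  exact cycle3_mem x y z hxy hxz hyz

lemma alt_le : alternatingGroup (V (m+2)) ≤ Subgroup.closure (SNT (m+2)) := by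
  rw [← Equiv.Perm.closure_three_cycles_eq_alternating]
  exact (Subgroup.closure_le _).2 fun σ hσ => isThreeCycle_mem σ hσ

def flipP : Perm (ZMod 3 × ZMod 3) := Equiv.prodComm (ZMod 3) (ZMod 3)

lemma sign_flipP : Equiv.Perm.sign flipP = -1 := by decide

def destruct (i j : Fin n) (hij : i ≠ j) :
    V n ≃ ({r : Fin n // r ≠ i ∧ r ≠ j} → ZMod 3) × (ZMod 3 × ZMod 3) where
  toFun x := (fun r => x r.1, (x i, x j))
  invFun p := fun r => if h1 : r = i then p.2.1 else if h2 : r = j then p.2.2 else p.1 ⟨r, h1, h2⟩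
  left_inv x := by
    funext r
    by_cases h1 : r = i
    · subst h1; simp
    · by_cases h2 : r = j
      · subst h2; simp [h1]
      · simp [h1, h2]
  right_inv p := by
    obtain ⟨f, a, b⟩ := p
    refine Prod.ext ?_ (Prod.ext ?_ ?_)
    · funext r
      show (if h1 : (r : Fin n) = i then a else if h2 : (r : Fin n) = j then b else f ⟨r, h1, h2⟩) = f r
      rw [dif_neg r.2.1, dif_neg r.2.2]
    · show (if h1 : i = i then a else if h2 : i = j then b else f ⟨i, h1, h2⟩) = a
      rw [dif_pos rfl]
    · show (if h1 : j = i then a else if h2 : j = j then b else f ⟨j, h1, h2⟩) = b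
      rw [dif_neg (fun h => hij h.symm), dif_pos rfl]

lemma swapPerm_eq_permCongr (i j : Fin n) (hij : i ≠ j) :
    swapPerm i j = ((destruct i j hij).symm.permCongr
      (Equiv.prodCongrRight (fun _ => flipP))) := by
  refine Equiv.ext fun x => funext fun r => ?_
  change x (Equiv.swap i j r)
      = if h1 : r = i then x j else if h2 : r = j then x i else x r
  rw [Equiv.swap_apply_def]
  split_ifs <;> rfl

lemma sign_swapPerm (i j : Fin n) (hij : i ≠ j) :
    Equiv.Perm.sign (swapPerm i j) = -1 := by
  rw [swapPerm_eq_permCongr i j hij, Equiv.Perm.sign_permCongr,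
    Equiv.Perm.sign_prodCongrRight, Finset.prod_const, sign_flipP]
  refine Odd.neg_one_pow ?_
  rw [Finset.card_univ, Fintype.card_fun]
  exact Odd.pow (by decide)

end SNTProof

theorem SNT_contains_odd_and_is_full (n : ℕ) (hn : 2 ≤ n) :
    (∀ i j : Fin n, i ≠ j → ∀ E : Equiv.Perm (V n),
      (∀ x, E x = swapFun i j x) → E ∈ SNT n ∧ Equiv.Perm.sign E = -1) ∧
    Subgroup.closure (SNT n) = ⊤ := by
  obtain ⟨m, rfl⟩ : ∃ m, n = m + 2 := ⟨n - 2, by omega⟩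
  constructor
  · intro i j hij E hE
    refine ⟨Or.inl ⟨i, j, hij, hE⟩, ?_⟩
    have hEeq : E = SNTProof.swapPerm i j :=
      Equiv.ext fun x => (hE x).trans (SNTProof.swapPerm_eq_swapFun i j x).symm
    rw [hEeq]
    exact SNTProof.sign_swapPerm i j hij
  · have halt := SNTProof.alt_le (m := m)
    rw [eq_top_iff]
    intro σ _
    by_cases hσ : Equiv.Perm.sign σ = 1
    · exact halt (Equiv.Perm.mem_alternatingGroup.2 hσ)
    · have hσ' : Equiv.Perm.sign σ = -1 := by
        rcases Int.units_eq_one_or (Equiv.Perm.sign σ) with h | h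
        · exact absurd h hσ
        · exact h
      have h01 : (0 : Fin (m+2)) ≠ 1 := by
        intro h
        have h2 := congrArg Fin.val h
        simp at h2
      have hE : SNTProof.swapPerm (0 : Fin (m+2)) 1 ∈ Subgroup.closure (SNT (m+2)) :=
        Subgroup.subset_closure (Or.inl ⟨0, 1, h01, fun x => SNTProof.swapPerm_eq_swapFun 0 1 x⟩)
      have hsE := SNTProof.sign_swapPerm (0 : Fin (m+2)) 1 h01
      have hmem : σ * SNTProof.swapPerm 0 1 ∈ alternatingGroup (V (m+2)) := by
        rw [Equiv.Perm.mem_alternatingGroup, Equiv.Perm.sign_mul, hσ', hsE]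
        decide
      have hdec : σ = (σ * SNTProof.swapPerm 0 1) * (SNTProof.swapPerm 0 1)⁻¹ := by group
      rw [hdec]
      exact mul_mem (halt hmem) (inv_mem hE)
end
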